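/- arXiv:2202.01250 — 5 statements merged into one kernel-verified Lean document; each statement's English description precedes it below -/
import Mathlib

section
/- Let {X_t}_{t∈ℕ⁺} be adapted to {F_t} with E[X_t | F_{t−1}] = μ and E[(X_t − μ)² | F_{t−1}] ≤ σ² almost surely for all t ∈ ℕ⁺, let {λ_t}_{t∈ℕ⁺} be any predictable process, let φ be a Catoni-type influence function, and let α ∈ (0,1). Define CI_t^C = { m ∈ ℝ : −σ²(Σ_{i=1}^t λ_i²)/2 − log(2/α) ≤ Σ_{i=1}^t φ(λ_i(X_i − m)) ≤ σ²(Σ_{i=1}^t λ_i²)/2 + log(2/α) }. Then P(∀ t ∈ ℕ⁺, μ ∈ CI_t^C) ≥ 1 − α, i.e. {CI_t^C} is a (1−α)-confidence sequence for μ. -/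
open MeasureTheory ProbabilityTheory Filter
open scoped ENNReal NNReal

lemma aux_exp_bound {v x a : ℝ} (hv : 0 < v) (ha : 0 ≤ a)
    (h1 : x ^ 2 ≤ 1 → a ≤ 1) (h2 : 1 ≤ x ^ 2 → a ≤ x ^ 2) :
    a * Real.exp (-(v * x ^ 2 / 2)) ≤ 1 + 2 / v := by
  have hvd : 0 ≤ 2 / v := by positivity
  rcases le_total (x ^ 2) 1 with h | h
  · have he : Real.exp (-(v * x ^ 2 / 2)) ≤ 1 := by
      rw [Real.exp_le_one_iff]
      nlinarith [sq_nonneg x]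
    nlinarith [Real.exp_pos (-(v * x ^ 2 / 2)), h1 h]
  · have hx : (0:ℝ) < x ^ 2 := lt_of_lt_of_le one_pos h
    have hy : (0:ℝ) < v * x ^ 2 / 2 := by positivity
    have he : Real.exp (-(v * x ^ 2 / 2)) ≤ (v * x ^ 2 / 2)⁻¹ := by
      rw [Real.exp_neg]
      refine inv_anti₀ hy ?_
      nlinarith [Real.add_one_le_exp (v * x ^ 2 / 2)]
    have : a * Real.exp (-(v * x ^ 2 / 2)) ≤ x ^ 2 * (v * x ^ 2 / 2)⁻¹ := by
      have := h2 h
      have hep : 0 < Real.exp (-(v * x ^ 2 / 2)) := Real.exp_pos _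
      exact mul_le_mul this he hep.le hx.le
    have : x ^ 2 * (v * x ^ 2 / 2)⁻¹ = 2 / v := by
      have hx0 : x ≠ 0 := by rintro rfl; norm_num at hx
      field_simp
    linarith [mul_le_mul (h2 h) he (Real.exp_pos _).le hx.le]


lemma integrable_mul_of_condexp_le_one {Ω : Type*} {m0 : MeasurableSpace Ω} {P : Measure Ω}
    [IsProbabilityMeasure P] {m : MeasurableSpace Ω} (hm : m ≤ m0)
    {f g : Ω → ℝ} (hf_meas : StronglyMeasurable[m] f) (hf : Integrable f P)
    (hf0 : ∀ ω, 0 ≤ f ω) (hg : Integrable g P) (hg0 : ∀ ω, 0 ≤ g ω)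
    (hcond : P[g|m] ≤ᵐ[P] fun _ => (1:ℝ)) :
    Integrable (fun ω => f ω * g ω) P := by
  set fn : ℕ → Ω → ℝ := fun n ω => min (f ω) n with hfn_def
  have hfn_meas : ∀ n, StronglyMeasurable[m] (fn n) :=
    fun n => hf_meas.inf stronglyMeasurable_const
  have hfn0 : ∀ n ω, 0 ≤ fn n ω := fun n ω => le_min (hf0 ω) (Nat.cast_nonneg n)
  have hfnle : ∀ n ω, fn n ω ≤ f ω := fun n ω => min_le_left _ _
  have hfng_int : ∀ n, Integrable (fun ω => fn n ω * g ω) P := by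
    intro n
    refine (hg.const_mul (n : ℝ)).mono
      (((hfn_meas n).mono hm).aestronglyMeasurable.mul hg.1) (ae_of_all _ fun ω => ?_)
    calc ‖fn n ω * g ω‖ = fn n ω * g ω :=
          Real.norm_of_nonneg (mul_nonneg (hfn0 n ω) (hg0 ω))
      _ ≤ (n : ℝ) * g ω := mul_le_mul_of_nonneg_right (min_le_right _ _) (hg0 ω)
      _ ≤ ‖(n : ℝ) * g ω‖ := le_abs_self _
  have hint_le : ∀ n, ∫ ω, fn n ω * g ω ∂P ≤ ∫ ω, f ω ∂P := by
    intro n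
    have h1 : P[fun ω => fn n ω * g ω|m] =ᵐ[P] fun ω => fn n ω * (P[g|m]) ω :=
      condExp_mul_of_stronglyMeasurable_left (hfn_meas n) (hfng_int n) hg
    rw [← integral_condExp hm (f := fun ω => fn n ω * g ω)]
    refine integral_mono_ae integrable_condExp hf ?_
    filter_upwards [h1, hcond] with ω h1ω h2ω
    rw [h1ω]
    calc fn n ω * (P[g|m]) ω ≤ fn n ω * 1 :=
          mul_le_mul_of_nonneg_left h2ω (hfn0 n ω)
      _ = fn n ω := mul_one _
      _ ≤ f ω := hfnle n ω
  have key : ∫⁻ ω, ENNReal.ofReal (f ω * g ω) ∂P ≤ ENNReal.ofReal (∫ ω, f ω ∂P) := by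
    have hsup : ∀ ω, (⨆ n, ENNReal.ofReal (fn n ω * g ω)) = ENNReal.ofReal (f ω * g ω) := by
      intro ω
      refine le_antisymm (iSup_le fun n => ENNReal.ofReal_le_ofReal
        (mul_le_mul_of_nonneg_right (hfnle n ω) (hg0 ω))) ?_
      obtain ⟨n, hn⟩ := exists_nat_ge (f ω)
      refine le_iSup_of_le n (le_of_eq ?_)
      rw [hfn_def]
      simp only [min_eq_left hn]
    have hmono : ∀ᵐ ω ∂P, Monotone fun n : ℕ => ENNReal.ofReal (fn n ω * g ω) := by
      refine ae_of_all _ fun ω a b hab => ENNReal.ofReal_le_ofReal ?_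
      exact mul_le_mul_of_nonneg_right
        (min_le_min le_rfl (Nat.cast_le.2 hab)) (hg0 ω)
    have hmeas : ∀ n, AEMeasurable (fun ω => ENNReal.ofReal (fn n ω * g ω)) P :=
      fun n => ENNReal.measurable_ofReal.comp_aemeasurable (hfng_int n).aemeasurable
    calc ∫⁻ ω, ENNReal.ofReal (f ω * g ω) ∂P
        = ∫⁻ ω, ⨆ n, ENNReal.ofReal (fn n ω * g ω) ∂P := by simp_rw [hsup]
      _ = ⨆ n, ∫⁻ ω, ENNReal.ofReal (fn n ω * g ω) ∂P := lintegral_iSup' hmeas hmono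
      _ ≤ ENNReal.ofReal (∫ ω, f ω ∂P) := by
          refine iSup_le fun n => ?_
          rw [← ofReal_integral_eq_lintegral_ofReal (hfng_int n)
            (ae_of_all _ fun ω => mul_nonneg (hfn0 n ω) (hg0 ω))]
          exact ENNReal.ofReal_le_ofReal (hint_le n)
  refine ⟨(hf_meas.mono hm).aestronglyMeasurable.mul hg.1, ?_⟩
  rw [hasFiniteIntegral_iff_ofReal (ae_of_all _ fun ω => mul_nonneg (hf0 ω) (hg0 ω))]
  exact lt_of_le_of_lt key ENNReal.ofReal_lt_top


lemma ville_inequality {Ω : Type*} {m0 : MeasurableSpace Ω} {P : Measure Ω}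
    [IsProbabilityMeasure P] {𝒢 : Filtration ℕ m0} {M : ℕ → Ω → ℝ}
    (hM : Supermartingale M 𝒢 P) (h0 : ∀ t ω, 0 ≤ M t ω) {ε : ℝ} (hε : 0 < ε) :
    P {ω | ∃ t, ε ≤ M t ω} ≤ ENNReal.ofReal ((∫ ω, M 0 ω ∂P) / ε) := by
  have hn : ∀ n : ℕ, P {ω | ∃ t ≤ n, ε ≤ M t ω}
      ≤ ENNReal.ofReal ((∫ ω, M 0 ω ∂P) / ε) := by
    intro n
    set τ := fun ω => ((hittingBtwn M (Set.Ici ε) 0 n ω : ℕ) : WithTop ℕ) with hτdef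
    have hτ : IsStoppingTime 𝒢 τ := hittingBtwn_isStoppingTime hM.stronglyAdapted.adapted measurableSet_Ici
    have hτle : ∀ ω, τ ω ≤ n := fun ω => WithTop.coe_le_coe.2 (hittingBtwn_le ω)
    have hSV_negint : Integrable (stoppedValue (-M) τ) P :=
      hM.neg.integrable_stoppedValue hτ hτle
    have hSV_eq : stoppedValue (-M) τ = -stoppedValue M τ := rfl
    have hSV_int : Integrable (stoppedValue M τ) P := by
      rw [hSV_eq] at hSV_negint; exact (neg_neg (stoppedValue M τ)) ▸ hSV_negint.neg
    have hOST : ∫ ω, stoppedValue M τ ω ∂P ≤ ∫ ω, M 0 ω ∂P := by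
      have h : ∫ x, stoppedValue (-M) (fun _ => ((0:ℕ) : WithTop ℕ)) x ∂P ≤
          ∫ x, stoppedValue (-M) τ x ∂P := hM.neg.expected_stoppedValue_mono (isStoppingTime_const 𝒢 0) hτ
        (fun ω => WithTop.coe_le_coe.2 (Nat.zero_le _)) hτle
      have h0' : stoppedValue (-M) (fun _ => ((0:ℕ) : WithTop ℕ)) = -M 0 := stoppedValue_const _ 0
      rw [hSV_eq, h0'] at h
      simp only [Pi.neg_apply] at h
      rw [integral_neg, integral_neg] at h
      linarith
    have hSV_nonneg : 0 ≤ᵐ[P] stoppedValue M τ :=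
      ae_of_all _ fun ω => h0 _ ω
    have hmarkov := mul_meas_ge_le_integral_of_nonneg hSV_nonneg hSV_int ε
    have hsubset : {ω | ∃ t ≤ n, ε ≤ M t ω} ⊆ {ω | ε ≤ stoppedValue M τ ω} := by
      rintro ω ⟨t, ht, hεt⟩
      exact stoppedValue_hittingBtwn_mem ⟨t, ⟨Nat.zero_le _, ht⟩, hεt⟩
    calc P {ω | ∃ t ≤ n, ε ≤ M t ω} ≤ P {ω | ε ≤ stoppedValue M τ ω} :=
          measure_mono hsubset
      _ ≤ ENNReal.ofReal ((∫ ω, stoppedValue M τ ω ∂P) / ε) := by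
          rw [← ENNReal.ofReal_toReal (measure_ne_top P _)]
          refine ENNReal.ofReal_le_ofReal ?_
          rw [le_div_iff₀ hε, mul_comm]
          exact hmarkov
      _ ≤ ENNReal.ofReal ((∫ ω, M 0 ω ∂P) / ε) :=
          ENNReal.ofReal_le_ofReal (by gcongr)
  have hU : {ω | ∃ t, ε ≤ M t ω} = ⋃ n, {ω | ∃ t ≤ n, ε ≤ M t ω} := by
    ext ω
    simp only [Set.mem_setOf_eq, Set.mem_iUnion]
    exact ⟨fun ⟨t, ht⟩ => ⟨t, t, le_rfl, ht⟩, fun ⟨n, t, _, ht⟩ => ⟨t, ht⟩⟩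
  have hmeas : ∀ t : ℕ, MeasurableSet {ω | ε ≤ M t ω} := fun t =>
    measurableSet_le measurable_const
      ((hM.stronglyMeasurable t).measurable.mono (𝒢.le t) le_rfl)
  have hmeasn : ∀ n : ℕ, MeasurableSet {ω | ∃ t ≤ n, ε ≤ M t ω} := by
    intro n
    have : {ω | ∃ t ≤ n, ε ≤ M t ω} = ⋃ t, ⋃ _ : t ≤ n, {ω | ε ≤ M t ω} := by
      ext ω; simp
    rw [this]
    exact MeasurableSet.iUnion fun t => MeasurableSet.iUnion fun _ => hmeas t
  have hdir : Directed (· ⊆ ·) fun n : ℕ => {ω | ∃ t ≤ n, ε ≤ M t ω} := by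
    refine (Monotone.directed_le ?_)
    intro a b hab ω ⟨t, ht, hω⟩
    exact ⟨t, ht.trans hab, hω⟩
  rw [hU, hdir.measure_iUnion (μ := P)]
  exact iSup_le hn


set_option maxHeartbeats 1000000 in
lemma catoni_supermartingale {Ω : Type*} {mΩ : MeasurableSpace Ω} {P : Measure Ω}
    [IsProbabilityMeasure P]
    (ℱ : Filtration ℕ mΩ) (X l : ℕ → Ω → ℝ) (μ v s : ℝ) (φ : ℝ → ℝ)
    (hv : 0 < v) (hφm : Measurable φ)
    (hs : ∀ x : ℝ, Real.exp (s * φ x) ≤ 1 + s * x + x ^ 2 / 2) (hs1 : |s| ≤ 1)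
    (hX_adapted : Adapted ℱ X)
    (hX_sq : ∀ t, 1 ≤ t → MemLp (X t) 2 P)
    (hmean : ∀ t, 1 ≤ t → P[X t | ℱ (t - 1)] =ᵐ[P] fun _ => μ)
    (hvar : ∀ t, 1 ≤ t →
      ∀ᵐ ω ∂P, (P[fun ω' => (X t ω' - μ) ^ 2 | ℱ (t - 1)]) ω ≤ v)
    (hl_pred : ∀ t, 1 ≤ t → StronglyMeasurable[ℱ (t - 1)] (l t)) :
    Supermartingale (fun t ω => Real.exp (s * (∑ i ∈ Finset.Icc 1 t, φ (l i ω * (X i ω - μ)))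
      - v * (∑ i ∈ Finset.Icc 1 t, (l i ω) ^ 2) / 2)) ℱ P := by
  set M : ℕ → Ω → ℝ := fun t ω => Real.exp (s * (∑ i ∈ Finset.Icc 1 t, φ (l i ω * (X i ω - μ)))
      - v * (∑ i ∈ Finset.Icc 1 t, (l i ω) ^ 2) / 2) with hM_def
  -- measurability of the building blocks
  have hl_meas : ∀ i t : ℕ, 1 ≤ i → i ≤ t → Measurable[ℱ t] (l i) := fun i t h1 h2 =>
    ((hl_pred i h1).measurable).mono (ℱ.mono ((Nat.sub_le i 1).trans h2)) le_rfl
  have hX_meas : ∀ i t : ℕ, i ≤ t → Measurable[ℱ t] (X i) := fun i t h2 =>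
    (hX_adapted i).mono (ℱ.mono h2) le_rfl
  have hM_adapted : StronglyAdapted ℱ M := by
    intro t
    refine Measurable.stronglyMeasurable ?_
    refine (Real.measurable_exp.comp ?_ : Measurable[ℱ t] _)
    apply Measurable.sub
    · apply Measurable.const_mul
      apply Finset.measurable_sum
      intro i hi
      simp only [Finset.mem_Icc] at hi
      exact hφm.comp ((hl_meas i t hi.1 hi.2).mul
        ((hX_meas i t hi.2).sub measurable_const))
    · apply Measurable.div_const
      apply Measurable.const_mul
      apply Finset.measurable_sum
      intro i hi
      simp only [Finset.mem_Icc] at hi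
      exact (hl_meas i t hi.1 hi.2).pow measurable_const
  have hM_pos : ∀ t ω, 0 < M t ω := fun t ω => Real.exp_pos _
  -- the one-step analysis
  have key : ∀ t : ℕ, Integrable (M t) P →
      Integrable (M (t + 1)) P ∧ P[M (t + 1)|ℱ t] ≤ᵐ[P] M t := by
    intro t hMt
    have hm : ℱ t ≤ mΩ := ℱ.le t
    have h1t : 1 ≤ t + 1 := Nat.le_add_left 1 t
    set L : Ω → ℝ := l (t + 1) with hL_def
    set D : Ω → ℝ := fun ω => X (t + 1) ω - μ with hD_def
    have hL_sm : StronglyMeasurable[ℱ t] L := by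
      have := hl_pred (t + 1) h1t
      simpa using this
    have hL_m : Measurable[ℱ t] L := hL_sm.measurable
    have hX_int : Integrable (X (t + 1)) P := (hX_sq (t + 1) h1t).integrable one_le_two
    have hD_int : Integrable D P := hX_int.sub (integrable_const μ)
    have hD2_int : Integrable (fun ω => D ω ^ 2) P :=
      ((hX_sq (t + 1) h1t).sub (memLp_const μ)).integrable_sq
    have hmean' : P[X (t + 1)|ℱ t] =ᵐ[P] fun _ => μ := by
      have := hmean (t + 1) h1t; simpa using this
    have hvar' : ∀ᵐ ω ∂P, (P[fun ω' => D ω' ^ 2|ℱ t]) ω ≤ v := by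
      have := hvar (t + 1) h1t; simpa using this
    have hDcond : P[D|ℱ t] =ᵐ[P] fun _ => (0:ℝ) := by
      have h1 : P[D|ℱ t] =ᵐ[P] P[X (t + 1)|ℱ t] - P[(fun _ => μ : Ω → ℝ)|ℱ t] :=
        condExp_sub hX_int (integrable_const μ) _
      have h2 : P[(fun _ => μ : Ω → ℝ)|ℱ t] = fun _ => μ := condExp_const hm μ
      filter_upwards [h1, hmean'] with ω hω h2ω
      simp only [hω, Pi.sub_apply, h2, h2ω, sub_self]
    set b₀ : Ω → ℝ := fun ω => Real.exp (-(v * L ω ^ 2 / 2)) with hb₀_def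
    set g₂ : Ω → ℝ := fun ω => b₀ ω * (s * L ω) with hg₂_def
    set g₃ : Ω → ℝ := fun ω => b₀ ω * (L ω ^ 2 / 2) with hg₃_def
    set Y : Ω → ℝ := fun ω => Real.exp (s * φ (L ω * D ω) - v * L ω ^ 2 / 2) with hY_def
    set Z : Ω → ℝ := fun ω => b₀ ω + g₂ ω * D ω + g₃ ω * D ω ^ 2 with hZ_def
    have hb₀_m : Measurable[ℱ t] b₀ :=
      Real.measurable_exp.comp ((((hL_m.pow measurable_const)).const_mul v).div_const 2).neg
    have hb₀_sm : StronglyMeasurable[ℱ t] b₀ := hb₀_m.stronglyMeasurable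
    have hb₀_pos : ∀ ω, 0 < b₀ ω := fun ω => Real.exp_pos _
    have hb₀_le : ∀ ω, b₀ ω ≤ 1 := fun ω => by
      rw [hb₀_def, Real.exp_le_one_iff]
      have : 0 ≤ v * L ω ^ 2 / 2 := by positivity
      linarith
    have habs : ∀ ω, |L ω| * Real.exp (-(v * L ω ^ 2 / 2)) ≤ 1 + 2 / v := by
      intro ω
      refine aux_exp_bound hv (abs_nonneg _) (fun h => ?_) (fun h => ?_)
      · nlinarith [sq_abs (L ω), abs_nonneg (L ω)]
      · nlinarith [sq_abs (L ω), abs_nonneg (L ω)]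
    have hsq : ∀ ω, L ω ^ 2 * Real.exp (-(v * L ω ^ 2 / 2)) ≤ 1 + 2 / v := by
      intro ω
      exact aux_exp_bound hv (sq_nonneg _) (fun h => h) (fun h => le_rfl)
    have hg₂_bd : ∀ ω, |g₂ ω| ≤ 1 + 2 / v := by
      intro ω
      have : |g₂ ω| = |s| * (|L ω| * b₀ ω) := by
        rw [hg₂_def]
        simp only [abs_mul, abs_of_pos (hb₀_pos ω)]
        ring
      rw [this]
      calc |s| * (|L ω| * b₀ ω) ≤ 1 * (1 + 2 / v) := by
            refine mul_le_mul hs1 (habs ω) ?_ zero_le_one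
            exact mul_nonneg (abs_nonneg _) (hb₀_pos ω).le
        _ = 1 + 2 / v := one_mul _
    have hg₃_nonneg : ∀ ω, 0 ≤ g₃ ω := fun ω =>
      mul_nonneg (hb₀_pos ω).le (by positivity)
    have hg₃_bd : ∀ ω, g₃ ω ≤ 1 + 2 / v := by
      intro ω
      have h2v : (0:ℝ) ≤ 2 / v := by positivity
      calc g₃ ω = (L ω ^ 2 * b₀ ω) / 2 := by rw [hg₃_def]; ring
        _ ≤ (1 + 2 / v) / 2 := by
            have := hsq ω
            rw [hb₀_def]
            linarith [hsq ω]
        _ ≤ 1 + 2 / v := by linarith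
    -- integrability of the pieces
    have hb₀_int : Integrable b₀ P := by
      refine (integrable_const (1:ℝ)).mono' (hb₀_sm.mono hm).aestronglyMeasurable
        (ae_of_all _ fun ω => ?_)
      rw [Real.norm_eq_abs, abs_of_pos (hb₀_pos ω)]
      exact hb₀_le ω
    have hg₂_sm : StronglyMeasurable[ℱ t] g₂ :=
      (hb₀_m.mul (hL_m.const_mul s)).stronglyMeasurable
    have hg₃_sm : StronglyMeasurable[ℱ t] g₃ :=
      (hb₀_m.mul ((hL_m.pow measurable_const).div_const 2)).stronglyMeasurable
    have hZ₂_int : Integrable (fun ω => g₂ ω * D ω) P := by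
      refine (hD_int.abs.const_mul (1 + 2 / v)).mono'
        ((hg₂_sm.mono hm).aestronglyMeasurable.mul hD_int.1) (ae_of_all _ fun ω => ?_)
      rw [Real.norm_eq_abs, abs_mul]
      exact mul_le_mul_of_nonneg_right (hg₂_bd ω) (abs_nonneg _)
    have hZ₃_int : Integrable (fun ω => g₃ ω * D ω ^ 2) P := by
      refine (hD2_int.const_mul (1 + 2 / v)).mono'
        ((hg₃_sm.mono hm).aestronglyMeasurable.mul hD2_int.1) (ae_of_all _ fun ω => ?_)
      rw [Real.norm_eq_abs, abs_mul]
      refine mul_le_mul ?_ (le_of_eq (abs_of_nonneg (sq_nonneg _))) (abs_nonneg _) ?_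
      · rw [abs_of_nonneg (hg₃_nonneg ω)]; exact hg₃_bd ω
      · positivity
    have hZ_int : Integrable Z P := (hb₀_int.add hZ₂_int).add hZ₃_int
    -- conditional expectation of Z
    have hZcond : P[Z|ℱ t] ≤ᵐ[P] fun _ => (1:ℝ) := by
      have e0 : Z = (fun ω => b₀ ω + g₂ ω * D ω) + fun ω => g₃ ω * D ω ^ 2 := rfl
      have e1 : P[Z|ℱ t] =ᵐ[P]
          P[fun ω => b₀ ω + g₂ ω * D ω|ℱ t] + P[fun ω => g₃ ω * D ω ^ 2|ℱ t] := by
        rw [e0]; exact condExp_add (hb₀_int.add hZ₂_int) hZ₃_int _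
      have e1' : P[fun ω => b₀ ω + g₂ ω * D ω|ℱ t] =ᵐ[P]
          P[b₀|ℱ t] + P[fun ω => g₂ ω * D ω|ℱ t] := by
        have : (fun ω => b₀ ω + g₂ ω * D ω) = b₀ + fun ω => g₂ ω * D ω := rfl
        rw [this]; exact condExp_add hb₀_int hZ₂_int _
      have e2 : P[b₀|ℱ t] = b₀ := condExp_of_stronglyMeasurable hm hb₀_sm hb₀_int
      have e3 : P[fun ω => g₂ ω * D ω|ℱ t] =ᵐ[P] fun ω => g₂ ω * (P[D|ℱ t]) ω :=
        condExp_mul_of_stronglyMeasurable_left hg₂_sm hZ₂_int hD_int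
      have e4 : P[fun ω => g₃ ω * D ω ^ 2|ℱ t] =ᵐ[P]
          fun ω => g₃ ω * (P[fun ω' => D ω' ^ 2|ℱ t]) ω :=
        condExp_mul_of_stronglyMeasurable_left hg₃_sm hZ₃_int hD2_int
      filter_upwards [e1, e1', e3, e4, hDcond, hvar'] with ω h1 h1' h3 h4 hD0 hv2
      rw [h1]
      simp only [Pi.add_apply]
      rw [h1']
      simp only [Pi.add_apply, e2, h3, h4, hD0, mul_zero, add_zero]
      have hfin : b₀ ω + g₃ ω * v ≤ 1 := by
        have hb : b₀ ω * (1 + v * L ω ^ 2 / 2) ≤ b₀ ω * Real.exp (v * L ω ^ 2 / 2) := by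
          refine mul_le_mul_of_nonneg_left ?_ (hb₀_pos ω).le
          have := Real.add_one_le_exp (v * L ω ^ 2 / 2)
          linarith
        have hbe : b₀ ω * Real.exp (v * L ω ^ 2 / 2) = 1 := by
          rw [hb₀_def, ← Real.exp_add]
          simp
        have : g₃ ω * v = b₀ ω * (v * L ω ^ 2 / 2) := by rw [hg₃_def]; ring
        nlinarith [hb₀_pos ω]
      have := mul_le_mul_of_nonneg_left hv2 (hg₃_nonneg ω)
      linarith
    -- Y ≤ Z and integrability of Y
    have hY_le_Z : ∀ ω, Y ω ≤ Z ω := by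
      intro ω
      have h1 : Y ω = b₀ ω * Real.exp (s * φ (L ω * D ω)) := by
        rw [hY_def, hb₀_def, ← Real.exp_add]
        ring_nf
      rw [h1]
      have h2 := hs (L ω * D ω)
      calc b₀ ω * Real.exp (s * φ (L ω * D ω))
          ≤ b₀ ω * (1 + s * (L ω * D ω) + (L ω * D ω) ^ 2 / 2) :=
            mul_le_mul_of_nonneg_left h2 (hb₀_pos ω).le
        _ = Z ω := by rw [hZ_def, hg₂_def, hg₃_def]; ring
    have hY_pos : ∀ ω, 0 < Y ω := fun ω => Real.exp_pos _
    have hY_meas : Measurable[ℱ (t+1)] Y := by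
      refine Real.measurable_exp.comp ?_
      have hLm' : Measurable[ℱ (t+1)] L := hL_m.mono (ℱ.mono (Nat.le_succ t)) le_rfl
      have hDm' : Measurable[ℱ (t+1)] D :=
        (hX_adapted (t+1)).sub measurable_const
      exact ((hφm.comp (hLm'.mul hDm')).const_mul s).sub
        (((hLm'.pow measurable_const).const_mul v).div_const 2)
    have hY_asm : AEStronglyMeasurable Y P :=
      (hY_meas.mono (ℱ.le (t+1)) le_rfl).aestronglyMeasurable
    have hY_int : Integrable Y P := by
      refine hZ_int.mono' hY_asm (ae_of_all _ fun ω => ?_)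
      rw [Real.norm_eq_abs, abs_of_pos (hY_pos ω)]
      exact hY_le_Z ω
    have hYcond : P[Y|ℱ t] ≤ᵐ[P] fun _ => (1:ℝ) :=
      (condExp_mono hY_int hZ_int (ae_of_all _ hY_le_Z)).trans hZcond
    -- M (t+1) = M t * Y
    have hMY : M (t + 1) = fun ω => M t ω * Y ω := by
      funext ω
      simp only [hM_def, hY_def]
      rw [← Real.exp_add]
      congr 1
      rw [Finset.sum_Icc_succ_top h1t, Finset.sum_Icc_succ_top h1t]
      ring
    have hMt_sm : StronglyMeasurable[ℱ t] (M t) := hM_adapted t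
    have hint : Integrable (M (t + 1)) P := by
      rw [hMY]
      exact integrable_mul_of_condexp_le_one hm hMt_sm hMt
        (fun ω => (hM_pos t ω).le) hY_int (fun ω => (hY_pos ω).le) hYcond
    refine ⟨hint, ?_⟩
    have hmul : P[M (t + 1)|ℱ t] =ᵐ[P] fun ω => M t ω * (P[Y|ℱ t]) ω := by
      rw [hMY] at hint ⊢
      exact condExp_mul_of_stronglyMeasurable_left hMt_sm hint hY_int
    filter_upwards [hmul, hYcond] with ω h1 h2
    rw [h1]
    calc M t ω * (P[Y|ℱ t]) ω ≤ M t ω * 1 :=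
          mul_le_mul_of_nonneg_left h2 (hM_pos t ω).le
      _ = M t ω := mul_one _
  -- conclude
  have hM0 : M 0 = fun _ => (1:ℝ) := by
    funext ω
    rw [hM_def]
    simp
  have hint : ∀ t, Integrable (M t) P := by
    intro t
    induction t with
    | zero => rw [hM0]; exact integrable_const 1
    | succ t ih => exact (key t ih).1
  exact supermartingale_nat hM_adapted hint fun t => (key t (hint t)).2


set_option maxHeartbeats 1000000 in
/-- **Catoni-style confidence sequence.** Under constant conditional mean `μ` and
conditional variance bound `σ²`, for any predictable `l` and Catoni-type influence
function `φ`, the sets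
`CI_t^C = {m : -σ²(∑ l_i²)/2 - log(2/α) ≤ ∑ φ(l_i (X_i - m)) ≤ σ²(∑ l_i²)/2 + log(2/α)}`
form a `(1-α)`-confidence sequence for `μ`. -/
theorem catoni_confidence_sequence
    {Ω : Type*} {mΩ : MeasurableSpace Ω} {P : Measure Ω} [IsProbabilityMeasure P]
    (ℱ : Filtration ℕ mΩ) (X l : ℕ → Ω → ℝ) (μ σ α : ℝ) (φ : ℝ → ℝ)
    (hα : α ∈ Set.Ioo (0 : ℝ) 1)
    (hφ_mono : Monotone φ)
    (hφ_lb : ∀ x : ℝ, -Real.log (1 - x + x ^ 2 / 2) ≤ φ x)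
    (hφ_ub : ∀ x : ℝ, φ x ≤ Real.log (1 + x + x ^ 2 / 2))
    (hX_adapted : Adapted ℱ X)
    (hX_sq : ∀ t, 1 ≤ t → MemLp (X t) 2 P)
    (hmean : ∀ t, 1 ≤ t → P[X t | ℱ (t - 1)] =ᵐ[P] fun _ => μ)
    (hvar : ∀ t, 1 ≤ t →
      ∀ᵐ ω ∂P, (P[fun ω' => (X t ω' - μ) ^ 2 | ℱ (t - 1)]) ω ≤ σ ^ 2)
    (hl_pred : ∀ t, 1 ≤ t → StronglyMeasurable[ℱ (t - 1)] (l t)) :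
    ENNReal.ofReal (1 - α) ≤
      P {ω | ∀ t : ℕ, 1 ≤ t →
        -(σ ^ 2 * (∑ i ∈ Finset.Icc 1 t, (l i ω) ^ 2) / 2) - Real.log (2 / α) ≤
          (∑ i ∈ Finset.Icc 1 t, φ (l i ω * (X i ω - μ))) ∧
        (∑ i ∈ Finset.Icc 1 t, φ (l i ω * (X i ω - μ))) ≤
          σ ^ 2 * (∑ i ∈ Finset.Icc 1 t, (l i ω) ^ 2) / 2 + Real.log (2 / α)} := by
  obtain ⟨hα0, hα1⟩ := hα
  have hφm : Measurable φ := hφ_mono.measurable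
  have hc0 : (0:ℝ) < 2 / α := by positivity
  have hc1 : (1:ℝ) ≤ 2 / α := by
    rw [le_div_iff₀ hα0]; linarith
  have hlog0 : 0 ≤ Real.log (2 / α) := Real.log_nonneg hc1
  set T : Set Ω := {ω | ∀ t : ℕ, 1 ≤ t →
        -(σ ^ 2 * (∑ i ∈ Finset.Icc 1 t, (l i ω) ^ 2) / 2) - Real.log (2 / α) ≤
          (∑ i ∈ Finset.Icc 1 t, φ (l i ω * (X i ω - μ))) ∧
        (∑ i ∈ Finset.Icc 1 t, φ (l i ω * (X i ω - μ))) ≤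
          σ ^ 2 * (∑ i ∈ Finset.Icc 1 t, (l i ω) ^ 2) / 2 + Real.log (2 / α)} with hT_def
  have hφ0 : φ 0 = 0 := by
    have h1 := hφ_lb 0
    have h2 := hφ_ub 0
    norm_num at h1 h2
    linarith
  by_cases hσ : σ ^ 2 = 0
  · -- degenerate case : X t = μ a.s.
    have hXμ : ∀ t : ℕ, 1 ≤ t → ∀ᵐ ω ∂P, X t ω = μ := by
      intro t ht
      have hm : ℱ (t - 1) ≤ mΩ := ℱ.le _
      have hD2_int : Integrable (fun ω => (X t ω - μ) ^ 2) P :=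
        ((hX_sq t ht).sub (memLp_const μ)).integrable_sq
      have h0 : (0:ℝ→ℝ) ≤ 0 := le_rfl
      have hnn : (0:Ω → ℝ) ≤ᵐ[P] P[fun ω' => (X t ω' - μ) ^ 2|ℱ (t - 1)] :=
        condExp_nonneg (ae_of_all _ fun ω => sq_nonneg _)
      have hle : P[fun ω' => (X t ω' - μ) ^ 2|ℱ (t - 1)] ≤ᵐ[P] (0:Ω → ℝ) := by
        filter_upwards [hvar t ht] with ω h
        simpa [hσ] using h
      have heq : P[fun ω' => (X t ω' - μ) ^ 2|ℱ (t - 1)] =ᵐ[P] (0:Ω → ℝ) :=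
        hle.antisymm hnn
      have hint0 : ∫ ω, (X t ω - μ) ^ 2 ∂P = 0 := by
        rw [← integral_condExp hm (f := fun ω => (X t ω - μ) ^ 2)]
        rw [integral_congr_ae heq]
        simp
      have hae := (integral_eq_zero_iff_of_nonneg (fun ω => sq_nonneg _) hD2_int).1 hint0
      filter_upwards [hae] with ω hω
      have hω' : (X t ω - μ) ^ 2 = 0 := hω
      have := pow_eq_zero_iff (n := 2) (by norm_num) |>.1 hω'
      linarith [sub_eq_zero.1 this]
    have hall : ∀ᵐ ω ∂P, ∀ t : ℕ, 1 ≤ t → X t ω = μ := by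
      rw [ae_all_iff]
      intro t
      by_cases ht : 1 ≤ t
      · filter_upwards [hXμ t ht] with ω hω
        exact fun _ => hω
      · exact ae_of_all _ fun ω h => absurd h ht
    have hsub : ∀ᵐ ω ∂P, ω ∈ T := by
      filter_upwards [hall] with ω hω
      intro t ht
      have hz : ∀ i ∈ Finset.Icc 1 t, φ (l i ω * (X i ω - μ)) = 0 := by
        intro i hi
        simp only [Finset.mem_Icc] at hi
        rw [hω i hi.1, sub_self, mul_zero, hφ0]
      rw [Finset.sum_congr rfl hz, Finset.sum_const_zero]
      constructor
      · simp only [hσ]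
        simp
        linarith
      · simp only [hσ]
        simp
        linarith
    have hTc : P {ω | ¬ ω ∈ T} = 0 := by
      rw [← ae_iff]
      exact hsub
    have h1 : (1:ℝ≥0∞) ≤ P T := by
      have hU : (Set.univ : Set Ω) = T ∪ Tᶜ := (Set.union_compl_self T).symm
      calc (1:ℝ≥0∞) = P Set.univ := (measure_univ (μ := P)).symm
        _ ≤ P T + P Tᶜ := by rw [hU]; exact measure_union_le _ _
        _ = P T := by rw [show P Tᶜ = 0 from hTc, add_zero]
    exact le_trans (ENNReal.ofReal_le_one.2 (by linarith)) h1
  · -- main case : σ² > 0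
    have hv : 0 < σ ^ 2 := lt_of_le_of_ne (sq_nonneg σ) (Ne.symm hσ)
    have hs₁ : ∀ x : ℝ, Real.exp ((1:ℝ) * φ x) ≤ 1 + (1:ℝ) * x + x ^ 2 / 2 := by
      intro x
      have hpos : (0:ℝ) < 1 + x + x ^ 2 / 2 := by nlinarith [sq_nonneg (x + 1)]
      have h := Real.exp_le_exp.2 (hφ_ub x)
      rw [Real.exp_log hpos] at h
      rw [one_mul]; linarith
    have hs₂ : ∀ x : ℝ, Real.exp ((-1:ℝ) * φ x) ≤ 1 + (-1:ℝ) * x + x ^ 2 / 2 := by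
      intro x
      have hpos : (0:ℝ) < 1 - x + x ^ 2 / 2 := by nlinarith [sq_nonneg (x - 1)]
      have h' : -φ x ≤ Real.log (1 - x + x ^ 2 / 2) := by linarith [hφ_lb x]
      have h := Real.exp_le_exp.2 h'
      rw [Real.exp_log hpos] at h
      rw [neg_one_mul]; linarith
    have hsup₁ := catoni_supermartingale ℱ X l μ (σ ^ 2) 1 φ hv hφm hs₁
      (by norm_num) hX_adapted hX_sq hmean hvar hl_pred
    have hsup₂ := catoni_supermartingale ℱ X l μ (σ ^ 2) (-1) φ hv hφm hs₂
      (by norm_num) hX_adapted hX_sq hmean hvar hl_pred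
    set M₁ : ℕ → Ω → ℝ := fun t ω =>
      Real.exp ((1:ℝ) * (∑ i ∈ Finset.Icc 1 t, φ (l i ω * (X i ω - μ)))
        - σ ^ 2 * (∑ i ∈ Finset.Icc 1 t, (l i ω) ^ 2) / 2) with hM₁_def
    set M₂ : ℕ → Ω → ℝ := fun t ω =>
      Real.exp ((-1:ℝ) * (∑ i ∈ Finset.Icc 1 t, φ (l i ω * (X i ω - μ)))
        - σ ^ 2 * (∑ i ∈ Finset.Icc 1 t, (l i ω) ^ 2) / 2) with hM₂_def
    have hM₁0 : ∫ ω, M₁ 0 ω ∂P = 1 := by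
      have h0 : M₁ 0 = fun _ => (1:ℝ) := by
        funext ω
        rw [hM₁_def]
        norm_num
      rw [h0]; simp
    have hM₂0 : ∫ ω, M₂ 0 ω ∂P = 1 := by
      have h0 : M₂ 0 = fun _ => (1:ℝ) := by
        funext ω
        rw [hM₂_def]
        norm_num
      rw [h0]; simp
    have hV₁ : P {ω | ∃ t, 2 / α ≤ M₁ t ω} ≤ ENNReal.ofReal (α / 2) := by
      have h := ville_inequality hsup₁ (fun t ω => (Real.exp_pos _).le) hc0
      rw [hM₁0] at h
      refine h.trans (le_of_eq ?_)
      congr 1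
      field_simp
    have hV₂ : P {ω | ∃ t, 2 / α ≤ M₂ t ω} ≤ ENNReal.ofReal (α / 2) := by
      have h := ville_inequality hsup₂ (fun t ω => (Real.exp_pos _).le) hc0
      rw [hM₂0] at h
      refine h.trans (le_of_eq ?_)
      congr 1
      field_simp
    set E₁ : Set Ω := {ω | ∃ t, 2 / α ≤ M₁ t ω} with hE₁_def
    set E₂ : Set Ω := {ω | ∃ t, 2 / α ≤ M₂ t ω} with hE₂_def
    have hE₁_meas : MeasurableSet E₁ := by
      rw [hE₁_def]
      have : {ω | ∃ t, 2 / α ≤ M₁ t ω} = ⋃ t, {ω | 2 / α ≤ M₁ t ω} := by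
        ext ω; simp
      rw [this]
      exact MeasurableSet.iUnion fun t => measurableSet_le measurable_const
        ((hsup₁.stronglyMeasurable t).measurable.mono (ℱ.le t) le_rfl)
    have hE₂_meas : MeasurableSet E₂ := by
      rw [hE₂_def]
      have : {ω | ∃ t, 2 / α ≤ M₂ t ω} = ⋃ t, {ω | 2 / α ≤ M₂ t ω} := by
        ext ω; simp
      rw [this]
      exact MeasurableSet.iUnion fun t => measurableSet_le measurable_const
        ((hsup₂.stronglyMeasurable t).measurable.mono (ℱ.le t) le_rfl)
    have hsubset : (E₁ ∪ E₂)ᶜ ⊆ T := by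
      intro ω hω
      simp only [Set.mem_compl_iff, Set.mem_union, hE₁_def, hE₂_def,
        Set.mem_setOf_eq, not_or, not_exists, not_le] at hω
      obtain ⟨h₁, h₂⟩ := hω
      intro t ht
      have hb₁ := h₁ t
      have hb₂ := h₂ t
      rw [hM₁_def] at hb₁
      rw [hM₂_def] at hb₂
      have hlt₁ : (1:ℝ) * (∑ i ∈ Finset.Icc 1 t, φ (l i ω * (X i ω - μ)))
          - σ ^ 2 * (∑ i ∈ Finset.Icc 1 t, (l i ω) ^ 2) / 2 < Real.log (2 / α) := by
        have := Real.log_lt_log (Real.exp_pos _) hb₁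
        rwa [Real.log_exp] at this
      have hlt₂ : (-1:ℝ) * (∑ i ∈ Finset.Icc 1 t, φ (l i ω * (X i ω - μ)))
          - σ ^ 2 * (∑ i ∈ Finset.Icc 1 t, (l i ω) ^ 2) / 2 < Real.log (2 / α) := by
        have := Real.log_lt_log (Real.exp_pos _) hb₂
        rwa [Real.log_exp] at this
      constructor
      · linarith
      · linarith
    have hunion : P (E₁ ∪ E₂) ≤ ENNReal.ofReal α := by
      calc P (E₁ ∪ E₂) ≤ P E₁ + P E₂ := measure_union_le _ _
        _ ≤ ENNReal.ofReal (α / 2) + ENNReal.ofReal (α / 2) := add_le_add hV₁ hV₂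
        _ = ENNReal.ofReal α := by
            rw [← ENNReal.ofReal_add (by positivity) (by positivity)]
            norm_num
    have hcompl : P ((E₁ ∪ E₂)ᶜ) = 1 - P (E₁ ∪ E₂) :=
      prob_compl_eq_one_sub (hE₁_meas.union hE₂_meas)
    calc ENNReal.ofReal (1 - α) = 1 - ENNReal.ofReal α := by
          rw [ENNReal.ofReal_sub _ hα0.le, ENNReal.ofReal_one]
      _ ≤ 1 - P (E₁ ∪ E₂) := tsub_le_tsub_left hunion 1
      _ = P ((E₁ ∪ E₂)ᶜ) := hcompl.symm
      _ ≤ P T := measure_mono hsubset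
end

section
/- Let {X_t}_{t∈ℕ⁺} be adapted to {F_t} with E[X_t | F_{t−1}] = μ and E[(X_t − μ)² | F_{t−1}] ≤ σ² almost surely for all t ∈ ℕ⁺, let φ be a Catoni-type influence function, let α ∈ (0,1), and let {λ_t}_{t∈ℕ⁺} be a nonrandom positive sequence. Fix ε ∈ (0,1) and t ∈ ℕ⁺, and suppose (Σ_{i=1}^t λ_i)² − 2(Σ_{i=1}^t λ_i²)( σ² Σ_{i=1}^t λ_i² + log(2/ε) + log(2/α) ) ≥ 0. Then with probability at least 1 − ε, the diameter of the Catoni-style confidence set CI_t^C = { m ∈ ℝ : −σ²(Σλ_i²)/2 − log(2/α) ≤ Σ_{i=1}^t φ(λ_i(X_i − m)) ≤ σ²(Σλ_i²)/2 + log(2/α) } is at most 4( σ² Σ_{i=1}^t λ_i² + log(2/ε) + log(2/α) ) / Σ_{i=1}^t λ_i. -/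
open MeasureTheory ProbabilityTheory Filter

section CataniAux

open Finset


/-- Markov/Chernoff bound for an adapted sum with conditionally bounded exponential moments. -/
lemma markov_sum_aux
    {Ω : Type*} {mΩ : MeasurableSpace Ω} {P : Measure Ω} [IsProbabilityMeasure P]
    (ℱ : Filtration ℕ mΩ) (t : ℕ) (W q : ℕ → Ω → ℝ) (c : ℕ → ℝ)
    (hW : ∀ i ∈ Finset.Icc 1 t, Measurable[ℱ i] (W i))
    (hq : ∀ i ∈ Finset.Icc 1 t, Integrable (q i) P)
    (hWq : ∀ i ∈ Finset.Icc 1 t, ∀ ω, Real.exp (W i ω) ≤ q i ω)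
    (hqc : ∀ i ∈ Finset.Icc 1 t, ∀ᵐ ω ∂P, (P[q i | ℱ (i-1)]) ω ≤ Real.exp (c i))
    (a : ℝ) :
    P {ω | a ≤ ∑ i ∈ Finset.Icc 1 t, W i ω}
      ≤ ENNReal.ofReal (Real.exp ((∑ i ∈ Finset.Icc 1 t, c i) - a)) := by
  -- ambient measurability of W i
  have hWm : ∀ i ∈ Finset.Icc 1 t, Measurable (W i) := fun i hi =>
    (hW i hi).mono (ℱ.le i) le_rfl
  -- integrability of the truncated exponential products
  have hF_int : ∀ N : ℝ, ∀ s, s ≤ t →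
      Integrable (fun ω => Real.exp (∑ i ∈ Finset.Icc 1 s, min (W i ω) N)) P := by
    intro N s hst
    have hsub : ∀ i ∈ Finset.Icc 1 s, i ∈ Finset.Icc 1 t := fun i hi => by
      rw [Finset.mem_Icc] at hi ⊢; exact ⟨hi.1, hi.2.trans hst⟩
    have hmeas : Measurable fun ω => Real.exp (∑ i ∈ Finset.Icc 1 s, min (W i ω) N) :=
      (Finset.measurable_sum _ fun i hi => ((hWm i (hsub i hi)).min measurable_const)).exp
    refine (integrable_const (Real.exp ((s : ℝ) * N))).mono' hmeas.aestronglyMeasurable ?_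
    refine ae_of_all _ fun ω => ?_
    rw [Real.norm_eq_abs, abs_of_pos (Real.exp_pos _)]
    refine Real.exp_le_exp.2 ?_
    calc ∑ i ∈ Finset.Icc 1 s, min (W i ω) N
        ≤ ∑ i ∈ Finset.Icc 1 s, N := Finset.sum_le_sum fun i _ => min_le_right _ _
      _ = (s : ℝ) * N := by
          rw [Finset.sum_const, Nat.card_Icc, nsmul_eq_mul]
          norm_num
  -- integral bound by induction
  have key : ∀ N : ℝ, ∀ s, s ≤ t →
      ∫ ω, Real.exp (∑ i ∈ Finset.Icc 1 s, min (W i ω) N) ∂P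
        ≤ Real.exp (∑ i ∈ Finset.Icc 1 s, c i) := by
    intro N s
    induction s with
    | zero =>
        intro _
        simp
    | succ s ih =>
        intro hst
        have hs : s ≤ t := (Nat.le_succ s).trans hst
        have hmem : s + 1 ∈ Finset.Icc 1 t := Finset.mem_Icc.2 ⟨Nat.succ_le_succ (Nat.zero_le s), hst⟩
        set F : Ω → ℝ := fun ω => Real.exp (∑ i ∈ Finset.Icc 1 s, min (W i ω) N) with hF
        set g : Ω → ℝ := fun ω => Real.exp (min (W (s+1) ω) N) with hg
        have hsplit : (fun ω => Real.exp (∑ i ∈ Finset.Icc 1 (s+1), min (W i ω) N)) = F * g := by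
          funext ω
          simp only [Pi.mul_apply, hF, hg, ← Real.exp_add]
          rw [Finset.sum_Icc_succ_top (Nat.succ_le_succ (Nat.zero_le s))]
        -- measurability of F wrt ℱ s
        have hFmeas : StronglyMeasurable[ℱ s] F := by
          refine Measurable.stronglyMeasurable ?_
          refine Measurable.exp (Finset.measurable_sum _ fun i hi => ?_)
          have hi' := Finset.mem_Icc.1 hi
          exact ((hW i (Finset.mem_Icc.2 ⟨hi'.1, hi'.2.trans hs⟩)).mono (ℱ.mono hi'.2) le_rfl).min
            measurable_const
        have hFnonneg : ∀ ω, 0 ≤ F ω := fun ω => (Real.exp_pos _).le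
        have hFint : Integrable F P := hF_int N s hs
        have hgbdd : ∀ ω, ‖g ω‖ ≤ Real.exp N := by
          intro ω
          rw [Real.norm_eq_abs, abs_of_pos (Real.exp_pos _)]
          exact Real.exp_le_exp.2 (min_le_right _ _)
        have hgmeas : Measurable g :=
          ((hWm _ hmem).min measurable_const).exp
        have hgint : Integrable g P :=
          (integrable_const (Real.exp N)).mono' hgmeas.aestronglyMeasurable (ae_of_all _ hgbdd)
        have hFgint : Integrable (F * g) P := by
          rw [← hsplit]; exact hF_int N (s+1) hst
        -- conditional expectation bound for g
        have hgle : ∀ ω, g ω ≤ q (s+1) ω := fun ω =>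
          (Real.exp_le_exp.2 (min_le_left _ _)).trans (hWq _ hmem ω)
        have hcond : (P[g | ℱ s]) ≤ᵐ[P] fun _ => Real.exp (c (s+1)) := by
          have h1 : (P[g | ℱ s]) ≤ᵐ[P] (P[q (s+1) | ℱ s]) :=
            condExp_mono hgint (hq _ hmem) (ae_of_all _ hgle)
          have h2 := hqc _ hmem
          rw [Nat.succ_sub_one] at h2
          filter_upwards [h1, h2] with ω hω1 hω2 using hω1.trans hω2
        -- pull-out property
        have hpull : (P[F * g | ℱ s]) =ᵐ[P] F * (P[g | ℱ s]) :=
          condExp_mul_of_stronglyMeasurable_left hFmeas hFgint hgint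
        have step1 : ∫ ω, (F * g) ω ∂P = ∫ ω, F ω * (P[g | ℱ s]) ω ∂P := by
          rw [← integral_condExp (ℱ.le s)]
          exact integral_congr_ae hpull
        have hFgcond_int : Integrable (fun ω => F ω * (P[g | ℱ s]) ω) P :=
          (integrable_condExp).congr hpull
        have step2 : ∫ ω, F ω * (P[g | ℱ s]) ω ∂P ≤ ∫ ω, F ω * Real.exp (c (s+1)) ∂P := by
          refine integral_mono_ae hFgcond_int (hFint.mul_const _) ?_
          filter_upwards [hcond] with ω hω
          exact mul_le_mul_of_nonneg_left hω (hFnonneg ω)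
        have step3 : ∫ ω, F ω * Real.exp (c (s+1)) ∂P ≤ Real.exp (∑ i ∈ Finset.Icc 1 (s+1), c i) := by
          rw [integral_mul_const, Finset.sum_Icc_succ_top (Nat.succ_le_succ (Nat.zero_le s)),
            Real.exp_add]
          exact mul_le_mul_of_nonneg_right (ih hs) (Real.exp_pos _).le
        calc ∫ ω, Real.exp (∑ i ∈ Finset.Icc 1 (s+1), min (W i ω) N) ∂P
            = ∫ ω, (F * g) ω ∂P := by rw [hsplit]
          _ = ∫ ω, F ω * (P[g | ℱ s]) ω ∂P := step1
          _ ≤ ∫ ω, F ω * Real.exp (c (s+1)) ∂P := step2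
          _ ≤ Real.exp (∑ i ∈ Finset.Icc 1 (s+1), c i) := step3
  -- Markov inequality for truncated sums
  have hmark : ∀ N : ℕ, P {ω | a ≤ ∑ i ∈ Finset.Icc 1 t, min (W i ω) (N : ℝ)}
      ≤ ENNReal.ofReal (Real.exp ((∑ i ∈ Finset.Icc 1 t, c i) - a)) := by
    intro N
    set S : Set Ω := {ω | a ≤ ∑ i ∈ Finset.Icc 1 t, min (W i ω) (N : ℝ)} with hS
    have hSmeas : MeasurableSet S :=
      measurableSet_le measurable_const
        (Finset.measurable_sum _ fun i hi => (hWm i hi).min measurable_const)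
    have hFint := hF_int (N : ℝ) t le_rfl
    have h1 : Real.exp a * (P S).toReal ≤ ∫ ω, Real.exp (∑ i ∈ Finset.Icc 1 t, min (W i ω) (N : ℝ)) ∂P := by
      have h2 : ∫ ω in S, Real.exp a ∂P ≤ ∫ ω in S, Real.exp (∑ i ∈ Finset.Icc 1 t, min (W i ω) (N : ℝ)) ∂P := by
        refine setIntegral_mono_on (integrableOn_const (measure_ne_top P S))
          hFint.integrableOn hSmeas ?_
        intro ω hω
        exact Real.exp_le_exp.2 hω
      have h3 : ∫ ω in S, Real.exp (∑ i ∈ Finset.Icc 1 t, min (W i ω) (N : ℝ)) ∂P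
          ≤ ∫ ω, Real.exp (∑ i ∈ Finset.Icc 1 t, min (W i ω) (N : ℝ)) ∂P :=
        setIntegral_le_integral hFint (ae_of_all _ fun ω => (Real.exp_pos _).le)
      have h4 : ∫ ω in S, Real.exp a ∂P = (P S).toReal * Real.exp a := by
        rw [setIntegral_const, smul_eq_mul, measureReal_def]
      linarith [h2, h3, h4.symm.le]
    have h5 : (P S).toReal ≤ Real.exp ((∑ i ∈ Finset.Icc 1 t, c i) - a) := by
      have := (key (N : ℝ) t le_rfl)
      rw [Real.exp_sub]
      rw [le_div_iff₀ (Real.exp_pos a)]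
      nlinarith [h1, this]
    calc P S = ENNReal.ofReal ((P S).toReal) := (ENNReal.ofReal_toReal (measure_ne_top P S)).symm
      _ ≤ ENNReal.ofReal (Real.exp ((∑ i ∈ Finset.Icc 1 t, c i) - a)) := ENNReal.ofReal_le_ofReal h5
  -- pass to the limit
  have hsub : {ω | a ≤ ∑ i ∈ Finset.Icc 1 t, W i ω}
      ⊆ ⋃ N : ℕ, {ω | a ≤ ∑ i ∈ Finset.Icc 1 t, min (W i ω) (N : ℝ)} := by
    intro ω hω
    set M : ℕ := (Finset.Icc 1 t).sup fun i => ⌈W i ω⌉₊ with hM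
    refine Set.mem_iUnion.2 ⟨M, ?_⟩
    have heq : ∑ i ∈ Finset.Icc 1 t, min (W i ω) (M : ℝ) = ∑ i ∈ Finset.Icc 1 t, W i ω := by
      refine Finset.sum_congr rfl fun i hi => ?_
      refine min_eq_left ?_
      calc W i ω ≤ (⌈W i ω⌉₊ : ℝ) := Nat.le_ceil _
        _ ≤ (M : ℝ) := Nat.cast_le.2 (Finset.le_sup (f := fun i => ⌈W i ω⌉₊) hi)
    simpa [heq] using hω
  have hdir : Directed (· ⊆ ·) fun N : ℕ => {ω | a ≤ ∑ i ∈ Finset.Icc 1 t, min (W i ω) (N : ℝ)} := by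
    refine (Monotone.directed_le ?_)
    intro N M hNM ω hω
    simp only [Set.mem_setOf_eq] at hω ⊢
    refine le_trans hω (Finset.sum_le_sum fun i _ => ?_)
    exact min_le_min le_rfl (Nat.cast_le.2 hNM)
  calc P {ω | a ≤ ∑ i ∈ Finset.Icc 1 t, W i ω}
      ≤ P (⋃ N : ℕ, {ω | a ≤ ∑ i ∈ Finset.Icc 1 t, min (W i ω) (N : ℝ)}) := measure_mono hsub
    _ = ⨆ N : ℕ, P {ω | a ≤ ∑ i ∈ Finset.Icc 1 t, min (W i ω) (N : ℝ)} := hdir.measure_iUnion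
    _ ≤ ENNReal.ofReal (Real.exp ((∑ i ∈ Finset.Icc 1 t, c i) - a)) := iSup_le hmark


lemma condexp_quad_bound
    {Ω : Type*} {mΩ : MeasurableSpace Ω} {P : Measure Ω} [IsProbabilityMeasure P]
    {m : MeasurableSpace Ω} (hm : m ≤ mΩ) {Y : Ω → ℝ} (hY : MemLp Y 2 P)
    {μ σ : ℝ} (hmean : P[Y | m] =ᵐ[P] fun _ => μ)
    (hvar : ∀ᵐ ω ∂P, (P[fun ω' => (Y ω' - μ) ^ 2 | m]) ω ≤ σ ^ 2)
    (s lc m₀ : ℝ) :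
    ∀ᵐ ω ∂P, (P[fun ω' => 1 + s * lc * (Y ω' - m₀) + lc ^ 2 * (Y ω' - m₀) ^ 2 / 2 | m]) ω
      ≤ Real.exp (s * lc * (μ - m₀) + lc ^ 2 * (σ ^ 2 + (μ - m₀) ^ 2) / 2) := by
  set d : ℝ := μ - m₀ with hd
  have hYint : Integrable Y P := hY.integrable one_le_two
  set Y1 : Ω → ℝ := fun ω => Y ω - μ with hY1def
  set Y2 : Ω → ℝ := fun ω => (Y ω - μ) ^ 2 with hY2def
  have hY1 : Integrable Y1 P := hYint.sub (integrable_const μ)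
  have hY2 : Integrable Y2 P := (hY.sub (memLp_const μ)).integrable_sq
  set c1 : ℝ := s * lc + lc ^ 2 * d with hc1def
  set c2 : ℝ := lc ^ 2 / 2 with hc2def
  set c0 : ℝ := 1 + s * lc * d + lc ^ 2 * d ^ 2 / 2 with hc0def
  have hg1 : Integrable (c1 • Y1) P := hY1.smul c1
  have hg2 : Integrable (c2 • Y2) P := hY2.smul c2
  have hdecomp : (fun ω' => 1 + s * lc * (Y ω' - m₀) + lc ^ 2 * (Y ω' - m₀) ^ 2 / 2)
      = (fun _ => c0) + (c1 • Y1 + c2 • Y2) := by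
    funext ω'
    simp only [Pi.add_apply, Pi.smul_apply, smul_eq_mul, hY1def, hY2def, hc0def, hc1def, hc2def]
    have h : Y ω' - m₀ = (Y ω' - μ) + d := by rw [hd]; ring
    rw [h]; ring
  -- conditional expectation of the centered variable is 0
  have hc1e : P[Y1 | m] =ᵐ[P] fun _ => 0 := by
    have hYsub : Y1 = Y - fun _ => μ := rfl
    rw [hYsub]
    have h := condExp_sub (μ := P) (m := m) hYint (integrable_const μ)
    have h2 : P[fun _ : Ω => μ | m] = fun _ => μ := condExp_const hm μ
    filter_upwards [h, hmean] with ω h h'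
    simp only [Pi.sub_apply] at h
    rw [h, h', h2]
    simp
  have hsmul1 : P[c1 • Y1 | m] =ᵐ[P] c1 • P[Y1 | m] := condExp_smul c1 Y1 m
  have hsmul2 : P[c2 • Y2 | m] =ᵐ[P] c2 • P[Y2 | m] := condExp_smul c2 Y2 m
  have hadd1 := condExp_add (μ := P) (m := m) (integrable_const c0) (hg1.add hg2)
  have hadd2 := condExp_add (μ := P) (m := m) hg1 hg2
  have hconst : P[fun _ : Ω => c0 | m] = fun _ => c0 := condExp_const hm c0
  rw [hdecomp]
  filter_upwards [hadd1, hadd2, hsmul1, hsmul2, hc1e, hvar] with ω ha1 ha2 hs1 hs2 hz hv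
  simp only [Pi.add_apply] at ha1 ha2
  rw [ha1, ha2, hs1, hs2, hconst]
  simp only [Pi.smul_apply, smul_eq_mul, hz]
  have hVnn : c2 * (P[Y2|m]) ω ≤ c2 * σ ^ 2 :=
    mul_le_mul_of_nonneg_left hv (by rw [hc2def]; positivity)
  have hexp := Real.add_one_le_exp (s * lc * d + lc ^ 2 * (σ ^ 2 + d ^ 2) / 2)
  rw [hc0def, hc2def] at *
  nlinarith [hVnn, hexp]

lemma bad_prob
    {Ω : Type*} {mΩ : MeasurableSpace Ω} {P : Measure Ω} [IsProbabilityMeasure P]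
    (ℱ : Filtration ℕ mΩ) (X : ℕ → Ω → ℝ) (l : ℕ → ℝ) (μ σ : ℝ) (φ : ℝ → ℝ)
    (hφ_mono : Monotone φ)
    (hX_adapted : StronglyAdapted ℱ X)
    (hX_sq : ∀ i, 1 ≤ i → MemLp (X i) 2 P)
    (hmean : ∀ i, 1 ≤ i → P[X i | ℱ (i - 1)] =ᵐ[P] fun _ => μ)
    (hvar : ∀ i, 1 ≤ i → ∀ᵐ ω ∂P, (P[fun ω' => (X i ω' - μ) ^ 2 | ℱ (i - 1)]) ω ≤ σ ^ 2)
    (t : ℕ) (s m₀ a : ℝ)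
    (hexp : ∀ x, Real.exp (s * φ x) ≤ 1 + s * x + x ^ 2 / 2) :
    P {ω | a ≤ ∑ i ∈ Finset.Icc 1 t, s * φ (l i * (X i ω - m₀))}
      ≤ ENNReal.ofReal (Real.exp ((∑ i ∈ Finset.Icc 1 t,
          (s * l i * (μ - m₀) + (l i) ^ 2 * (σ ^ 2 + (μ - m₀) ^ 2) / 2)) - a)) := by
  refine markov_sum_aux ℱ t (fun i ω => s * φ (l i * (X i ω - m₀)))
    (fun i ω => 1 + s * l i * (X i ω - m₀) + (l i) ^ 2 * (X i ω - m₀) ^ 2 / 2)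
    (fun i => s * l i * (μ - m₀) + (l i) ^ 2 * (σ ^ 2 + (μ - m₀) ^ 2) / 2)
    ?_ ?_ ?_ ?_ a
  · intro i _
    exact measurable_const.mul (hφ_mono.measurable.comp
      (measurable_const.mul (((hX_adapted i).measurable.sub measurable_const))))
  · intro i hi
    have hi1 : 1 ≤ i := (Finset.mem_Icc.1 hi).1
    have h1 : Integrable (fun ω => X i ω - m₀) P :=
      ((hX_sq i hi1).integrable one_le_two).sub (integrable_const m₀)
    have h2 : Integrable (fun ω => (X i ω - m₀) ^ 2) P :=
      ((hX_sq i hi1).sub (memLp_const m₀)).integrable_sq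
    have heq : (fun ω => 1 + s * l i * (X i ω - m₀) + (l i) ^ 2 * (X i ω - m₀) ^ 2 / 2)
        = fun ω => (1 + (s * l i) * (X i ω - m₀)) + ((l i) ^ 2 / 2) * (X i ω - m₀) ^ 2 := by
      funext ω; ring
    show Integrable (fun ω => 1 + s * l i * (X i ω - m₀) + (l i) ^ 2 * (X i ω - m₀) ^ 2 / 2) P
    rw [heq]
    exact ((integrable_const 1).add (h1.const_mul _)).add (h2.const_mul _)
  · intro i _ ω
    refine le_trans (hexp (l i * (X i ω - m₀))) (le_of_eq (by ring))
  · intro i hi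
    have hi1 : 1 ≤ i := (Finset.mem_Icc.1 hi).1
    exact condexp_quad_bound (ℱ.le (i - 1)) (hX_sq i hi1) (hmean i hi1) (hvar i hi1) s (l i) m₀

end CataniAux

section
open Finset

lemma exp_phi_ub {φ : ℝ → ℝ} (hφ_ub : ∀ x : ℝ, φ x ≤ Real.log (1 + x + x ^ 2 / 2)) :
    ∀ x : ℝ, Real.exp ((1 : ℝ) * φ x) ≤ 1 + (1 : ℝ) * x + x ^ 2 / 2 := by
  intro x
  have hpos : (0 : ℝ) < 1 + x + x ^ 2 / 2 := by nlinarith [sq_nonneg (x + 1)]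
  have h := Real.exp_le_exp.2 (hφ_ub x)
  rw [Real.exp_log hpos] at h
  rw [one_mul]
  linarith

lemma exp_phi_lb {φ : ℝ → ℝ} (hφ_lb : ∀ x : ℝ, -Real.log (1 - x + x ^ 2 / 2) ≤ φ x) :
    ∀ x : ℝ, Real.exp ((-1 : ℝ) * φ x) ≤ 1 + (-1 : ℝ) * x + x ^ 2 / 2 := by
  intro x
  have hpos : (0 : ℝ) < 1 - x + x ^ 2 / 2 := by nlinarith [sq_nonneg (x - 1)]
  have h1 : -φ x ≤ Real.log (1 - x + x ^ 2 / 2) := by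
    have := hφ_lb x; linarith
  have h := Real.exp_le_exp.2 h1
  rw [Real.exp_log hpos] at h
  rw [neg_one_mul]
  linarith

set_option maxHeartbeats 1000000 in
/-- **Width of the Catoni-style confidence sequence.** With nonrandom positive
coefficients `l` satisfying the quadratic condition, with probability at least `1-ε`
the diameter (`sSup - sInf`) of the Catoni-style confidence set at time `t` is at most
`4(σ² ∑ l_i² + log(2/ε) + log(2/α)) / ∑ l_i`. -/
theorem catoni_confidence_sequence_width
    {Ω : Type*} {mΩ : MeasurableSpace Ω} {P : Measure Ω} [IsProbabilityMeasure P]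
    (ℱ : Filtration ℕ mΩ) (X : ℕ → Ω → ℝ) (l : ℕ → ℝ) (μ σ α ε : ℝ) (φ : ℝ → ℝ)
    (hα : α ∈ Set.Ioo (0 : ℝ) 1) (hε : ε ∈ Set.Ioo (0 : ℝ) 1)
    (hφ_mono : Monotone φ)
    (hφ_lb : ∀ x : ℝ, -Real.log (1 - x + x ^ 2 / 2) ≤ φ x)
    (hφ_ub : ∀ x : ℝ, φ x ≤ Real.log (1 + x + x ^ 2 / 2))
    (hX_adapted : StronglyAdapted ℱ X)
    (hX_sq : ∀ t, 1 ≤ t → MemLp (X t) 2 P)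
    (hmean : ∀ t, 1 ≤ t → P[X t | ℱ (t - 1)] =ᵐ[P] fun _ => μ)
    (hvar : ∀ t, 1 ≤ t →
      ∀ᵐ ω ∂P, (P[fun ω' => (X t ω' - μ) ^ 2 | ℱ (t - 1)]) ω ≤ σ ^ 2)
    (hl_pos : ∀ t, 1 ≤ t → 0 < l t)
    (t : ℕ) (ht : 1 ≤ t)
    (hquad : 0 ≤ (∑ i ∈ Finset.Icc 1 t, l i) ^ 2 -
      2 * (∑ i ∈ Finset.Icc 1 t, (l i) ^ 2) *
        (σ ^ 2 * (∑ i ∈ Finset.Icc 1 t, (l i) ^ 2) +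
          Real.log (2 / ε) + Real.log (2 / α))) :
    ENNReal.ofReal (1 - ε) ≤
      P {ω |
        sSup {m : ℝ |
          -(σ ^ 2 * (∑ i ∈ Finset.Icc 1 t, (l i) ^ 2) / 2) - Real.log (2 / α) ≤
            (∑ i ∈ Finset.Icc 1 t, φ (l i * (X i ω - m))) ∧
          (∑ i ∈ Finset.Icc 1 t, φ (l i * (X i ω - m))) ≤
            σ ^ 2 * (∑ i ∈ Finset.Icc 1 t, (l i) ^ 2) / 2 + Real.log (2 / α)} -
        sInf {m : ℝ |
          -(σ ^ 2 * (∑ i ∈ Finset.Icc 1 t, (l i) ^ 2) / 2) - Real.log (2 / α) ≤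
            (∑ i ∈ Finset.Icc 1 t, φ (l i * (X i ω - m))) ∧
          (∑ i ∈ Finset.Icc 1 t, φ (l i * (X i ω - m))) ≤
            σ ^ 2 * (∑ i ∈ Finset.Icc 1 t, (l i) ^ 2) / 2 + Real.log (2 / α)} ≤
        4 * (σ ^ 2 * (∑ i ∈ Finset.Icc 1 t, (l i) ^ 2) +
          Real.log (2 / ε) + Real.log (2 / α)) / ∑ i ∈ Finset.Icc 1 t, l i} := by
  obtain ⟨hε0, hε1⟩ := hε
  obtain ⟨hα0, hα1⟩ := hα
  set L : ℝ := ∑ i ∈ Finset.Icc 1 t, l i with hLdef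
  set Q : ℝ := ∑ i ∈ Finset.Icc 1 t, (l i) ^ 2 with hQdef
  have h1t : (1 : ℕ) ∈ Finset.Icc 1 t := Finset.mem_Icc.2 ⟨le_refl 1, ht⟩
  have hL : 0 < L :=
    Finset.sum_pos (fun i hi => hl_pos i (Finset.mem_Icc.1 hi).1) ⟨1, h1t⟩
  have hQ : 0 < Q :=
    Finset.sum_pos (fun i hi => pow_pos (hl_pos i (Finset.mem_Icc.1 hi).1) 2) ⟨1, h1t⟩
  have hlogε : 0 < Real.log (2 / ε) :=
    Real.log_pos ((one_lt_div hε0).2 (hε1.trans one_lt_two))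
  have hlogα : 0 < Real.log (2 / α) :=
    Real.log_pos ((one_lt_div hα0).2 (hα1.trans one_lt_two))
  set Kc : ℝ := σ ^ 2 * Q + Real.log (2 / ε) + Real.log (2 / α) with hKcdef
  have hσQ : 0 ≤ σ ^ 2 * Q := by positivity
  have hKc : 0 < Kc := by rw [hKcdef]; linarith
  set B : ℝ := σ ^ 2 * Q / 2 + Real.log (2 / α) with hBdef
  set D : ℝ := L ^ 2 - 2 * Q * Kc with hDdef
  have hD : 0 ≤ D := hquad
  set r : ℝ := Real.sqrt D with hrdef
  have hr2 : r ^ 2 = D := Real.sq_sqrt hD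
  have hrnn : 0 ≤ r := Real.sqrt_nonneg D
  have hrL : r < L := by
    rw [hrdef]
    refine (Real.sqrt_lt' hL).2 ?_
    rw [hDdef]; nlinarith
  set δ : ℝ := (L - r) / Q with hδdef
  have hδpos : 0 < δ := div_pos (sub_pos.2 hrL) hQ
  have hδK : δ * L - δ ^ 2 * Q / 2 = Kc := by
    rw [hδdef]
    field_simp
    nlinarith [hr2]
  have hδ2 : 2 * δ ≤ 4 * Kc / L := by
    rw [hδdef, show (2:ℝ) * ((L - r) / Q) = (2 * (L - r)) / Q from by ring,
      div_le_div_iff₀ hQ hL]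
    nlinarith [hr2, hrnn, hrL.le]
  -- the two good events
  set A1 : Set Ω := {ω | ∑ i ∈ Finset.Icc 1 t, φ (l i * (X i ω - (μ + δ))) < -B} with hA1def
  set A2 : Set Ω := {ω | B < ∑ i ∈ Finset.Icc 1 t, φ (l i * (X i ω - (μ - δ)))} with hA2def
  have hsummeas : ∀ b : ℝ, Measurable fun ω => ∑ i ∈ Finset.Icc 1 t, φ (l i * (X i ω - b)) := by
    intro b
    refine Finset.measurable_sum _ fun i _ => ?_
    exact hφ_mono.measurable.comp
      (measurable_const.mul ((((hX_adapted i).mono (ℱ.le i)).measurable).sub measurable_const))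
  have hA1meas : MeasurableSet A1 := measurableSet_lt (hsummeas (μ + δ)) measurable_const
  have hA2meas : MeasurableSet A2 := measurableSet_lt measurable_const (hsummeas (μ - δ))
  -- probability of bad events
  have hexpP := exp_phi_ub hφ_ub
  have hexpM := exp_phi_lb hφ_lb
  -- sum of the exponents
  have hsumc : ∀ s' m₀ : ℝ, (μ - m₀) ^ 2 = δ ^ 2 → s' * (μ - m₀) = -δ →
      (∑ i ∈ Finset.Icc 1 t,
        (s' * l i * (μ - m₀) + (l i) ^ 2 * (σ ^ 2 + (μ - m₀) ^ 2) / 2)) - (-B)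
      = -Real.log (2 / ε) := by
    intro s' m₀ hsq hlin
    have hterm : ∀ i, s' * l i * (μ - m₀) + (l i) ^ 2 * (σ ^ 2 + (μ - m₀) ^ 2) / 2
        = (-δ) * l i + ((σ ^ 2 + δ ^ 2) / 2) * (l i) ^ 2 := by
      intro i
      have h1 : s' * l i * (μ - m₀) = l i * (s' * (μ - m₀)) := by ring
      rw [h1, hlin, hsq]; ring
    rw [Finset.sum_congr rfl fun i _ => hterm i, Finset.sum_add_distrib,
      ← Finset.mul_sum, ← Finset.mul_sum, ← hLdef, ← hQdef]
    have : -δ * L + (σ ^ 2 + δ ^ 2) / 2 * Q = -(δ * L - δ ^ 2 * Q / 2) + σ ^ 2 * Q / 2 := by ring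
    rw [hBdef, this, hδK, hKcdef]
    ring
  have hεhalf : Real.exp (-Real.log (2 / ε)) = ε / 2 := by
    rw [Real.exp_neg, Real.exp_log (by positivity : (0:ℝ) < 2 / ε), inv_div]
  have hbad1 : P A1ᶜ ≤ ENNReal.ofReal (ε / 2) := by
    have hb := bad_prob ℱ X l μ σ φ hφ_mono hX_adapted hX_sq hmean hvar t 1 (μ + δ) (-B) hexpP
    have hset : A1ᶜ = {ω | -B ≤ ∑ i ∈ Finset.Icc 1 t, (1:ℝ) * φ (l i * (X i ω - (μ + δ)))} := by
      ext ω
      simp [hA1def, not_lt, one_mul]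
    rw [hset]
    refine hb.trans (le_of_eq ?_)
    rw [hsumc 1 (μ + δ) (by ring) (by ring), hεhalf]
  have hbad2 : P A2ᶜ ≤ ENNReal.ofReal (ε / 2) := by
    have hb := bad_prob ℱ X l μ σ φ hφ_mono hX_adapted hX_sq hmean hvar t (-1) (μ - δ) (-B) hexpM
    have hset : A2ᶜ = {ω | -B ≤ ∑ i ∈ Finset.Icc 1 t, (-1:ℝ) * φ (l i * (X i ω - (μ - δ)))} := by
      ext ω
      simp only [hA2def, Set.mem_compl_iff, Set.mem_setOf_eq, not_lt, neg_one_mul,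
        Finset.sum_neg_distrib, neg_le_neg_iff]
    rw [hset]
    refine hb.trans (le_of_eq ?_)
    rw [hsumc (-1) (μ - δ) (by ring) (by ring), hεhalf]
  -- good event is contained in the target event
  have hsub : A1 ∩ A2 ⊆ {ω |
      sSup {m : ℝ | -(σ ^ 2 * Q / 2) - Real.log (2 / α) ≤
          (∑ i ∈ Finset.Icc 1 t, φ (l i * (X i ω - m))) ∧
        (∑ i ∈ Finset.Icc 1 t, φ (l i * (X i ω - m))) ≤ σ ^ 2 * Q / 2 + Real.log (2 / α)} -
      sInf {m : ℝ | -(σ ^ 2 * Q / 2) - Real.log (2 / α) ≤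
          (∑ i ∈ Finset.Icc 1 t, φ (l i * (X i ω - m))) ∧
        (∑ i ∈ Finset.Icc 1 t, φ (l i * (X i ω - m))) ≤ σ ^ 2 * Q / 2 + Real.log (2 / α)} ≤
      4 * (σ ^ 2 * Q + Real.log (2 / ε) + Real.log (2 / α)) / L} := by
    rintro ω ⟨h1, h2⟩
    rw [hA1def, Set.mem_setOf_eq] at h1
    rw [hA2def, Set.mem_setOf_eq] at h2
    set S : Set ℝ := {m : ℝ | -(σ ^ 2 * Q / 2) - Real.log (2 / α) ≤
        (∑ i ∈ Finset.Icc 1 t, φ (l i * (X i ω - m))) ∧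
      (∑ i ∈ Finset.Icc 1 t, φ (l i * (X i ω - m))) ≤ σ ^ 2 * Q / 2 + Real.log (2 / α)} with hSdef
    show sSup S - sInf S ≤ 4 * (σ ^ 2 * Q + Real.log (2 / ε) + Real.log (2 / α)) / L
    have hRHS : sSup S - sInf S ≤ 4 * Kc / L → sSup S - sInf S ≤
        4 * (σ ^ 2 * Q + Real.log (2 / ε) + Real.log (2 / α)) / L := by
      rw [hKcdef]; exact fun h => h
    refine hRHS ?_
    have hmono : ∀ m m' : ℝ, m ≤ m' →
        (∑ i ∈ Finset.Icc 1 t, φ (l i * (X i ω - m'))) ≤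
          ∑ i ∈ Finset.Icc 1 t, φ (l i * (X i ω - m)) := by
      intro m m' hmm
      refine Finset.sum_le_sum fun i hi => hφ_mono ?_
      have hlpos := hl_pos i (Finset.mem_Icc.1 hi).1
      nlinarith
    by_cases hne : S.Nonempty
    · have hub : ∀ m ∈ S, m ≤ μ + δ := by
        intro m hm
        by_contra hcon
        push_neg at hcon
        have hle := hmono (μ + δ) m hcon.le
        have := hm.1
        rw [hBdef] at h1
        linarith
      have hlb : ∀ m ∈ S, μ - δ ≤ m := by
        intro m hm
        by_contra hcon
        push_neg at hcon
        have hle := hmono m (μ - δ) hcon.le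
        have := hm.2
        rw [hBdef] at h2
        linarith
      have hsup : sSup S ≤ μ + δ := csSup_le hne hub
      have hinf : μ - δ ≤ sInf S := le_csInf hne hlb
      linarith
    · rw [Set.not_nonempty_iff_eq_empty] at hne
      rw [hne, Real.sSup_empty, Real.sInf_empty]
      have : 0 ≤ 4 * Kc / L := by positivity
      linarith
  -- conclude
  have hGmeas : MeasurableSet (A1 ∩ A2) := hA1meas.inter hA2meas
  have hcompl : P ((A1 ∩ A2)ᶜ) ≤ ENNReal.ofReal ε := by
    rw [Set.compl_inter]
    refine (measure_union_le _ _).trans ?_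
    refine (add_le_add hbad1 hbad2).trans (le_of_eq ?_)
    rw [← ENNReal.ofReal_add (by linarith) (by linarith)]
    norm_num
  have hsum1 : P (A1 ∩ A2) + P ((A1 ∩ A2)ᶜ) = 1 := by
    rw [measure_add_measure_compl hGmeas]; simp
  have hPG : ENNReal.ofReal (1 - ε) ≤ P (A1 ∩ A2) := by
    rw [← ENNReal.add_le_add_iff_right (measure_ne_top P ((A1 ∩ A2)ᶜ)), hsum1]
    calc ENNReal.ofReal (1 - ε) + P ((A1 ∩ A2)ᶜ)
        ≤ ENNReal.ofReal (1 - ε) + ENNReal.ofReal ε := add_le_add_right hcompl _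
      _ = 1 := by
          rw [← ENNReal.ofReal_add (by linarith) (by linarith)]
          norm_num
  exact hPG.trans (measure_mono hsub)

end
end

section
/- Let {X_t}_{t∈ℕ⁺} be adapted to {F_t} with E[X_t | F_{t−1}] = μ for all t ∈ ℕ⁺ and E[(X_t − μ)² | F_{t−1}] ≤ σ_t² almost surely for all t, where {σ_t}_{t∈ℕ⁺} is a predictable nonnegative process, and let {λ_t}_{t∈ℕ⁺} be a predictable process with λ_t > 0. Define CI_t^{DS'} = [ (Σ_{i=1}^t λ_i X_i ± (2/α − 1 + Σ_{i=1}^t λ_i² σ_i²)) / Σ_{i=1}^t λ_i ]. Then for any α ∈ (0,1), P(∀ t ∈ ℕ⁺, μ ∈ CI_t^{DS'}) ≥ 1 − α. -/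
open MeasureTheory ProbabilityTheory Filter


noncomputable def dsPhi (x : ℝ) : ℝ := 1 / (1 + max x 0)

lemma dsPhi_pos_den (x : ℝ) : 0 < 1 + max x 0 := by
  have := le_max_right x 0; linarith

lemma dsPhi_nonneg (x : ℝ) : 0 ≤ dsPhi x := by
  unfold dsPhi; positivity

lemma dsPhi_le_one (x : ℝ) : dsPhi x ≤ 1 := by
  unfold dsPhi
  rw [div_le_one (dsPhi_pos_den x)]
  have := le_max_right x 0; linarith

lemma dsPhi_of_nonpos {x : ℝ} (h : x ≤ 0) : dsPhi x = 1 := by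
  unfold dsPhi; rw [max_eq_right h]; norm_num

lemma dsPhi_of_nonneg {x : ℝ} (h : 0 ≤ x) : dsPhi x = 1 / (1 + x) := by
  unfold dsPhi; rw [max_eq_left h]

lemma dsPhi_continuous : Continuous dsPhi := by
  unfold dsPhi
  exact continuous_const.div (by continuity) (fun x => (dsPhi_pos_den x).ne')

lemma dsPhi_measurable : Measurable dsPhi := dsPhi_continuous.measurable

lemma dsPhi_key {x d : ℝ} (hx : 0 ≤ x) :
    dsPhi (x - d) ≤ 1 / (1 + x) + (d + d ^ 2) / (1 + x) ^ 2 := by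
  have h1 : (0:ℝ) < 1 + x := by linarith
  rcases le_or_gt d x with h | h
  · rw [dsPhi_of_nonneg (by linarith)]
    have h2 : (0:ℝ) < 1 + (x - d) := by linarith
    rw [div_add_div _ _ h1.ne' (by positivity), div_le_div_iff₀ h2 (by positivity)]
    nlinarith [mul_nonneg (sq_nonneg d) (sub_nonneg.mpr h), sq_nonneg d]
  · rw [dsPhi_of_nonpos (by linarith)]
    rw [div_add_div _ _ h1.ne' (by positivity), le_div_iff₀ (by positivity)]
    nlinarith [mul_pos (sub_pos.mpr h) (show (0:ℝ) < d + x + 1 by linarith)]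

lemma dsPhi_alg {c w : ℝ} (hc : 0 ≤ c) (hw : 0 ≤ w) :
    1 / (1 + (c + w)) + w / (1 + (c + w)) ^ 2 ≤ 1 / (1 + c) := by
  have h1 : (0:ℝ) < 1 + c := by linarith
  have h2 : (0:ℝ) < 1 + (c + w) := by linarith
  rw [div_add_div _ _ h2.ne' (by positivity), div_le_div_iff₀ (by positivity) h1]
  nlinarith [mul_nonneg (mul_nonneg (sq_nonneg w) h2.le) h1.le, sq_nonneg w, mul_nonneg (sq_nonneg w) h2.le]

noncomputable def dsFrozen {Ω : Type*} (a : ℝ) (g : ℕ → Ω → ℝ) : ℕ → Ω → ℝ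
  | 0 => fun _ => a
  | t + 1 => fun ω =>
      if dsFrozen a g t ω < 0 then dsFrozen a g t ω else dsFrozen a g t ω + g (t + 1) ω

lemma dsFrozen_zero {Ω : Type*} (a : ℝ) (g : ℕ → Ω → ℝ) (ω : Ω) : dsFrozen a g 0 ω = a := rfl

lemma dsFrozen_succ {Ω : Type*} (a : ℝ) (g : ℕ → Ω → ℝ) (t : ℕ) (ω : Ω) :
    dsFrozen a g (t + 1) ω =
      if dsFrozen a g t ω < 0 then dsFrozen a g t ω else dsFrozen a g t ω + g (t + 1) ω := rfl

lemma dsFrozen_eq_sum {Ω : Type*} {a : ℝ} {g : ℕ → Ω → ℝ} {t : ℕ} {ω : Ω}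
    (h : 0 ≤ dsFrozen a g t ω) :
    dsFrozen a g t ω = a + ∑ i ∈ Finset.Icc 1 t, g i ω := by
  induction t with
  | zero => simp [dsFrozen_zero]
  | succ t ih =>
    have ht : ¬ dsFrozen a g t ω < 0 := by
      intro hneg
      rw [dsFrozen_succ, if_pos hneg] at h
      exact absurd hneg (not_lt.mpr h)
    rw [dsFrozen_succ, if_neg ht, ih (not_lt.mp ht),
      Finset.sum_Icc_succ_top (Nat.one_le_iff_ne_zero.mpr (Nat.succ_ne_zero t))]
    ring

lemma dsFrozen_neg_of_sum_neg {Ω : Type*} {a : ℝ} {g : ℕ → Ω → ℝ} {t : ℕ} {ω : Ω}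
    (h : a + ∑ i ∈ Finset.Icc 1 t, g i ω < 0) : dsFrozen a g t ω < 0 := by
  by_contra h'
  push_neg at h'
  rw [dsFrozen_eq_sum h'] at h'
  linarith

lemma dsFrozen_neg_mono {Ω : Type*} {a : ℝ} {g : ℕ → Ω → ℝ} {t : ℕ} {ω : Ω}
    (h : dsFrozen a g t ω < 0) : dsFrozen a g (t + 1) ω < 0 := by
  rw [dsFrozen_succ, if_pos h]; exact h

lemma dsFrozen_adapted {Ω : Type*} {mΩ : MeasurableSpace Ω} (ℱ : Filtration ℕ mΩ)
    {a : ℝ} {g : ℕ → Ω → ℝ} (hg : ∀ i, 1 ≤ i → Measurable[ℱ i] (g i)) :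
    ∀ t, Measurable[ℱ t] (dsFrozen a g t) := by
  intro t
  induction t with
  | zero => exact measurable_const
  | succ t ih =>
    have h1 : Measurable[ℱ (t+1)] (dsFrozen a g t) := ih.mono (ℱ.mono t.le_succ) le_rfl
    have h2 : Measurable[ℱ (t+1)] (g (t+1)) := hg (t+1) t.succ_pos
    exact Measurable.ite (measurableSet_lt h1 measurable_const) h1 (h1.add h2)

lemma integrable_dsPhi_comp {Ω : Type*} {mΩ : MeasurableSpace Ω} (P : Measure Ω) [IsFiniteMeasure P] {h : Ω → ℝ}
    (hh : Measurable[mΩ] h) : Integrable (fun ω => dsPhi (h ω)) P := by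
  refine Integrable.mono' (integrable_const 1)
    (dsPhi_measurable.comp hh).aestronglyMeasurable (ae_of_all _ fun ω => ?_)
  rw [Real.norm_eq_abs, abs_of_nonneg (dsPhi_nonneg _)]
  exact dsPhi_le_one _

set_option maxHeartbeats 2000000 in
lemma ds_step {Ω : Type*} {m mΩ : MeasurableSpace Ω} {P : Measure Ω}
    [IsProbabilityMeasure P] (hm : m ≤ mΩ)
    (c lam sig f gnext : Ω → ℝ)
    (hc : Measurable[m] c) (hlam : Measurable[m] lam) (hsig : Measurable[m] sig)
    (hf_meas : Measurable f) (hf_int : Integrable f P)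
    (hf2_int : Integrable (fun ω => f ω ^ 2) P)
    (hf1 : P[f|m] =ᵐ[P] fun _ => (0:ℝ))
    (hf2 : ∀ᵐ ω ∂P, (P[fun ω' => f ω' ^ 2|m]) ω ≤ sig ω ^ 2)
    (hgnext : ∀ ω, gnext ω = lam ω ^ 2 * sig ω ^ 2 - lam ω * f ω) :
    ∫ ω, dsPhi (if c ω < 0 then c ω else c ω + gnext ω) ∂P ≤ ∫ ω, dsPhi (c ω) ∂P := by
  haveI : SigmaFinite (P.trim hm) := by infer_instance
  set w : Ω → ℝ := fun ω => lam ω ^ 2 * sig ω ^ 2 with hw_def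
  set u : Ω → ℝ := fun ω => 1 + (c ω + w ω) with hu_def
  set Cn : Ω → ℝ := fun ω => if c ω < 0 then c ω else c ω + gnext ω with hCn_def
  have hc0 : Measurable[mΩ] c := hc.mono hm le_rfl
  have hlam0 : Measurable[mΩ] lam := hlam.mono hm le_rfl
  have hsig0 : Measurable[mΩ] sig := hsig.mono hm le_rfl
  have hw_m : Measurable[m] w := (hlam.pow_const 2).mul (hsig.pow_const 2)
  have hu_m : Measurable[m] u := measurable_const.add (hc.add hw_m)
  have hu0 : Measurable[mΩ] u := hu_m.mono hm le_rfl
  have hgn : Measurable[mΩ] gnext := by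
    have h : gnext = fun ω => lam ω ^ 2 * sig ω ^ 2 - lam ω * f ω := funext hgnext
    rw [h]
    exact ((hlam0.pow_const 2).mul (hsig0.pow_const 2)).sub (hlam0.mul hf_meas)
  have hCn_meas : Measurable[mΩ] Cn :=
    Measurable.ite (measurableSet_lt hc0 measurable_const) hc0 (hc0.add hgn)
  have hφCn_int : Integrable (fun ω => dsPhi (Cn ω)) P := integrable_dsPhi_comp P hCn_meas
  have hφc_int : Integrable (fun ω => dsPhi (c ω)) P := integrable_dsPhi_comp P hc0
  have hw0 : ∀ ω, 0 ≤ w ω := fun ω => by positivity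
  set B : Set Ω := {ω | 0 ≤ c ω} with hB_def
  have hB_m : MeasurableSet[m] B := measurableSet_le (measurable_const : Measurable[m] (fun _ : Ω => (0:ℝ))) hc
  have hB : MeasurableSet[mΩ] B := hm _ hB_m
  set A : ℕ → Set Ω := fun k => {ω | 0 ≤ c ω ∧ |lam ω| ≤ (k:ℝ) ∧ |sig ω| ≤ (k:ℝ)}
    with hA_def
  have hconst : ∀ (r : ℝ), Measurable[m] (fun _ : Ω => r) := fun r => measurable_const
  have habs : ∀ (h : Ω → ℝ), Measurable[m] h → ∀ r : ℝ,
      MeasurableSet[m] {ω | |h ω| ≤ r} := by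
    intro h hh r
    have : {ω | |h ω| ≤ r} = h ⁻¹' Set.Icc (-r) r := by
      ext ω; simp [abs_le]
    rw [this]
    exact hh measurableSet_Icc
  have hA_m : ∀ k, MeasurableSet[m] (A k) := fun k =>
    (measurableSet_le (hconst 0) hc).inter
      ((habs lam hlam k).inter (habs sig hsig k))
  have hA : ∀ k, MeasurableSet[mΩ] (A k) := fun k => hm _ (hA_m k)
  have hA_mono : Monotone A := by
    intro k k' hkk ω hω
    have hcast : (k:ℝ) ≤ (k':ℝ) := Nat.cast_le.mpr hkk
    exact ⟨hω.1, hω.2.1.trans hcast, hω.2.2.trans hcast⟩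
  have hA_union : (⋃ k, A k) = B := by
    ext ω
    simp only [Set.mem_iUnion, hA_def, Set.mem_setOf_eq, hB_def]
    constructor
    · rintro ⟨k, hk, _, _⟩; exact hk
    · intro h0
      obtain ⟨k, hk⟩ := exists_nat_ge (max |lam ω| |sig ω|)
      exact ⟨k, h0, (le_max_left _ _).trans hk, (le_max_right _ _).trans hk⟩
  have key : ∀ k : ℕ, ∫ ω in A k, dsPhi (Cn ω) ∂P ≤ ∫ ω in A k, dsPhi (c ω) ∂P := by
    intro k
    have hKnn : (0:ℝ) ≤ (k:ℝ) := Nat.cast_nonneg k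
    have hu1 : ∀ ω ∈ A k, 1 ≤ u ω := by
      intro ω hω
      have h1 := hω.1
      have h2 := hw0 ω
      simp only [hu_def]; linarith
    have huw : ∀ ω ∈ A k, w ω + 1 ≤ u ω := by
      intro ω hω
      have h1 := hω.1
      simp only [hu_def]; linarith
    -- G : for the linear term
    set G : Ω → ℝ := (A k).indicator (fun ω => lam ω / u ω ^ 2) with hG_def
    set G2 : Ω → ℝ := (A k).indicator (fun ω => lam ω ^ 2 / u ω ^ 2) with hG2_def
    have hG_m : Measurable[m] G := (hlam.div (hu_m.pow_const 2)).indicator (hA_m k)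
    have hG2_m : Measurable[m] G2 :=
      ((hlam.pow_const 2).div (hu_m.pow_const 2)).indicator (hA_m k)
    have hG_bdd : ∀ ω, |G ω| ≤ (k:ℝ) := by
      intro ω
      by_cases hω : ω ∈ A k
      · rw [hG_def, Set.indicator_of_mem hω]
        have h1 := hu1 ω hω
        have hu2 : (1:ℝ) ≤ u ω ^ 2 := by nlinarith
        have : |lam ω / u ω ^ 2| = |lam ω| / u ω ^ 2 := by
          rw [abs_div, abs_of_nonneg (by positivity : (0:ℝ) ≤ u ω ^ 2)]
        rw [this]
        exact (div_le_self (abs_nonneg _) hu2).trans hω.2.1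
      · rw [hG_def, Set.indicator_of_notMem hω, abs_zero]; exact hKnn
    have hG2_nonneg : ∀ ω, 0 ≤ G2 ω := by
      intro ω
      by_cases hω : ω ∈ A k
      · rw [hG2_def, Set.indicator_of_mem hω]
        positivity
      · rw [hG2_def, Set.indicator_of_notMem hω]
    have hG2_bdd : ∀ ω, |G2 ω| ≤ (k:ℝ) ^ 2 := by
      intro ω
      by_cases hω : ω ∈ A k
      · rw [hG2_def, Set.indicator_of_mem hω]
        have h1 := hu1 ω hω
        have hu2 : (1:ℝ) ≤ u ω ^ 2 := by nlinarith
        rw [abs_of_nonneg (by positivity)]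
        refine (div_le_self (by positivity) hu2).trans ?_
        have := hω.2.1
        calc lam ω ^ 2 = |lam ω| ^ 2 := (sq_abs _).symm
          _ ≤ (k:ℝ) ^ 2 := by nlinarith [abs_nonneg (lam ω)]
      · rw [hG2_def, Set.indicator_of_notMem hω, abs_zero]; positivity
    have hG_sm : StronglyMeasurable[m] G := hG_m.stronglyMeasurable
    have hG2_sm : StronglyMeasurable[m] G2 := hG2_m.stronglyMeasurable
    have hGf_int : Integrable (fun ω => G ω * f ω) P :=
      hf_int.bdd_mul (hG_m.mono hm le_rfl).aestronglyMeasurable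
        (ae_of_all _ fun ω => by rw [Real.norm_eq_abs]; exact hG_bdd ω)
    have hG2f_int : Integrable (fun ω => G2 ω * f ω ^ 2) P :=
      hf2_int.bdd_mul (hG2_m.mono hm le_rfl).aestronglyMeasurable
        (ae_of_all _ fun ω => by rw [Real.norm_eq_abs]; exact hG2_bdd ω)
    have hG2sig_int : Integrable (fun ω => G2 ω * sig ω ^ 2) P := by
      refine Integrable.mono' (integrable_const ((k:ℝ)^2 * (k:ℝ)^2))
        (((hG2_m.mono hm le_rfl).mul (hsig0.pow_const 2)).aestronglyMeasurable)
        (ae_of_all _ fun ω => ?_)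
      rw [Real.norm_eq_abs]
      by_cases hω : ω ∈ A k
      · rw [abs_mul]
        have hs2 : |sig ω ^ 2| ≤ (k:ℝ)^2 := by
          rw [abs_of_nonneg (sq_nonneg _), ← sq_abs]
          have := hω.2.2
          nlinarith [abs_nonneg (sig ω)]
        exact mul_le_mul (hG2_bdd ω) hs2 (abs_nonneg _) (by positivity)
      · rw [hG2_def, Set.indicator_of_notMem hω, zero_mul, abs_zero]; positivity
    -- T2 = 0
    have hT2 : ∫ ω in A k, lam ω * f ω / u ω ^ 2 ∂P = 0 := by
      have hind : (A k).indicator (fun ω => lam ω * f ω / u ω ^ 2) =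
          fun ω => G ω * f ω := by
        funext ω
        by_cases hω : ω ∈ A k
        · rw [Set.indicator_of_mem hω, hG_def, Set.indicator_of_mem hω]; ring
        · rw [Set.indicator_of_notMem hω, hG_def, Set.indicator_of_notMem hω, zero_mul]
      rw [← integral_indicator (hA k), hind]
      have hpull : P[fun ω => G ω * f ω|m] =ᵐ[P] fun ω => G ω * (P[f|m]) ω :=
        condExp_mul_of_stronglyMeasurable_left hG_sm hGf_int hf_int
      calc ∫ ω, G ω * f ω ∂P = ∫ ω, (P[fun ω => G ω * f ω|m]) ω ∂P :=
            (integral_condExp hm).symm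
        _ = ∫ ω, G ω * (P[f|m]) ω ∂P := integral_congr_ae hpull
        _ = 0 := by
            have hz : (fun ω => G ω * (P[f|m]) ω) =ᵐ[P] fun _ => (0:ℝ) := by
              filter_upwards [hf1] with ω hω
              rw [hω]; simp
            rw [integral_congr_ae hz, integral_zero]
    -- T3 bound
    have hT3 : ∫ ω in A k, (lam ω * f ω) ^ 2 / u ω ^ 2 ∂P ≤
        ∫ ω in A k, w ω / u ω ^ 2 ∂P := by
      have hind : (A k).indicator (fun ω => (lam ω * f ω) ^ 2 / u ω ^ 2) =
          fun ω => G2 ω * f ω ^ 2 := by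
        funext ω
        by_cases hω : ω ∈ A k
        · rw [Set.indicator_of_mem hω, hG2_def, Set.indicator_of_mem hω]; ring
        · rw [Set.indicator_of_notMem hω, hG2_def, Set.indicator_of_notMem hω, zero_mul]
      have hind2 : (A k).indicator (fun ω => w ω / u ω ^ 2) =
          fun ω => G2 ω * sig ω ^ 2 := by
        funext ω
        by_cases hω : ω ∈ A k
        · rw [Set.indicator_of_mem hω, hG2_def, Set.indicator_of_mem hω, hw_def]; ring
        · rw [Set.indicator_of_notMem hω, hG2_def, Set.indicator_of_notMem hω, zero_mul]
      rw [← integral_indicator (hA k), hind, ← integral_indicator (hA k), hind2]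
      have hpull2 : P[fun ω => G2 ω * f ω ^ 2|m] =ᵐ[P]
          fun ω => G2 ω * (P[fun ω' => f ω' ^ 2|m]) ω :=
        condExp_mul_of_stronglyMeasurable_left hG2_sm hG2f_int hf2_int
      calc ∫ ω, G2 ω * f ω ^ 2 ∂P
          = ∫ ω, (P[fun ω => G2 ω * f ω ^ 2|m]) ω ∂P := (integral_condExp hm).symm
        _ = ∫ ω, G2 ω * (P[fun ω' => f ω' ^ 2|m]) ω ∂P := integral_congr_ae hpull2
        _ ≤ ∫ ω, G2 ω * sig ω ^ 2 ∂P := by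
            refine integral_mono_ae (integrable_condExp.congr hpull2) hG2sig_int ?_
            filter_upwards [hf2] with ω hω
            exact mul_le_mul_of_nonneg_left hω (hG2_nonneg ω)
    -- integrability on A k
    have hR1 : IntegrableOn (fun ω => 1 / u ω) (A k) P := by
      refine Integrable.mono' (integrable_const 1)
        ((measurable_one.div hu0).aestronglyMeasurable.restrict) ?_
      rw [ae_restrict_iff' (hA k)]
      refine ae_of_all _ fun ω hω => ?_
      have h1 := hu1 ω hω
      rw [Real.norm_eq_abs, abs_of_nonneg (by positivity : (0:ℝ) ≤ 1 / u ω)]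
      rw [div_le_one (by linarith)]; linarith
    have hR2 : IntegrableOn (fun ω => lam ω * f ω / u ω ^ 2) (A k) P := by
      refine Integrable.mono' ((hf_int.abs.const_mul (k:ℝ)).restrict)
        (((hlam0.mul hf_meas).div (hu0.pow_const 2)).aestronglyMeasurable.restrict) ?_
      rw [ae_restrict_iff' (hA k)]
      refine ae_of_all _ fun ω hω => ?_
      have h1 := hu1 ω hω
      have hu2 : (1:ℝ) ≤ u ω ^ 2 := by nlinarith
      rw [Real.norm_eq_abs, abs_div, abs_of_nonneg (by positivity : (0:ℝ) ≤ u ω ^ 2),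
        abs_mul]
      calc |lam ω| * |f ω| / u ω ^ 2 ≤ |lam ω| * |f ω| :=
            div_le_self (by positivity) hu2
        _ ≤ (k:ℝ) * |f ω| := mul_le_mul_of_nonneg_right hω.2.1 (abs_nonneg _)
    have hR3 : IntegrableOn (fun ω => (lam ω * f ω) ^ 2 / u ω ^ 2) (A k) P := by
      refine Integrable.mono' ((hf2_int.const_mul ((k:ℝ)^2)).restrict)
        ((((hlam0.mul hf_meas).pow_const 2).div (hu0.pow_const 2)).aestronglyMeasurable.restrict) ?_
      rw [ae_restrict_iff' (hA k)]
      refine ae_of_all _ fun ω hω => ?_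
      have h1 := hu1 ω hω
      have hu2 : (1:ℝ) ≤ u ω ^ 2 := by nlinarith
      rw [Real.norm_eq_abs, abs_of_nonneg (by positivity : (0:ℝ) ≤ (lam ω * f ω) ^ 2 / u ω ^ 2)]
      calc (lam ω * f ω) ^ 2 / u ω ^ 2 ≤ (lam ω * f ω) ^ 2 :=
            div_le_self (by positivity) hu2
        _ = lam ω ^ 2 * f ω ^ 2 := by ring
        _ ≤ (k:ℝ)^2 * f ω ^ 2 := by
            have h2 := hω.2.1
            have hl2 : lam ω ^ 2 ≤ (k:ℝ)^2 := by nlinarith [sq_abs (lam ω), abs_nonneg (lam ω)]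
            exact mul_le_mul_of_nonneg_right hl2 (sq_nonneg _)
    have hRw : IntegrableOn (fun ω => w ω / u ω ^ 2) (A k) P := by
      refine Integrable.mono' (integrable_const 1)
        ((hw_m.mono hm le_rfl).div (hu0.pow_const 2)).aestronglyMeasurable.restrict ?_
      rw [ae_restrict_iff' (hA k)]
      refine ae_of_all _ fun ω hω => ?_
      have h1 := hu1 ω hω
      have h2 := huw ω hω
      have h3 := hw0 ω
      rw [Real.norm_eq_abs, abs_of_nonneg (by positivity : (0:ℝ) ≤ w ω / u ω ^ 2)]
      rw [div_le_one (by positivity)]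
      nlinarith
    -- pointwise bound on A k
    have hpt : ∀ ω ∈ A k, dsPhi (Cn ω) ≤
        1 / u ω + (lam ω * f ω / u ω ^ 2 + (lam ω * f ω) ^ 2 / u ω ^ 2) := by
      intro ω hω
      have hCneq : Cn ω = (c ω + w ω) - lam ω * f ω := by
        rw [hCn_def]
        simp only
        rw [if_neg (not_lt.mpr hω.1), hgnext ω, hw_def]
        ring
      rw [hCneq]
      have hx : 0 ≤ c ω + w ω := by
        have := hω.1; have := hw0 ω; linarith
      have hkey := dsPhi_key (d := lam ω * f ω) hx
      have huu : u ω = 1 + (c ω + w ω) := by rw [hu_def]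
      rw [← huu] at hkey
      calc dsPhi ((c ω + w ω) - lam ω * f ω)
          ≤ 1 / u ω + (lam ω * f ω + (lam ω * f ω) ^ 2) / u ω ^ 2 := hkey
        _ = 1 / u ω + (lam ω * f ω / u ω ^ 2 + (lam ω * f ω) ^ 2 / u ω ^ 2) := by
            rw [add_div]
    calc ∫ ω in A k, dsPhi (Cn ω) ∂P
        ≤ ∫ ω in A k, (1 / u ω + (lam ω * f ω / u ω ^ 2 + (lam ω * f ω) ^ 2 / u ω ^ 2)) ∂P := by
          exact setIntegral_mono_on hφCn_int.integrableOn (hR1.add (hR2.add hR3)) (hA k) hpt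
      _ = (∫ ω in A k, 1 / u ω ∂P) +
          ((∫ ω in A k, lam ω * f ω / u ω ^ 2 ∂P) + ∫ ω in A k, (lam ω * f ω) ^ 2 / u ω ^ 2 ∂P) := by
          have e1 : IntegrableOn
              (fun ω => lam ω * f ω / u ω ^ 2 + (lam ω * f ω) ^ 2 / u ω ^ 2) (A k) P :=
            hR2.add hR3
          rw [integral_add hR1 e1, integral_add hR2 hR3]
      _ ≤ (∫ ω in A k, 1 / u ω ∂P) + (0 + ∫ ω in A k, w ω / u ω ^ 2 ∂P) := by
          refine add_le_add_right (add_le_add (le_of_eq hT2) hT3) _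
      _ = ∫ ω in A k, (1 / u ω + w ω / u ω ^ 2) ∂P := by
          rw [zero_add, ← integral_add hR1 hRw]
      _ ≤ ∫ ω in A k, dsPhi (c ω) ∂P := by
          refine setIntegral_mono_on (hR1.add hRw) hφc_int.integrableOn (hA k) ?_
          intro ω hω
          rw [dsPhi_of_nonneg hω.1]
          have huu : u ω = 1 + (c ω + w ω) := by rw [hu_def]
          rw [huu]
          exact dsPhi_alg hω.1 (hw0 ω)
  -- combine over B and Bᶜ
  have h1 : ∫ ω in B, dsPhi (Cn ω) ∂P ≤ ∫ ω in B, dsPhi (c ω) ∂P := by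
    have t1 := tendsto_setIntegral_of_monotone hA hA_mono
      (hφCn_int.integrableOn : IntegrableOn _ (⋃ k, A k) P)
    have t2 := tendsto_setIntegral_of_monotone hA hA_mono
      (hφc_int.integrableOn : IntegrableOn _ (⋃ k, A k) P)
    rw [hA_union] at t1 t2
    exact le_of_tendsto_of_tendsto' t1 t2 key
  have h2 : ∫ ω in Bᶜ, dsPhi (Cn ω) ∂P = ∫ ω in Bᶜ, dsPhi (c ω) ∂P := by
    refine setIntegral_congr_fun hB.compl fun ω hω => ?_
    have hneg : c ω < 0 := not_le.mp hω
    rw [hCn_def]; simp only [if_pos hneg]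
  calc ∫ ω, dsPhi (Cn ω) ∂P
      = (∫ ω in B, dsPhi (Cn ω) ∂P) + ∫ ω in Bᶜ, dsPhi (Cn ω) ∂P :=
        (integral_add_compl hB hφCn_int).symm
    _ ≤ (∫ ω in B, dsPhi (c ω) ∂P) + ∫ ω in Bᶜ, dsPhi (c ω) ∂P :=
        add_le_add h1 (le_of_eq h2)
    _ = ∫ ω, dsPhi (c ω) ∂P := integral_add_compl hB hφc_int

lemma ds_chain {Ω : Type*} {mΩ : MeasurableSpace Ω} {P : Measure Ω} [IsProbabilityMeasure P]
    (ℱ : Filtration ℕ mΩ) (l s f : ℕ → Ω → ℝ) (a : ℝ) (ha : 0 ≤ a)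
    (hl_pred : ∀ t, 1 ≤ t → StronglyMeasurable[ℱ (t - 1)] (l t))
    (hs_pred : ∀ t, 1 ≤ t → StronglyMeasurable[ℱ (t - 1)] (s t))
    (hf_ad : ∀ t, 1 ≤ t → Measurable[ℱ t] (f t))
    (hf_int : ∀ t, 1 ≤ t → Integrable (f t) P)
    (hf2_int : ∀ t, 1 ≤ t → Integrable (fun ω => f t ω ^ 2) P)
    (hf1 : ∀ t, 1 ≤ t → P[f t|ℱ (t-1)] =ᵐ[P] fun _ => (0:ℝ))
    (hf2 : ∀ t, 1 ≤ t → ∀ᵐ ω ∂P, (P[fun ω' => f t ω' ^ 2|ℱ (t-1)]) ω ≤ s t ω ^ 2) :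
    ∀ t, P {ω | dsFrozen a (fun i ω => l i ω ^ 2 * s i ω ^ 2 - l i ω * f i ω) t ω < 0}
      ≤ ENNReal.ofReal (dsPhi a) := by
  set g : ℕ → Ω → ℝ := fun i ω => l i ω ^ 2 * s i ω ^ 2 - l i ω * f i ω with hg_def
  have hg_ad : ∀ i, 1 ≤ i → Measurable[ℱ i] (g i) := by
    intro i hi
    have hli : Measurable[ℱ i] (l i) :=
      ((hl_pred i hi).measurable).mono (ℱ.mono (Nat.sub_le i 1)) le_rfl
    have hsi : Measurable[ℱ i] (s i) :=
      ((hs_pred i hi).measurable).mono (ℱ.mono (Nat.sub_le i 1)) le_rfl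
    exact ((hli.pow_const 2).mul (hsi.pow_const 2)).sub (hli.mul (hf_ad i hi))
  have hC_ad : ∀ t, Measurable[ℱ t] (dsFrozen a g t) := dsFrozen_adapted ℱ hg_ad
  have hC_meas : ∀ t, Measurable[mΩ] (dsFrozen a g t) := fun t =>
    (hC_ad t).mono (ℱ.le t) le_rfl
  have hstep : ∀ t, ∫ ω, dsPhi (dsFrozen a g (t+1) ω) ∂P ≤
      ∫ ω, dsPhi (dsFrozen a g t ω) ∂P := by
    intro t
    have hmeq : t + 1 - 1 = t := Nat.add_sub_cancel _ _
    have h1t : 1 ≤ t + 1 := Nat.le_add_left 1 t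
    have hlm : Measurable[ℱ t] (l (t+1)) := by
      have := (hl_pred (t+1) h1t).measurable; rwa [hmeq] at this
    have hsm : Measurable[ℱ t] (s (t+1)) := by
      have := (hs_pred (t+1) h1t).measurable; rwa [hmeq] at this
    have hmean1 : P[f (t+1)|ℱ t] =ᵐ[P] fun _ => (0:ℝ) := by
      have := hf1 (t+1) h1t; rwa [hmeq] at this
    have hvar1 : ∀ᵐ ω ∂P, (P[fun ω' => f (t+1) ω' ^ 2|ℱ t]) ω ≤ s (t+1) ω ^ 2 := by
      have := hf2 (t+1) h1t; rwa [hmeq] at this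
    have h := ds_step (P := P) (ℱ.le t) (dsFrozen a g t) (l (t+1)) (s (t+1)) (f (t+1))
      (g (t+1)) (hC_ad t) hlm hsm
      ((hf_ad (t+1) h1t).mono (ℱ.le (t+1)) le_rfl)
      (hf_int (t+1) h1t) (hf2_int (t+1) h1t) hmean1 hvar1 (fun ω => rfl)
    exact h
  have hmono_int : ∀ t, ∫ ω, dsPhi (dsFrozen a g t ω) ∂P ≤ dsPhi a := by
    intro t
    induction t with
    | zero =>
      have he : (fun ω : Ω => dsPhi (dsFrozen a g 0 ω)) = fun _ => dsPhi a := rfl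
      rw [he, integral_const]
      simp
    | succ t ih => exact (hstep t).trans ih
  intro t
  have hsub : {ω | dsFrozen a g t ω < 0} ⊆ {ω | 1 ≤ dsPhi (dsFrozen a g t ω)} := by
    intro ω hω
    have h1 : dsPhi (dsFrozen a g t ω) = 1 := dsPhi_of_nonpos (le_of_lt hω)
    simp only [Set.mem_setOf_eq, h1, le_refl]
  have hmarkov := mul_meas_ge_le_integral_of_nonneg
    (ae_of_all P fun ω => dsPhi_nonneg (dsFrozen a g t ω))
    (integrable_dsPhi_comp P (hC_meas t)) 1
  rw [one_mul] at hmarkov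
  have h1 : (P {ω | dsFrozen a g t ω < 0}).toReal ≤ dsPhi a := by
    refine le_trans ?_ (le_trans hmarkov (hmono_int t))
    exact ENNReal.toReal_mono (measure_ne_top _ _) (measure_mono hsub)
  rw [ENNReal.le_ofReal_iff_toReal_le (measure_ne_top _ _) (dsPhi_nonneg a)]
  exact h1

/-- **Dubins–Savage confidence sequence for heteroscedastic data.** Under a constant
conditional mean `μ` and predictable conditional variance bounds `σ_t²`, with positive
predictable coefficients `l`, the intervals `CI_t^{DS'}` form a `(1-α)`-confidence
sequence for `μ`. -/
theorem dubins_savage_confidence_sequence_heteroscedastic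
    {Ω : Type*} {mΩ : MeasurableSpace Ω} {P : Measure Ω} [IsProbabilityMeasure P]
    (ℱ : Filtration ℕ mΩ) (X l s : ℕ → Ω → ℝ) (μ α : ℝ)
    (hα : α ∈ Set.Ioo (0 : ℝ) 1)
    (hX_adapted : StronglyAdapted ℱ X)
    (hX_sq : ∀ t, 1 ≤ t → MemLp (X t) 2 P)
    (hmean : ∀ t, 1 ≤ t → P[X t | ℱ (t - 1)] =ᵐ[P] fun _ => μ)
    (hs_pred : ∀ t, 1 ≤ t → StronglyMeasurable[ℱ (t - 1)] (s t))
    (hs_nonneg : ∀ t ω, 1 ≤ t → 0 ≤ s t ω)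
    (hvar : ∀ t, 1 ≤ t →
      ∀ᵐ ω ∂P, (P[fun ω' => (X t ω' - μ) ^ 2 | ℱ (t - 1)]) ω ≤ (s t ω) ^ 2)
    (hl_pred : ∀ t, 1 ≤ t → StronglyMeasurable[ℱ (t - 1)] (l t))
    (hl_pos : ∀ t ω, 1 ≤ t → 0 < l t ω) :
    ENNReal.ofReal (1 - α) ≤
      P {ω | ∀ t : ℕ, 1 ≤ t →
        μ ∈ Set.Icc
          ((∑ i ∈ Finset.Icc 1 t, l i ω * X i ω -
              (2 / α - 1 + ∑ i ∈ Finset.Icc 1 t, (l i ω) ^ 2 * (s i ω) ^ 2)) /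
            ∑ i ∈ Finset.Icc 1 t, l i ω)
          ((∑ i ∈ Finset.Icc 1 t, l i ω * X i ω +
              (2 / α - 1 + ∑ i ∈ Finset.Icc 1 t, (l i ω) ^ 2 * (s i ω) ^ 2)) /
            ∑ i ∈ Finset.Icc 1 t, l i ω)} := by
  obtain ⟨hα0, hα1⟩ := hα
  set a : ℝ := 2 / α - 1 with ha_def
  have ha_pos : 0 < a := by
    rw [ha_def, sub_pos, lt_div_iff₀ hα0]; linarith
  have hphia : dsPhi a = α / 2 := by
    rw [dsPhi_of_nonneg ha_pos.le, ha_def,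
      show (1:ℝ) + (2 / α - 1) = 2 / α by ring, one_div_div]
  -- the two drivers
  have hXint : ∀ i, 1 ≤ i → Integrable (X i) P := fun i hi =>
    (hX_sq i hi).integrable one_le_two
  have hfp_int : ∀ i, 1 ≤ i → Integrable (fun ω => X i ω - μ) P := fun i hi =>
    (hXint i hi).sub (integrable_const μ)
  have hfp2_int : ∀ i, 1 ≤ i → Integrable (fun ω => (X i ω - μ) ^ 2) P := fun i hi =>
    MemLp.integrable_sq ((hX_sq i hi).sub (memLp_const μ))
  have hfm_int : ∀ i, 1 ≤ i → Integrable (fun ω => μ - X i ω) P := fun i hi =>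
    (integrable_const μ).sub (hXint i hi)
  have hfm2_int : ∀ i, 1 ≤ i → Integrable (fun ω => (μ - X i ω) ^ 2) P := by
    intro i hi
    have he : (fun ω => (μ - X i ω) ^ 2) = fun ω => (X i ω - μ) ^ 2 := by
      funext ω; ring
    rw [he]; exact hfp2_int i hi
  have hfp1 : ∀ i, 1 ≤ i → P[fun ω => X i ω - μ|ℱ (i-1)] =ᵐ[P] fun _ => (0:ℝ) := by
    intro i hi
    have h1 := condExp_sub (μ := P) (m := ℱ (i-1)) (hXint i hi) (integrable_const μ)
    have h2 : (fun ω => X i ω - μ) = X i - fun _ => μ := rfl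
    rw [h2]
    refine h1.trans ?_
    rw [condExp_const (ℱ.le (i-1)) μ]
    filter_upwards [hmean i hi] with ω hω
    simp only [Pi.sub_apply, hω, sub_self]
  have hfm1 : ∀ i, 1 ≤ i → P[fun ω => μ - X i ω|ℱ (i-1)] =ᵐ[P] fun _ => (0:ℝ) := by
    intro i hi
    have h1 := condExp_sub (μ := P) (m := ℱ (i-1)) (integrable_const μ) (hXint i hi)
    have h2 : (fun ω => μ - X i ω) = (fun _ => μ) - X i := rfl
    rw [h2]
    refine h1.trans ?_
    rw [condExp_const (ℱ.le (i-1)) μ]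
    filter_upwards [hmean i hi] with ω hω
    simp only [Pi.sub_apply, hω, sub_self]
  have hfm2 : ∀ i, 1 ≤ i →
      ∀ᵐ ω ∂P, (P[fun ω' => (μ - X i ω') ^ 2|ℱ (i-1)]) ω ≤ s i ω ^ 2 := by
    intro i hi
    have he : (fun ω' => (μ - X i ω') ^ 2) = fun ω' => (X i ω' - μ) ^ 2 := by
      funext ω'; ring
    rw [he]; exact hvar i hi
  have hfp_ad : ∀ i, 1 ≤ i → Measurable[ℱ i] (fun ω => X i ω - μ) := fun i _ =>
    ((hX_adapted i).measurable).sub measurable_const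
  have hfm_ad : ∀ i, 1 ≤ i → Measurable[ℱ i] (fun ω => μ - X i ω) := fun i _ =>
    measurable_const.sub ((hX_adapted i).measurable)
  have hchainp := ds_chain ℱ l s (fun i ω => X i ω - μ) a ha_pos.le hl_pred hs_pred
    hfp_ad hfp_int hfp2_int hfp1 hvar
  have hchainm := ds_chain ℱ l s (fun i ω => μ - X i ω) a ha_pos.le hl_pred hs_pred
    hfm_ad hfm_int hfm2_int hfm1 hfm2
  set gp : ℕ → Ω → ℝ := fun i ω => l i ω ^ 2 * s i ω ^ 2 - l i ω * (X i ω - μ)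
    with hgp_def
  set gm : ℕ → Ω → ℝ := fun i ω => l i ω ^ 2 * s i ω ^ 2 - l i ω * (μ - X i ω)
    with hgm_def
  -- measurability of the frozen processes
  have hmeas_aux : ∀ (f : ℕ → Ω → ℝ), (∀ i, 1 ≤ i → Measurable[ℱ i] (f i)) →
      ∀ t, Measurable[mΩ]
        (dsFrozen a (fun i ω => l i ω ^ 2 * s i ω ^ 2 - l i ω * f i ω) t) := by
    intro f hf t
    refine (dsFrozen_adapted ℱ ?_ t).mono (ℱ.le t) le_rfl
    intro i hi
    have hli : Measurable[ℱ i] (l i) :=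
      ((hl_pred i hi).measurable).mono (ℱ.mono (Nat.sub_le i 1)) le_rfl
    have hsi : Measurable[ℱ i] (s i) :=
      ((hs_pred i hi).measurable).mono (ℱ.mono (Nat.sub_le i 1)) le_rfl
    exact ((hli.pow_const 2).mul (hsi.pow_const 2)).sub (hli.mul (hf i hi))
  have hCp_meas : ∀ t, Measurable[mΩ] (dsFrozen a gp t) :=
    hmeas_aux (fun i ω => X i ω - μ) hfp_ad
  have hCm_meas : ∀ t, Measurable[mΩ] (dsFrozen a gm t) :=
    hmeas_aux (fun i ω => μ - X i ω) hfm_ad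
  set D : ℕ → Set Ω := fun t =>
    {ω | dsFrozen a gp t ω < 0} ∪ {ω | dsFrozen a gm t ω < 0} with hD_def
  have hD_meas : ∀ t, MeasurableSet[mΩ] (D t) := fun t =>
    (measurableSet_lt (hCp_meas t) measurable_const).union
      (measurableSet_lt (hCm_meas t) measurable_const)
  have hD_mono : Monotone D := by
    refine monotone_nat_of_le_succ fun t => ?_
    intro ω hω
    rcases hω with hω | hω
    · exact Or.inl (dsFrozen_neg_mono hω)
    · exact Or.inr (dsFrozen_neg_mono hω)
  have hPD : ∀ t, P (D t) ≤ ENNReal.ofReal α := by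
    intro t
    calc P (D t) ≤ P {ω | dsFrozen a gp t ω < 0} + P {ω | dsFrozen a gm t ω < 0} :=
          measure_union_le _ _
      _ ≤ ENNReal.ofReal (dsPhi a) + ENNReal.ofReal (dsPhi a) :=
          add_le_add (hchainp t) (hchainm t)
      _ = ENNReal.ofReal α := by
          rw [hphia, ← ENNReal.ofReal_add (by linarith) (by linarith), add_halves]
  have hPUnion : P (⋃ t, D t) ≤ ENNReal.ofReal α := by
    rw [(hD_mono.directed_le).measure_iUnion]
    exact iSup_le hPD
  have hincl : (⋃ t, D t)ᶜ ⊆ {ω | ∀ t : ℕ, 1 ≤ t →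
      μ ∈ Set.Icc
        ((∑ i ∈ Finset.Icc 1 t, l i ω * X i ω -
            (a + ∑ i ∈ Finset.Icc 1 t, (l i ω) ^ 2 * (s i ω) ^ 2)) /
          ∑ i ∈ Finset.Icc 1 t, l i ω)
        ((∑ i ∈ Finset.Icc 1 t, l i ω * X i ω +
            (a + ∑ i ∈ Finset.Icc 1 t, (l i ω) ^ 2 * (s i ω) ^ 2)) /
          ∑ i ∈ Finset.Icc 1 t, l i ω)} := by
    intro ω hω
    simp only [Set.mem_compl_iff, Set.mem_iUnion, not_exists, hD_def, Set.mem_union,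
      Set.mem_setOf_eq, not_or, not_lt] at hω
    intro t ht
    obtain ⟨hp, hm⟩ := hω t
    have hps := dsFrozen_eq_sum hp
    have hms := dsFrozen_eq_sum hm
    have hsum : ∀ i ∈ Finset.Icc 1 t, l i ω * (X i ω - μ) = l i ω * X i ω - μ * l i ω :=
      fun i _ => by ring
    have hsum' : ∀ i ∈ Finset.Icc 1 t, l i ω * (μ - X i ω) = μ * l i ω - l i ω * X i ω :=
      fun i _ => by ring
    have hSp : ∑ i ∈ Finset.Icc 1 t, gp i ω =
        (∑ i ∈ Finset.Icc 1 t, (l i ω) ^ 2 * (s i ω) ^ 2) -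
          ((∑ i ∈ Finset.Icc 1 t, l i ω * X i ω) -
            μ * ∑ i ∈ Finset.Icc 1 t, l i ω) := by
      rw [hgp_def]
      simp only
      rw [Finset.sum_sub_distrib, Finset.sum_congr rfl hsum, Finset.sum_sub_distrib,
        Finset.mul_sum]
    have hSm : ∑ i ∈ Finset.Icc 1 t, gm i ω =
        (∑ i ∈ Finset.Icc 1 t, (l i ω) ^ 2 * (s i ω) ^ 2) -
          (μ * (∑ i ∈ Finset.Icc 1 t, l i ω) -
            ∑ i ∈ Finset.Icc 1 t, l i ω * X i ω) := by
      rw [hgm_def]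
      simp only
      rw [Finset.sum_sub_distrib, Finset.sum_congr rfl hsum', Finset.sum_sub_distrib,
        Finset.mul_sum]
    rw [hps, hSp] at hp
    rw [hms, hSm] at hm
    have hL : 0 < ∑ i ∈ Finset.Icc 1 t, l i ω := by
      refine Finset.sum_pos (fun i hi => hl_pos i ω (Finset.mem_Icc.mp hi).1) ?_
      exact ⟨1, Finset.mem_Icc.mpr ⟨le_refl 1, ht⟩⟩
    constructor
    · rw [div_le_iff₀ hL]; linarith
    · rw [le_div_iff₀ hL]; linarith
  calc ENNReal.ofReal (1 - α) = 1 - ENNReal.ofReal α := by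
        rw [ENNReal.ofReal_sub _ hα0.le, ENNReal.ofReal_one]
    _ ≤ 1 - P (⋃ t, D t) := tsub_le_tsub_left hPUnion 1
    _ = P ((⋃ t, D t)ᶜ) := (prob_compl_eq_one_sub (MeasurableSet.iUnion hD_meas)).symm
    _ ≤ _ := measure_mono hincl
end

section
/- Let {X_t}_{t∈ℕ⁺} be adapted to {F_t} with E[X_t | F_{t−1}] = μ for all t ∈ ℕ⁺ and E[(X_t − μ)² | F_{t−1}] ≤ σ_t² almost surely for all t, where {σ_t}_{t∈ℕ⁺} is a predictable nonnegative process, and let {λ_t}_{t∈ℕ⁺} be any predictable process. Define U_t^+ = (Σ_{i=1}^t λ_i² X_i)/3 − Σ_{i=1}^t λ_i and U_t^− = (Σ_{i=1}^t λ_i² X_i)/3 + Σ_{i=1}^t λ_i, let aCI_t^{SN+'} be the set of real m with (Σλ_i²/6)m² − U_t^+ m + ( log(2/α) − Σλ_i X_i + (Σλ_i² X_i² + 2Σλ_i²σ_i²)/6 ) < 0, and aCI_t^{SN−'} the set of real m with (Σλ_i²/6)m² − U_t^− m + ( log(2/α) + Σλ_i X_i + (Σλ_i² X_i² + 2Σλ_i²σ_i²)/6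 ) < 0 (sums over i = 1 to t). Then the sets CI_t^{SN'} = ℝ \ (aCI_t^{SN+'} ∪ aCI_t^{SN−'}) satisfy P(∀ t ∈ ℕ⁺, μ ∈ CI_t^{SN'}) ≥ 1 − α. -/
open MeasureTheory ProbabilityTheory Filter

lemma aux_hasDeriv (x : ℝ) : HasDerivAt (fun x : ℝ => (1 + x + x^2/3) * Real.exp (x^2/6 - x))
    ((x^3/9) * Real.exp (x^2/6 - x)) x := by
  have h1 : HasDerivAt (fun x : ℝ => 1 + x + x^2/3) (1 + 2*x/3) x := by
    have := ((hasDerivAt_id x).pow 2).div_const 3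
    have h := ((hasDerivAt_const x (1:ℝ)).add (hasDerivAt_id x)).add this
    refine h.congr_deriv ?_
    simp
  have h2 : HasDerivAt (fun x : ℝ => Real.exp (x^2/6 - x)) ((x/3 - 1) * Real.exp (x^2/6 - x)) x := by
    have hp : HasDerivAt (fun x : ℝ => x^2/6 - x) (x/3 - 1) x := by
      have := (((hasDerivAt_id x).pow 2).div_const 6).sub (hasDerivAt_id x)
      refine this.congr_deriv ?_
      simp; ring
    have := hp.exp
    convert this using 1; ring
  have := h1.mul h2
  refine this.congr_deriv ?_; ring

lemma aux_key_ineq (x : ℝ) : Real.exp (x - x^2/6) ≤ 1 + x + x^2/3 := by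
  set f : ℝ → ℝ := fun x => (1 + x + x^2/3) * Real.exp (x^2/6 - x) with hf
  have hf0 : f 0 = 1 := by simp [hf]
  have hcont : Continuous f :=
    ((continuous_const.add continuous_id).add ((continuous_pow 2).div_const 3)).mul
      (Real.continuous_exp.comp (((continuous_pow 2).div_const 6).sub continuous_id))
  have hfge : 1 ≤ f x := by
    rcases le_total 0 x with hx | hx
    · have hmono : MonotoneOn f (Set.Ici 0) := by
        refine monotoneOn_of_deriv_nonneg (convex_Ici 0) hcont.continuousOn ?_ ?_
        · intro y hy; exact (aux_hasDeriv y).differentiableAt.differentiableWithinAt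
        · intro y hy
          rw [(aux_hasDeriv y).deriv]
          have : (0:ℝ) ≤ y := le_of_lt (by simpa using hy)
          positivity
      have := hmono (Set.self_mem_Ici) (Set.mem_Ici.2 hx) hx
      rwa [hf0] at this
    · have hanti : AntitoneOn f (Set.Iic 0) := by
        refine antitoneOn_of_deriv_nonpos (convex_Iic 0) hcont.continuousOn ?_ ?_
        · intro y hy; exact (aux_hasDeriv y).differentiableAt.differentiableWithinAt
        · intro y hy
          rw [(aux_hasDeriv y).deriv]
          have hy' : y ≤ 0 := le_of_lt (by simpa using hy)
          exact mul_nonpos_iff.2 (Or.inr ⟨by nlinarith [sq_nonneg y], (Real.exp_pos _).le⟩)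
      have := hanti (Set.mem_Iic.2 hx) Set.self_mem_Iic hx
      rwa [hf0] at this
  have hE : Real.exp (x - x^2/6) * Real.exp (x^2/6 - x) = 1 := by
    rw [← Real.exp_add]; norm_num
  have h3 : Real.exp (x - x^2/6) * 1 ≤ Real.exp (x - x^2/6) * ((1+x+x^2/3) * Real.exp (x^2/6-x)) :=
    mul_le_mul_of_nonneg_left hfge (Real.exp_pos _).le
  have h4 : Real.exp (x - x^2/6) * ((1+x+x^2/3) * Real.exp (x^2/6-x))
      = (1+x+x^2/3) * (Real.exp (x - x^2/6) * Real.exp (x^2/6-x)) := by ring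
  rw [h4, hE, mul_one, mul_one] at h3
  exact h3

lemma aux_mset {Ω : Type*} {m : MeasurableSpace Ω} {lam s : Ω → ℝ}
    (hlam : Measurable[m] lam) (hs : Measurable[m] s) (n : ℕ) :
    MeasurableSet[m] {ω | |lam ω| < (n:ℝ) ∧ |s ω| < (n:ℝ)} :=
  (measurableSet_lt hlam.abs measurable_const).inter (measurableSet_lt hs.abs measurable_const)

lemma aux_condExp_le_one {Ω : Type*} {m : MeasurableSpace Ω} {mΩ : MeasurableSpace Ω}
    {P : Measure Ω} [IsProbabilityMeasure P] (hm : m ≤ mΩ)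
    {Y lam s : Ω → ℝ} (hY : MemLp Y 2 P)
    (hlam : StronglyMeasurable[m] lam) (hs : StronglyMeasurable[m] s)
    (hmean : P[Y|m] =ᵐ[P] fun _ => 0)
    (hvar : ∀ᵐ ω ∂P, (P[fun ω' => (Y ω')^2|m]) ω ≤ (s ω)^2) :
    P[fun ω => Real.exp (lam ω * Y ω - (lam ω)^2 * ((Y ω)^2 + 2*(s ω)^2)/6)|m]
      ≤ᵐ[P] fun _ => (1:ℝ) := by
  have hlamM : Measurable[m] lam := hlam.measurable
  have hsM : Measurable[m] s := hs.measurable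
  have hYae : AEMeasurable Y P := hY.aestronglyMeasurable.aemeasurable
  set G := fun ω => Real.exp (lam ω * Y ω - (lam ω)^2 * ((Y ω)^2 + 2*(s ω)^2)/6) with hG
  have hGbound : ∀ ω, ‖G ω‖ ≤ Real.exp (3/2) := by
    intro ω
    have h1 : lam ω * Y ω - (lam ω)^2 * ((Y ω)^2 + 2*(s ω)^2)/6 ≤ 3/2 := by
      nlinarith [sq_nonneg (lam ω * Y ω - 3), sq_nonneg (lam ω * s ω)]
    rw [Real.norm_eq_abs, abs_of_pos (Real.exp_pos _)]
    exact Real.exp_le_exp.2 h1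
  have hGaem : AEMeasurable G P := by
    refine Real.measurable_exp.comp_aemeasurable ?_
    exact ((hlam.mono hm).measurable.aemeasurable.mul hYae).sub
      (((((hlam.mono hm).measurable.pow_const 2).aemeasurable.mul
        ((hYae.pow_const 2).add
          (aemeasurable_const.mul (((hs.mono hm).measurable.pow_const 2).aemeasurable)))).div_const 6))
  have hGint : Integrable G P :=
    Integrable.mono' (integrable_const (Real.exp (3/2))) hGaem.aestronglyMeasurable
      (Filter.Eventually.of_forall hGbound)
  have hYint : Integrable Y P := hY.integrable one_le_two
  set Q2 := fun ω => (Y ω)^2 with hQ2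
  have hY2int : Integrable Q2 P := hY.integrable_sq
  have key : ∀ n : ℕ, ∀ᵐ ω ∂P, (|lam ω| < n ∧ |s ω| < n) → (P[G|m]) ω ≤ 1 := by
    intro n
    set D : Set Ω := {ω | |lam ω| < n ∧ |s ω| < n} with hD
    have hDm : MeasurableSet[m] D := aux_mset hlamM hsM n
    set e2 := fun ω => Real.exp (-((lam ω)^2 * (s ω)^2/3)) with he2
    have he2m : StronglyMeasurable[m] e2 :=
      (Real.measurable_exp.comp ((((hlamM.pow_const 2).mul (hsM.pow_const 2)).div_const 3).neg)).stronglyMeasurable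
    have he2pos : ∀ ω, 0 < e2 ω := fun ω => Real.exp_pos _
    have he2le1 : ∀ ω, e2 ω ≤ 1 := by
      intro ω
      calc e2 ω ≤ Real.exp 0 := Real.exp_le_exp.2 (neg_nonpos.2 (by positivity))
        _ = 1 := Real.exp_zero
    set A := D.indicator e2 with hA
    set B1 := D.indicator (fun ω => lam ω * e2 ω) with hB1
    set B2 := D.indicator (fun ω => (lam ω)^2/3 * e2 ω) with hB2
    have hAsm : StronglyMeasurable[m] A := he2m.indicator hDm
    have hB1sm : StronglyMeasurable[m] B1 :=
      (((hlamM.mul he2m.measurable)).stronglyMeasurable).indicator hDm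
    have hB2sm : StronglyMeasurable[m] B2 :=
      ((((hlamM.pow_const 2).div_const 3).mul he2m.measurable).stronglyMeasurable).indicator hDm
    have hB1bd : ∀ ω, ‖B1 ω‖ ≤ n := by
      intro ω
      rw [Real.norm_eq_abs, hB1]
      by_cases hω : ω ∈ D
      · rw [Set.indicator_of_mem hω, abs_mul, abs_of_pos (he2pos ω)]
        have h1 : |lam ω| ≤ n := le_of_lt hω.1
        nlinarith [abs_nonneg (lam ω), he2pos ω, he2le1 ω]
      · rw [Set.indicator_of_notMem hω]; simp
    have hB2bd : ∀ ω, ‖B2 ω‖ ≤ (n:ℝ)^2/3 := by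
      intro ω
      rw [Real.norm_eq_abs, hB2]
      by_cases hω : ω ∈ D
      · rw [Set.indicator_of_mem hω, abs_mul, abs_of_pos (he2pos ω),
          abs_div, abs_of_nonneg (sq_nonneg (lam ω))]
        have h1 : |lam ω| ≤ n := le_of_lt hω.1
        have h2 : (lam ω)^2 ≤ (n:ℝ)^2 := by
          rw [← sq_abs]; exact pow_le_pow_left₀ (abs_nonneg _) h1 2
        have := he2le1 ω; have := he2pos ω
        rw [abs_of_nonneg (by norm_num : (0:ℝ) ≤ 3)]
        nlinarith
      · rw [Set.indicator_of_notMem hω, abs_zero]; positivity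
    have hAbd : ∀ ω, ‖A ω‖ ≤ 1 := by
      intro ω
      rw [Real.norm_eq_abs, hA]
      by_cases hω : ω ∈ D
      · rw [Set.indicator_of_mem hω, abs_of_pos (he2pos ω)]; exact he2le1 ω
      · rw [Set.indicator_of_notMem hω]; simp
    set H := fun ω => (1 + lam ω * Y ω + (lam ω * Y ω)^2/3) * e2 ω with hH
    have hADD : D.indicator H = A + B1 * Y + B2 * Q2 := by
      funext ω
      simp only [Pi.add_apply, Pi.mul_apply, hA, hB1, hB2, hQ2]
      by_cases hω : ω ∈ D
      · simp only [Set.indicator_of_mem hω, hH]; ring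
      · simp only [Set.indicator_of_notMem hω]; ring
    have hB1Y : Integrable (B1 * Y) P :=
      hYint.bdd_mul (hB1sm.mono hm).aestronglyMeasurable (Filter.Eventually.of_forall hB1bd)
    have hB2Q2 : Integrable (B2 * Q2) P :=
      hY2int.bdd_mul (hB2sm.mono hm).aestronglyMeasurable (Filter.Eventually.of_forall hB2bd)
    have hAint : Integrable A P :=
      Integrable.mono' (integrable_const 1) (hAsm.mono hm).aestronglyMeasurable
        (Filter.Eventually.of_forall hAbd)
    have hHind_int : Integrable (D.indicator H) P := by
      rw [hADD]; exact (hAint.add hB1Y).add hB2Q2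
    have hDM : MeasurableSet D := hm _ hDm
    have hGind_int : Integrable (D.indicator G) P := hGint.indicator hDM
    have hGH : ∀ ω, G ω ≤ H ω := by
      intro ω
      have hx := aux_key_ineq (lam ω * Y ω)
      have hsplit : G ω = Real.exp (lam ω * Y ω - (lam ω * Y ω)^2/6) * e2 ω := by
        rw [hG, he2]
        simp only []
        rw [← Real.exp_add]
        congr 1
        ring
      rw [hsplit, hH]
      exact mul_le_mul_of_nonneg_right hx (he2pos ω).le
    have hindGH : D.indicator G ≤ᵐ[P] D.indicator H :=
      Filter.Eventually.of_forall fun ω => Set.indicator_le_indicator (hGH ω)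
    have h1 : P[D.indicator G|m] ≤ᵐ[P] P[D.indicator H|m] :=
      condExp_mono hGind_int hHind_int hindGH
    have h2 : P[D.indicator H|m] =ᵐ[P]
        fun ω => A ω + B1 ω * (P[Y|m]) ω + B2 ω * (P[Q2|m]) ω := by
      rw [hADD]
      calc P[A + B1 * Y + B2 * Q2|m]
          =ᵐ[P] P[A + B1 * Y|m] + P[B2 * Q2|m] := condExp_add (hAint.add hB1Y) hB2Q2 m
        _ =ᵐ[P] (P[A|m] + P[B1 * Y|m]) + P[B2 * Q2|m] :=
            (condExp_add hAint hB1Y m).add (Filter.EventuallyEq.refl _ _)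
        _ =ᵐ[P] (A + B1 * P[Y|m]) + B2 * P[Q2|m] := by
            refine Filter.EventuallyEq.add (Filter.EventuallyEq.add ?_ ?_) ?_
            · exact Filter.EventuallyEq.of_eq (condExp_of_stronglyMeasurable hm hAsm hAint)
            · exact condExp_mul_of_stronglyMeasurable_left hB1sm hB1Y hYint
            · exact condExp_mul_of_stronglyMeasurable_left hB2sm hB2Q2 hY2int
        _ = fun ω => A ω + B1 ω * (P[Y|m]) ω + B2 ω * (P[Q2|m]) ω := rfl
    have h3 := condExp_indicator hGint hDm
    filter_upwards [h1, h2, h3, hmean, hvar] with ω H1 H2 H3 Hmean Hvar hωD0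
    have hωD : ω ∈ D := hωD0
    have hAval : A ω = e2 ω := by rw [hA, Set.indicator_of_mem hωD]
    have hB2val : B2 ω = (lam ω)^2/3 * e2 ω := by rw [hB2, Set.indicator_of_mem hωD]
    have hB2nn : 0 ≤ B2 ω := by rw [hB2val]; positivity
    have step1 : (P[G|m]) ω = (P[D.indicator G|m]) ω := by
      rw [H3, Set.indicator_of_mem hωD]
    have step2 : (P[D.indicator G|m]) ω ≤ A ω + B1 ω * (P[Y|m]) ω + B2 ω * (P[Q2|m]) ω := by
      rw [← H2]; exact H1
    have hm0 : (P[Y|m]) ω = 0 := Hmean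
    have hvv : (P[Q2|m]) ω ≤ (s ω)^2 := Hvar
    have step3 : A ω + B1 ω * (P[Y|m]) ω + B2 ω * (P[Q2|m]) ω ≤ e2 ω * (1 + (lam ω)^2 * (s ω)^2/3) := by
      rw [hm0, hAval, hB2val, mul_zero, add_zero]
      have := mul_le_mul_of_nonneg_left hvv (by positivity : (0:ℝ) ≤ (lam ω)^2/3 * e2 ω)
      nlinarith [he2pos ω]
    have hprod : e2 ω * Real.exp ((lam ω)^2 * (s ω)^2/3) = 1 := by
      rw [he2]; simp only []
      rw [← Real.exp_add]; norm_num
    have step4 : e2 ω * (1 + (lam ω)^2 * (s ω)^2/3) ≤ 1 := by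
      have h14 := Real.add_one_le_exp ((lam ω)^2 * (s ω)^2/3)
      nlinarith [mul_le_mul_of_nonneg_left h14 (he2pos ω).le, hprod]
    calc (P[G|m]) ω = (P[D.indicator G|m]) ω := step1
      _ ≤ _ := step2
      _ ≤ _ := step3
      _ ≤ 1 := step4
  filter_upwards [ae_all_iff.2 key] with ω hω
  obtain ⟨n, hn⟩ := exists_nat_gt (max |lam ω| |s ω|)
  exact hω n ⟨(le_max_left _ _).trans_lt hn, (le_max_right _ _).trans_lt hn⟩

lemma aux_ville {Ω : Type*} {m : MeasurableSpace Ω} {P : Measure Ω} [IsProbabilityMeasure P]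
    (ℱ : Filtration ℕ m) {M : ℕ → Ω → ℝ} (hM : Supermartingale M ℱ P)
    (hpos : ∀ t ω, 0 ≤ M t ω) (h0 : ∀ ω, M 0 ω ≤ 1) {c : ℝ} (hc : 0 < c) :
    P {ω | ∃ t, c ≤ M t ω} ≤ ENNReal.ofReal (1/c) := by
  set E : ℕ → Set Ω := fun n => {ω | ∃ k ≤ n, c ≤ M k ω} with hE
  have hEmeas : ∀ n, MeasurableSet (E n) := by
    intro n
    have : E n = ⋃ k ∈ Finset.range (n+1), {ω | c ≤ M k ω} := by
      ext ω; simp [hE, Nat.lt_succ_iff]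
    rw [this]
    exact Finset.measurableSet_biUnion _ fun k _ =>
      measurableSet_le measurable_const ((hM.stronglyMeasurable k).mono (ℱ.le k)).measurable
  have hunion : {ω | ∃ t, c ≤ M t ω} = ⋃ n, E n := by
    ext ω
    simp only [Set.mem_setOf_eq, Set.mem_iUnion, hE]
    exact ⟨fun ⟨t, ht⟩ => ⟨t, t, le_refl t, ht⟩, fun ⟨n, k, _, hk⟩ => ⟨k, hk⟩⟩
  have hmono : Monotone E := by
    intro a b hab ω ⟨k, hk, hck⟩; exact ⟨k, hk.trans hab, hck⟩
  rw [hunion, hmono.measure_iUnion]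
  refine iSup_le fun n => ?_
  set τ : Ω → WithTop ℕ := fun ω => ((hittingBtwn M (Set.Ici c) 0 n ω : ℕ) : WithTop ℕ) with hτdef
  have hτ : IsStoppingTime ℱ τ := hM.1.adapted.isStoppingTime_hittingBtwn measurableSet_Ici
  have hτ_le : ∀ ω, τ ω ≤ n := fun ω =>
    WithTop.coe_le_coe.2 (hittingBtwn_le (u := M) (s := Set.Ici c) (n := 0) (m := n) ω)
  have hint : Integrable (stoppedValue M τ) P :=
    integrable_stoppedValue ℕ hτ (fun i => hM.integrable i) hτ_le
  have hexp : ∫ ω, stoppedValue M τ ω ∂P ≤ 1 := by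
    have h1 := hM.neg.expected_stoppedValue_mono (isStoppingTime_const ℱ 0) hτ
      (fun ω => WithTop.coe_le_coe.2 (Nat.zero_le _)) hτ_le
    replace h1 : ∫ ω, -M 0 ω ∂P ≤ ∫ ω, -stoppedValue M τ ω ∂P := h1
    rw [integral_neg, integral_neg] at h1
    have h2 : ∫ ω, stoppedValue M τ ω ∂P ≤ ∫ ω, M 0 ω ∂P := by linarith
    have h3 : ∫ ω, M 0 ω ∂P ≤ 1 := by
      calc ∫ ω, M 0 ω ∂P ≤ ∫ _, (1:ℝ) ∂P := integral_mono (hM.integrable 0) (integrable_const 1) h0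
        _ = 1 := by simp
    exact h2.trans h3
  have hlow : c * (P (E n)).toReal ≤ ∫ ω in E n, stoppedValue M τ ω ∂P := by
    refine (le_of_eq ?_).trans
      (setIntegral_ge_of_const_le (c := c) (hEmeas n) (measure_ne_top P _) ?_ hint.integrableOn)
    · rw [smul_eq_mul, mul_comm]; rfl
    rintro ω ⟨k, hk, hck⟩
    exact stoppedValue_hittingBtwn_mem ⟨k, ⟨Nat.zero_le _, hk⟩, hck⟩
  have hup : ∫ ω in E n, stoppedValue M τ ω ∂P ≤ ∫ ω, stoppedValue M τ ω ∂P :=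
    setIntegral_le_integral hint (Filter.Eventually.of_forall fun ω => hpos _ _)
  have htoReal : (P (E n)).toReal ≤ 1/c := by
    rw [le_div_iff₀ hc, mul_comm]; linarith
  calc P (E n) = ENNReal.ofReal (P (E n)).toReal := (ENNReal.ofReal_toReal (measure_ne_top _ _)).symm
    _ ≤ ENNReal.ofReal (1/c) := ENNReal.ofReal_le_ofReal htoReal

lemma aux_supermart {Ω : Type*} {mΩ : MeasurableSpace Ω} {P : Measure Ω} [IsProbabilityMeasure P]
    (ℱ : Filtration ℕ mΩ) (X lam s : ℕ → Ω → ℝ) (μ : ℝ)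
    (hX_adapted : StronglyAdapted ℱ X)
    (hX_sq : ∀ t, 1 ≤ t → MemLp (X t) 2 P)
    (hmean : ∀ t, 1 ≤ t → P[X t | ℱ (t - 1)] =ᵐ[P] fun _ => μ)
    (hs_pred : ∀ t, 1 ≤ t → StronglyMeasurable[ℱ (t - 1)] (s t))
    (hvar : ∀ t, 1 ≤ t →
      ∀ᵐ ω ∂P, (P[fun ω' => (X t ω' - μ) ^ 2 | ℱ (t - 1)]) ω ≤ (s t ω) ^ 2)
    (hlam_pred : ∀ t, 1 ≤ t → StronglyMeasurable[ℱ (t - 1)] (lam t)) :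
    Supermartingale (fun t ω => Real.exp (∑ i ∈ Finset.Icc 1 t,
      (lam i ω * (X i ω - μ) - (lam i ω)^2 * ((X i ω - μ)^2 + 2*(s i ω)^2)/6))) ℱ P := by
  set g : ℕ → Ω → ℝ := fun i ω =>
    lam i ω * (X i ω - μ) - (lam i ω)^2 * ((X i ω - μ)^2 + 2*(s i ω)^2)/6 with hgdef
  set M : ℕ → Ω → ℝ := fun t ω => Real.exp (∑ i ∈ Finset.Icc 1 t, g i ω) with hMdef
  have hg_meas : ∀ i t, 1 ≤ i → i ≤ t → StronglyMeasurable[ℱ t] (g i) := by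
    intro i t hi hit
    have hli : Measurable[ℱ t] (lam i) :=
      (((hlam_pred i hi).mono (ℱ.mono ((Nat.sub_le i 1).trans hit)))).measurable
    have hsi : Measurable[ℱ t] (s i) :=
      (((hs_pred i hi).mono (ℱ.mono ((Nat.sub_le i 1).trans hit)))).measurable
    have hXi : Measurable[ℱ t] (X i) := ((hX_adapted i).mono (ℱ.mono hit)).measurable
    exact ((hli.mul (hXi.sub measurable_const)).sub
      ((((hli.pow_const 2).mul
        ((((hXi.sub measurable_const).pow_const 2)).add
          (measurable_const.mul (hsi.pow_const 2))))).div_const 6)).stronglyMeasurable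
  have hM_adapted : StronglyAdapted ℱ M := by
    intro t
    refine (Real.measurable_exp.comp (Finset.measurable_sum _ fun i hi => ?_)).stronglyMeasurable
    exact (hg_meas i t (Finset.mem_Icc.1 hi).1 (Finset.mem_Icc.1 hi).2).measurable
  have hg_le : ∀ i ω, g i ω ≤ 3/2 := by
    intro i ω
    simp only [hgdef]
    nlinarith [sq_nonneg (lam i ω * (X i ω - μ) - 3), sq_nonneg (lam i ω * s i ω)]
  have hM_pos : ∀ t ω, 0 < M t ω := fun t ω => Real.exp_pos _
  have hM_bound : ∀ t ω, ‖M t ω‖ ≤ Real.exp (3/2 * t) := by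
    intro t ω
    rw [Real.norm_eq_abs, abs_of_pos (hM_pos t ω)]
    refine Real.exp_le_exp.2 ?_
    calc ∑ i ∈ Finset.Icc 1 t, g i ω ≤ ∑ _i ∈ Finset.Icc 1 t, (3/2 : ℝ) :=
          Finset.sum_le_sum fun i _ => hg_le i ω
      _ = (t : ℝ) * (3/2) := by
          rw [Finset.sum_const, Nat.card_Icc]; simp
      _ = 3/2 * t := by ring
  have hM_int : ∀ t, Integrable (M t) P := fun t =>
    Integrable.mono' (integrable_const _) ((hM_adapted t).mono (ℱ.le t)).aestronglyMeasurable
      (Filter.Eventually.of_forall (hM_bound t))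
  refine supermartingale_nat hM_adapted hM_int fun t => ?_
  set G : Ω → ℝ := fun ω => Real.exp (g (t+1) ω) with hGdef
  have hsplit : M (t+1) = fun ω => M t ω * G ω := by
    funext ω
    simp only [hMdef, hGdef]
    rw [Finset.sum_Icc_succ_top (by omega : 1 ≤ t + 1), Real.exp_add]
  have ht1 : 1 ≤ t + 1 := by omega
  have hlam1 : StronglyMeasurable[ℱ t] (lam (t+1)) := by
    have h := hlam_pred (t+1) ht1; simpa using h
  have hs1 : StronglyMeasurable[ℱ t] (s (t+1)) := by
    have h := hs_pred (t+1) ht1; simpa using h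
  have hY : MemLp (fun ω => X (t+1) ω - μ) 2 P := (hX_sq (t+1) ht1).sub (memLp_const μ)
  have hXint : Integrable (X (t+1)) P := (hX_sq (t+1) ht1).integrable one_le_two
  have hmean' : P[(fun ω => X (t+1) ω - μ)|ℱ t] =ᵐ[P] fun _ => (0:ℝ) := by
    have h1 := hmean (t+1) ht1
    simp only [Nat.add_sub_cancel] at h1
    have h2 : P[(fun ω => X (t+1) ω - μ)|ℱ t]
        =ᵐ[P] P[X (t+1)|ℱ t] - P[(fun _ => μ : Ω → ℝ)|ℱ t] :=
      condExp_sub hXint (integrable_const μ) (ℱ t)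
    rw [condExp_const (ℱ.le t)] at h2
    refine h2.trans ?_
    filter_upwards [h1] with ω hω
    simp [hω]
  have hvar' : ∀ᵐ ω ∂P, (P[fun ω' => (X (t+1) ω' - μ)^2|ℱ t]) ω ≤ (s (t+1) ω)^2 := by
    have h := hvar (t+1) ht1; simpa using h
  have key : P[G|ℱ t] ≤ᵐ[P] fun _ => (1:ℝ) := by
    have h := aux_condExp_le_one (ℱ.le t) hY hlam1 hs1 hmean' hvar'
    exact h
  have hGbound : ∀ ω, ‖G ω‖ ≤ Real.exp (3/2) := by
    intro ω
    rw [Real.norm_eq_abs, abs_of_pos (Real.exp_pos _)]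
    exact Real.exp_le_exp.2 (hg_le (t+1) ω)
  have hGint : Integrable G P :=
    Integrable.mono' (integrable_const _)
      (((Real.measurable_exp.comp (hg_meas (t+1) (t+1) ht1 le_rfl).measurable).stronglyMeasurable.mono
        (ℱ.le (t+1))).aestronglyMeasurable)
      (Filter.Eventually.of_forall hGbound)
  have hMG_int : Integrable (M t * G) P := by
    have := hM_int (t+1)
    rw [hsplit] at this
    exact this
  have hprod : P[M t * G|ℱ t] =ᵐ[P] M t * P[G|ℱ t] :=
    condExp_mul_of_stronglyMeasurable_left (hM_adapted t) hMG_int hGint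
  rw [hsplit]
  have hle : M t * P[G|ℱ t] ≤ᵐ[P] M t := by
    filter_upwards [key] with ω hk
    have := mul_le_mul_of_nonneg_left hk (hM_pos t ω).le
    simpa using this
  exact hprod.le.trans hle

lemma aux_sum_identity (t : ℕ) (a b c : ℕ → ℝ) (μ : ℝ) :
    ∑ i ∈ Finset.Icc 1 t, (a i * (b i - μ) - (a i)^2*((b i - μ)^2 + 2*(c i)^2)/6)
      = (∑ i ∈ Finset.Icc 1 t, a i * b i) - μ * (∑ i ∈ Finset.Icc 1 t, a i)
        - ((∑ i ∈ Finset.Icc 1 t, (a i)^2*(b i)^2) - 2*μ*(∑ i ∈ Finset.Icc 1 t, (a i)^2 * b i)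
           + μ^2*(∑ i ∈ Finset.Icc 1 t, (a i)^2) + 2*(∑ i ∈ Finset.Icc 1 t, (a i)^2*(c i)^2))/6 := by
  induction t with
  | zero => simp
  | succ n ih =>
      simp only [Finset.sum_Icc_succ_top (show 1 ≤ n+1 by omega)]
      linear_combination ih

lemma aux_sum_identity_neg (t : ℕ) (a b c : ℕ → ℝ) (μ : ℝ) :
    ∑ i ∈ Finset.Icc 1 t, ((-(a i)) * (b i - μ) - (-(a i))^2*((b i - μ)^2 + 2*(c i)^2)/6)
      = -(∑ i ∈ Finset.Icc 1 t, a i * b i) + μ * (∑ i ∈ Finset.Icc 1 t, a i)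
        - ((∑ i ∈ Finset.Icc 1 t, (a i)^2*(b i)^2) - 2*μ*(∑ i ∈ Finset.Icc 1 t, (a i)^2 * b i)
           + μ^2*(∑ i ∈ Finset.Icc 1 t, (a i)^2) + 2*(∑ i ∈ Finset.Icc 1 t, (a i)^2*(c i)^2))/6 := by
  induction t with
  | zero => simp
  | succ n ih =>
      simp only [Finset.sum_Icc_succ_top (show 1 ≤ n+1 by omega)]
      linear_combination ih

/-- **Self-normalized confidence sequence for heteroscedastic data.** With predictable
conditional variance bounds `σ_t²` and the correspondingly modified anticonfidence sets
`aCI_t^{SN±'}`, the sets `CI_t^{SN'} = ℝ \ (aCI_t^{SN+'} ∪ aCI_t^{SN−'})` form a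
`(1-α)`-confidence sequence for `μ`. -/
theorem self_normalized_confidence_sequence_heteroscedastic
    {Ω : Type*} {mΩ : MeasurableSpace Ω} {P : Measure Ω} [IsProbabilityMeasure P]
    (ℱ : Filtration ℕ mΩ) (X l s : ℕ → Ω → ℝ) (μ α : ℝ)
    (hα : α ∈ Set.Ioo (0 : ℝ) 1)
    (hX_adapted : StronglyAdapted ℱ X)
    (hX_sq : ∀ t, 1 ≤ t → MemLp (X t) 2 P)
    (hmean : ∀ t, 1 ≤ t → P[X t | ℱ (t - 1)] =ᵐ[P] fun _ => μ)
    (hs_pred : ∀ t, 1 ≤ t → StronglyMeasurable[ℱ (t - 1)] (s t))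
    (hs_nonneg : ∀ t ω, 1 ≤ t → 0 ≤ s t ω)
    (hvar : ∀ t, 1 ≤ t →
      ∀ᵐ ω ∂P, (P[fun ω' => (X t ω' - μ) ^ 2 | ℱ (t - 1)]) ω ≤ (s t ω) ^ 2)
    (hl_pred : ∀ t, 1 ≤ t → StronglyMeasurable[ℱ (t - 1)] (l t))
    (aCIp aCIm CI : ℕ → Ω → Set ℝ)
    (haCIp : ∀ t ω, aCIp t ω = {m : ℝ |
      (∑ i ∈ Finset.Icc 1 t, (l i ω) ^ 2) / 6 * m ^ 2 -
        ((∑ i ∈ Finset.Icc 1 t, (l i ω) ^ 2 * X i ω) / 3 -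
          ∑ i ∈ Finset.Icc 1 t, l i ω) * m +
        (Real.log (2 / α) - ∑ i ∈ Finset.Icc 1 t, l i ω * X i ω +
          (∑ i ∈ Finset.Icc 1 t, (l i ω) ^ 2 * (X i ω) ^ 2 +
            2 * ∑ i ∈ Finset.Icc 1 t, (l i ω) ^ 2 * (s i ω) ^ 2) / 6) < 0})
    (haCIm : ∀ t ω, aCIm t ω = {m : ℝ |
      (∑ i ∈ Finset.Icc 1 t, (l i ω) ^ 2) / 6 * m ^ 2 -
        ((∑ i ∈ Finset.Icc 1 t, (l i ω) ^ 2 * X i ω) / 3 +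
          ∑ i ∈ Finset.Icc 1 t, l i ω) * m +
        (Real.log (2 / α) + ∑ i ∈ Finset.Icc 1 t, l i ω * X i ω +
          (∑ i ∈ Finset.Icc 1 t, (l i ω) ^ 2 * (X i ω) ^ 2 +
            2 * ∑ i ∈ Finset.Icc 1 t, (l i ω) ^ 2 * (s i ω) ^ 2) / 6) < 0})
    (hCI : ∀ t ω, CI t ω = Set.univ \ (aCIp t ω ∪ aCIm t ω)) :
    ENNReal.ofReal (1 - α) ≤ P {ω | ∀ t : ℕ, 1 ≤ t → μ ∈ CI t ω} := by
  obtain ⟨hα0, hα1⟩ := hα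
  have hc : (0:ℝ) < 2/α := by positivity
  set Mp : ℕ → Ω → ℝ := fun t ω => Real.exp (∑ i ∈ Finset.Icc 1 t,
      (l i ω * (X i ω - μ) - (l i ω)^2 * ((X i ω - μ)^2 + 2*(s i ω)^2)/6)) with hMp
  set Mm : ℕ → Ω → ℝ := fun t ω => Real.exp (∑ i ∈ Finset.Icc 1 t,
      ((-(l i ω)) * (X i ω - μ) - (-(l i ω))^2 * ((X i ω - μ)^2 + 2*(s i ω)^2)/6)) with hMm
  have hMp_super : Supermartingale Mp ℱ P :=
    aux_supermart ℱ X l s μ hX_adapted hX_sq hmean hs_pred hvar hl_pred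
  have hMm_super : Supermartingale Mm ℱ P :=
    aux_supermart ℱ X (fun i ω => -(l i ω)) s μ hX_adapted hX_sq hmean hs_pred hvar
      (fun t ht => (hl_pred t ht).neg)
  have hBp : P {ω | ∃ t, 2/α ≤ Mp t ω} ≤ ENNReal.ofReal (α/2) := by
    have h := aux_ville ℱ hMp_super (fun t ω => (Real.exp_pos _).le)
      (fun ω => by simp [hMp]) hc
    rwa [one_div_div] at h
  have hBm : P {ω | ∃ t, 2/α ≤ Mm t ω} ≤ ENNReal.ofReal (α/2) := by
    have h := aux_ville ℱ hMm_super (fun t ω => (Real.exp_pos _).le)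
      (fun ω => by simp [hMm]) hc
    rwa [one_div_div] at h
  set S := {ω | ∀ t : ℕ, 1 ≤ t → μ ∈ CI t ω} with hS
  have hsub : Sᶜ ⊆ {ω | ∃ t, 2/α ≤ Mp t ω} ∪ {ω | ∃ t, 2/α ≤ Mm t ω} := by
    intro ω hω
    simp only [hS, Set.mem_compl_iff, Set.mem_setOf_eq, not_forall] at hω
    obtain ⟨t, ht1, hnot⟩ := hω
    rw [hCI t ω] at hnot
    have hmem : μ ∈ aCIp t ω ∪ aCIm t ω := by
      by_contra h
      exact hnot ⟨Set.mem_univ μ, h⟩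
    have hexplog : Real.exp (Real.log (2/α)) = 2/α := Real.exp_log hc
    cases hmem with
    | inl h =>
      left
      rw [haCIp t ω] at h
      simp only [Set.mem_setOf_eq] at h
      refine ⟨t, ?_⟩
      rw [hMp, ← hexplog]
      refine Real.exp_le_exp.2 ?_
      rw [aux_sum_identity t (fun i => l i ω) (fun i => X i ω) (fun i => s i ω) μ]
      nlinarith [h]
    | inr h =>
      right
      rw [haCIm t ω] at h
      simp only [Set.mem_setOf_eq] at h
      refine ⟨t, ?_⟩
      rw [hMm, ← hexplog]
      refine Real.exp_le_exp.2 ?_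
      rw [aux_sum_identity_neg t (fun i => l i ω) (fun i => X i ω) (fun i => s i ω) μ]
      nlinarith [h]
  have h1 : (1:ENNReal) ≤ P S + ENNReal.ofReal α := by
    have hcov : (Set.univ : Set Ω) ⊆ S ∪ ({ω | ∃ t, 2/α ≤ Mp t ω} ∪ {ω | ∃ t, 2/α ≤ Mm t ω}) := by
      intro ω _
      by_cases hω : ω ∈ S
      · exact Or.inl hω
      · exact Or.inr (hsub hω)
    calc (1:ENNReal) = P Set.univ := (measure_univ).symm
      _ ≤ P (S ∪ ({ω | ∃ t, 2/α ≤ Mp t ω} ∪ {ω | ∃ t, 2/α ≤ Mm t ω})) := measure_mono hcov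
      _ ≤ P S + P ({ω | ∃ t, 2/α ≤ Mp t ω} ∪ {ω | ∃ t, 2/α ≤ Mm t ω}) := measure_union_le _ _
      _ ≤ P S + (P {ω | ∃ t, 2/α ≤ Mp t ω} + P {ω | ∃ t, 2/α ≤ Mm t ω}) :=
          add_le_add le_rfl (measure_union_le _ _)
      _ ≤ P S + (ENNReal.ofReal (α/2) + ENNReal.ofReal (α/2)) :=
          add_le_add le_rfl (add_le_add hBp hBm)
      _ = P S + ENNReal.ofReal α := by
          rw [← ENNReal.ofReal_add (by positivity) (by positivity)]
          norm_num
  have h2 : ENNReal.ofReal (1-α) + ENNReal.ofReal α = 1 := by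
    rw [← ENNReal.ofReal_add (by linarith) hα0.le]
    norm_num
  rw [← h2] at h1
  exact (ENNReal.add_le_add_iff_right ENNReal.ofReal_ne_top).1 h1
end

section
/- Let {X_t}_{t∈ℕ⁺} be adapted to {F_t} with E[X_t | F_{t−1}] = μ for all t ∈ ℕ⁺ and E[(X_t − μ)² | F_{t−1}] ≤ σ_t² almost surely for all t, where {σ_t}_{t∈ℕ⁺} is a predictable nonnegative process, let {λ_t}_{t∈ℕ⁺} be any predictable process, let φ be a Catoni-type influence function, and let α ∈ (0,1). Define CI_t^{C'} = { m ∈ ℝ : −(Σ_{i=1}^t λ_i²σ_i²)/2 − log(2/α) ≤ Σ_{i=1}^t φ(λ_i(X_i − m)) ≤ (Σ_{i=1}^t λ_i²σ_i²)/2 + log(2/α) }. Then P(∀ t ∈ ℕ⁺, μ ∈ CI_t^{C'}) ≥ 1 − α. -/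
open MeasureTheory ProbabilityTheory Filter
open scoped ENNReal

namespace CatoniAux

variable {Ω : Type*} {mΩ : MeasurableSpace Ω} {P : Measure Ω} [IsProbabilityMeasure P]

lemma stepBound {m : MeasurableSpace Ω} (hm : m ≤ mΩ) {X b s r : Ω → ℝ} {μ : ℝ}
    (hXmeas : Measurable[mΩ] X) (hX2 : MemLp X 2 P)
    (hmean : P[X|m] =ᵐ[P] fun _ => μ)
    (hb : StronglyMeasurable[m] b) (hs : StronglyMeasurable[m] s)
    (hvar : ∀ᵐ ω ∂P, (P[fun ω' => (X ω' - μ) ^ 2 | m]) ω ≤ s ω ^ 2)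
    (hrmeas : Measurable[mΩ] r) (hr0 : ∀ ω, 0 ≤ r ω)
    (hrle : ∀ ω, r ω ≤ (1 + b ω * (X ω - μ) + (b ω * (X ω - μ)) ^ 2 / 2) *
      Real.exp (-(b ω ^ 2 * s ω ^ 2) / 2))
    {A : Set Ω} (hA : MeasurableSet[m] A) :
    ∫⁻ ω in A, ENNReal.ofReal (r ω) ∂P ≤ P A := by
  have hbm : Measurable[m] b := hb.measurable
  have hsm : Measurable[m] s := hs.measurable
  have hbM : Measurable[mΩ] b := hbm.mono hm le_rfl
  have hsM : Measurable[mΩ] s := hsm.mono hm le_rfl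
  have hXint : Integrable X P := hX2.integrable one_le_two
  have hX2' : MemLp (fun ω => X ω - μ) 2 P := hX2.sub (memLp_const μ)
  have hXm1 : Integrable (fun ω => X ω - μ) P := hXint.sub (integrable_const μ)
  have hXsq2 : Integrable (fun ω => (X ω - μ) ^ 2) P := hX2'.integrable_sq
  have hmean0 : P[fun ω => X ω - μ|m] =ᵐ[P] fun _ => (0 : ℝ) := by
    have h1 : P[fun ω => X ω - μ|m] =ᵐ[P] P[X|m] - P[fun _ => μ|m] := by
      exact condExp_sub (m := m) (μ := P) hXint (integrable_const μ)
    filter_upwards [h1, hmean] with ω h1ω h2ω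
    rw [h1ω, Pi.sub_apply, h2ω, condExp_const hm]
    simp
  -- main per-piece bound
  have key : ∀ B : Set Ω, MeasurableSet[m] B → ∀ K : ℝ, 0 < K →
      (∀ ω ∈ B, |b ω| < K) →
      ∫⁻ ω in B, ENNReal.ofReal (r ω) ∂P ≤ P B := by
    intro B hB K hK0 hBb
    set l' : Ω → ℝ := fun ω => max (-K) (min (b ω) K) with hl'def
    have hl'meas : Measurable[m] l' :=
      measurable_const.max (hbm.min measurable_const)
    have hl'm : StronglyMeasurable[m] l' := hl'meas.stronglyMeasurable
    have hl'M : Measurable[mΩ] l' := hl'meas.mono hm le_rfl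
    have hl'bdd : ∀ ω, |l' ω| ≤ K := by
      intro ω
      rw [abs_le]
      exact ⟨le_max_left _ _, max_le (by linarith) (min_le_right _ _)⟩
    have hl'eq : ∀ ω ∈ B, l' ω = b ω := by
      intro ω hω
      have h := hBb ω hω
      rw [abs_lt] at h
      rw [hl'def]
      simp only
      rw [min_eq_left h.2.le, max_eq_right h.1.le]
    set Z : Ω → ℝ := fun ω => l' ω * (X ω - μ) with hZdef
    have hZint : Integrable Z P := by
      refine hXm1.bdd_mul (c := K) (hl'M.aestronglyMeasurable) (Eventually.of_forall fun ω => ?_)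
      rw [Real.norm_eq_abs]; exact hl'bdd ω
    have hZsq : Integrable (fun ω => Z ω ^ 2) P := by
      have heq : (fun ω => Z ω ^ 2) = fun ω => l' ω ^ 2 * (X ω - μ) ^ 2 := by
        funext ω; rw [hZdef]; ring
      rw [heq]
      refine hXsq2.bdd_mul (c := K ^ 2) ((hl'M.pow_const 2).aestronglyMeasurable) (Eventually.of_forall fun ω => ?_)
      rw [Real.norm_eq_abs, abs_pow]
      exact pow_le_pow_left₀ (abs_nonneg _) (hl'bdd ω) 2
    set w : Ω → ℝ := fun ω => Real.exp (-(l' ω ^ 2 * s ω ^ 2) / 2) with hwdef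
    have hwmeas : Measurable[m] w :=
      (Real.measurable_exp.comp (((hl'meas.pow_const 2).mul (hsm.pow_const 2)).neg.div_const 2))
    have hwm : StronglyMeasurable[m] w := hwmeas.stronglyMeasurable
    have hwM : Measurable[mΩ] w := hwmeas.mono hm le_rfl
    have hw01 : ∀ ω, 0 ≤ w ω ∧ w ω ≤ 1 := by
      intro ω
      refine ⟨(Real.exp_pos _).le, Real.exp_le_one_iff.mpr ?_⟩
      have : 0 ≤ l' ω ^ 2 * s ω ^ 2 := by positivity
      linarith
    set c' : Ω → ℝ := fun ω => 1 + Z ω + Z ω ^ 2 / 2 with hc'def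
    have hc'int : Integrable c' P :=
      ((integrable_const (1 : ℝ)).add hZint).add (hZsq.div_const 2)
    have hc'0 : ∀ ω, 0 ≤ c' ω := by
      intro ω; rw [hc'def]; simp only; nlinarith [sq_nonneg (Z ω + 1)]
    set g : Ω → ℝ := fun ω => w ω * c' ω with hgdef
    have hgint : Integrable g P := by
      refine hc'int.bdd_mul (c := 1) hwM.aestronglyMeasurable (Eventually.of_forall fun ω => ?_)
      rw [Real.norm_eq_abs, abs_of_nonneg (hw01 ω).1]
      exact (hw01 ω).2
    have hgM : Measurable[mΩ] g :=
      hwM.mul ((measurable_const.add (hl'M.mul (hXmeas.sub measurable_const))).add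
        (((hl'M.mul (hXmeas.sub measurable_const)).pow_const 2).div_const 2))
    have hg0 : ∀ ω, 0 ≤ g ω := fun ω => mul_nonneg (hw01 ω).1 (hc'0 ω)
    -- conditional expectation computations
    have hceZ : P[Z|m] =ᵐ[P] fun ω => l' ω * (P[fun ω' => X ω' - μ|m]) ω := by
      have := condExp_mul_of_stronglyMeasurable_left (μ := P) hl'm
        (show Integrable (l' * fun ω => X ω - μ) P from hZint) hXm1
      filter_upwards [this] with ω hω
      exact hω
    have hceZ0 : P[Z|m] =ᵐ[P] fun _ => (0 : ℝ) := by
      filter_upwards [hceZ, hmean0] with ω h1 h2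
      rw [h1, h2, mul_zero]
    have hceZsq : P[fun ω => Z ω ^ 2|m] =ᵐ[P]
        fun ω => l' ω ^ 2 * (P[fun ω' => (X ω' - μ) ^ 2|m]) ω := by
      have heq : (fun ω => Z ω ^ 2) = (fun ω => l' ω ^ 2) * fun ω => (X ω - μ) ^ 2 := by
        funext ω; show Z ω ^ 2 = l' ω ^ 2 * (X ω - μ) ^ 2; rw [hZdef]; ring
      have := condExp_mul_of_stronglyMeasurable_left (μ := P)
        ((hl'meas.pow_const 2).stronglyMeasurable)
        (show Integrable ((fun ω => l' ω ^ 2) * fun ω => (X ω - μ) ^ 2) P by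
          rw [← heq]; exact hZsq) hXsq2
      rw [heq]
      filter_upwards [this] with ω hω
      exact hω
    have hcec' : P[c'|m] =ᵐ[P] fun ω =>
        1 + (P[Z|m]) ω + (P[fun ω' => Z ω' ^ 2|m]) ω / 2 := by
      have h1 : c' = (fun _ => (1 : ℝ)) + Z + (2⁻¹ : ℝ) • fun ω => Z ω ^ 2 := by
        funext ω
        show c' ω = ((1 : ℝ) + Z ω) + 2⁻¹ * Z ω ^ 2
        rw [hc'def]; ring
      have e1 := condExp_add (μ := P) (m := m)
        ((integrable_const (1 : ℝ)).add hZint) (hZsq.smul (2⁻¹ : ℝ))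
      have e2 := condExp_add (μ := P) (m := m) (integrable_const (1 : ℝ)) hZint
      have e3 := condExp_smul (μ := P) (m := m) (2⁻¹ : ℝ) fun ω => Z ω ^ 2
      rw [h1]
      filter_upwards [e1, e2, e3] with ω he1 he2 he3
      rw [he1, Pi.add_apply, he2, Pi.add_apply, he3, Pi.smul_apply, condExp_const hm]
      show (1 : ℝ) + _ + 2⁻¹ * _ = _
      ring
    have hceg : P[g|m] =ᵐ[P] fun ω => w ω * (P[c'|m]) ω := by
      have := condExp_mul_of_stronglyMeasurable_left (μ := P) hwm
        (show Integrable (w * c') P from hgint) hc'int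
      filter_upwards [this] with ω hω
      exact hω
    have hgle1 : P[g|m] ≤ᵐ[P] fun _ => (1 : ℝ) := by
      filter_upwards [hceg, hcec', hceZ0, hceZsq, hvar] with ω h1 h2 h3 h4 h5
      rw [h1, h2, h3, h4]
      have hvv : l' ω ^ 2 * (P[fun ω' => (X ω' - μ) ^ 2|m]) ω ≤ l' ω ^ 2 * s ω ^ 2 :=
        mul_le_mul_of_nonneg_left h5 (sq_nonneg _)
      have hwval : w ω = Real.exp (-(l' ω ^ 2 * s ω ^ 2) / 2) := rfl
      have hexp : (1 + l' ω ^ 2 * s ω ^ 2 / 2) * w ω ≤ 1 := by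
        have h6 : l' ω ^ 2 * s ω ^ 2 / 2 + 1 ≤ Real.exp (l' ω ^ 2 * s ω ^ 2 / 2) :=
          Real.add_one_le_exp _
        have h7 : Real.exp (-(l' ω ^ 2 * s ω ^ 2) / 2) =
            (Real.exp (l' ω ^ 2 * s ω ^ 2 / 2))⁻¹ := by
          rw [← Real.exp_neg]; ring_nf
        have h8 : (0:ℝ) < Real.exp (l' ω ^ 2 * s ω ^ 2 / 2) := Real.exp_pos _
        rw [hwval, h7]
        calc (1 + l' ω ^ 2 * s ω ^ 2 / 2) * (Real.exp (l' ω ^ 2 * s ω ^ 2 / 2))⁻¹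
            ≤ Real.exp (l' ω ^ 2 * s ω ^ 2 / 2) * (Real.exp (l' ω ^ 2 * s ω ^ 2 / 2))⁻¹ :=
              mul_le_mul_of_nonneg_right (by linarith) (inv_nonneg.mpr h8.le)
          _ = 1 := mul_inv_cancel₀ (ne_of_gt h8)
      have hw0 := (hw01 ω).1
      nlinarith
    -- put the integral chain together
    calc ∫⁻ ω in B, ENNReal.ofReal (r ω) ∂P
        ≤ ∫⁻ ω in B, ENNReal.ofReal (g ω) ∂P := by
          refine setLIntegral_mono hgM.ennreal_ofReal fun ω hω => ?_
          refine ENNReal.ofReal_le_ofReal ?_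
          have := hrle ω
          rw [hgdef]
          calc r ω ≤ (1 + b ω * (X ω - μ) + (b ω * (X ω - μ)) ^ 2 / 2) *
              Real.exp (-(b ω ^ 2 * s ω ^ 2) / 2) := hrle ω
            _ = w ω * c' ω := by
              rw [hc'def, hwdef, hZdef]
              simp only
              rw [hl'eq ω hω]
              ring
      _ = ENNReal.ofReal (∫ ω in B, g ω ∂P) := by
          rw [ofReal_integral_eq_lintegral_ofReal hgint.restrict
            (Eventually.of_forall hg0)]
      _ ≤ ENNReal.ofReal ((P B).toReal) := by
          letI : MeasurableSpace Ω := mΩ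
          refine ENNReal.ofReal_le_ofReal ?_
          have h1 : ∫ ω in B, g ω ∂P = ∫ ω in B, (P[g|m]) ω ∂P :=
            (setIntegral_condExp hm hgint hB).symm
          rw [h1]
          have h2 : ∫ ω in B, (P[g|m]) ω ∂P ≤ ∫ ω in B, (1 : ℝ) ∂P :=
            setIntegral_mono_ae integrable_condExp.integrableOn
              (integrable_const 1).integrableOn hgle1
          simp at h2; exact h2
      _ = P B := ENNReal.ofReal_toReal (measure_ne_top P B)
  -- decompose A into pieces where |b| is bounded
  set AN : ℕ → Set Ω := fun N => A ∩ {ω | (N : ℝ) ≤ |b ω| ∧ |b ω| < N + 1} with hANdef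
  have hANm : ∀ N, MeasurableSet[m] (AN N) := by
    intro N
    refine hA.inter (MeasurableSet.inter ?_ ?_)
    · exact measurableSet_le measurable_const hbm.abs
    · exact measurableSet_lt hbm.abs measurable_const
  have hANM : ∀ N, MeasurableSet[mΩ] (AN N) := fun N => hm _ (hANm N)
  have hdisj : Pairwise (Function.onFun Disjoint AN) := by
    intro i j hij
    rw [Function.onFun, Set.disjoint_left]
    rintro ω ⟨-, hi1, hi2⟩ ⟨-, hj1, hj2⟩
    apply hij
    have h1 : (i : ℝ) < (j : ℝ) + 1 := lt_of_le_of_lt hi1 hj2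
    have h2 : (j : ℝ) < (i : ℝ) + 1 := lt_of_le_of_lt hj1 hi2
    have h1' : i < j + 1 := by exact_mod_cast h1
    have h2' : j < i + 1 := by exact_mod_cast h2
    omega
  have hcover : A = ⋃ N, AN N := by
    ext ω
    constructor
    · intro hω
      refine Set.mem_iUnion.mpr ⟨⌊|b ω|⌋₊, hω, Nat.floor_le (abs_nonneg _), ?_⟩
      exact Nat.lt_floor_add_one _
    · intro hω
      obtain ⟨N, hN⟩ := Set.mem_iUnion.mp hω
      exact hN.1
  calc ∫⁻ ω in A, ENNReal.ofReal (r ω) ∂P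
      = ∑' N, ∫⁻ ω in AN N, ENNReal.ofReal (r ω) ∂P := by
        rw [hcover, lintegral_iUnion hANM hdisj]
    _ ≤ ∑' N, P (AN N) := by
        refine ENNReal.tsum_le_tsum fun N => ?_
        refine key (AN N) (hANm N) ((N : ℝ) + 1) (by positivity) fun ω hω => hω.2.2
    _ = P (⋃ N, AN N) := (measure_iUnion hdisj hANM).symm
    _ = P A := by rw [← hcover]

lemma mulBound {m : MeasurableSpace Ω} (hm : m ≤ mΩ) {Y : Ω → ℝ≥0∞}
    (hY : Measurable[mΩ] Y)
    (hA : ∀ A : Set Ω, MeasurableSet[m] A → ∫⁻ ω in A, Y ω ∂P ≤ P A)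
    {W : Ω → ℝ≥0∞} (hW : Measurable[m] W) :
    ∫⁻ ω, W ω * Y ω ∂P ≤ ∫⁻ ω, W ω ∂P := by
  revert hW
  refine @Measurable.ennreal_induction Ω m
    (fun W => ∫⁻ ω, W ω * Y ω ∂P ≤ ∫⁻ ω, W ω ∂P) ?_ ?_ ?_ W
  · intro c A hAm
    have hAM : MeasurableSet[mΩ] A := hm A hAm
    have h1 : (fun ω => A.indicator (fun _ => c) ω * Y ω) =
        A.indicator (fun ω => c * Y ω) := by
      funext ω
      by_cases hω : ω ∈ A <;> simp [hω]
    rw [h1, lintegral_indicator hAM, lintegral_const_mul c hY,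
      lintegral_indicator_const hAM]
    exact mul_le_mul_right (hA A hAm) c
  · intro f g _ hfm hgm hf hg
    have hfM : Measurable[mΩ] f := hfm.mono hm le_rfl
    have hgM : Measurable[mΩ] g := hgm.mono hm le_rfl
    have h1 : (fun ω => (f + g) ω * Y ω) =
        fun ω => f ω * Y ω + g ω * Y ω := by
      funext ω; simp [add_mul]
    rw [h1, lintegral_add_left (f := fun ω => f ω * Y ω) (hfM.mul hY)]
    simp only [Pi.add_apply]
    rw [lintegral_add_left hfM]
    exact add_le_add hf hg
  · intro f hfm hfmono hf
    have hfM : ∀ n, Measurable[mΩ] (f n) := fun n => (hfm n).mono hm le_rfl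
    have h1 : (fun ω => (⨆ n, f n ω) * Y ω) = fun ω => ⨆ n, f n ω * Y ω := by
      funext ω; rw [ENNReal.iSup_mul]
    rw [h1, lintegral_iSup (f := fun n ω => f n ω * Y ω) (fun n => (hfM n).mul hY)
      (fun i j hij ω => mul_le_mul_left (hfmono hij ω) _),
      lintegral_iSup hfM (fun i j hij ω => hfmono hij ω)]
    exact iSup_le fun n => (hf n).trans (le_iSup (fun n => ∫⁻ ω, f n ω ∂P) n)

lemma villeSetMeas {Ω' : Type*} {m : MeasurableSpace Ω'} {f : Ω' → ℝ≥0∞}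
    (hf : Measurable[m] f) (c : ℝ≥0∞) : MeasurableSet[m] {ω | c ≤ f ω} :=
  measurableSet_le measurable_const hf

lemma ville (ℱ : Filtration ℕ mΩ) (Y : ℕ → Ω → ℝ≥0∞)
    (hY : ∀ t, 1 ≤ t → Measurable[ℱ t] (Y t))
    (hstep : ∀ t, 1 ≤ t → ∀ W : Ω → ℝ≥0∞, Measurable[ℱ (t - 1)] W →
      ∫⁻ ω, W ω * Y t ω ∂P ≤ ∫⁻ ω, W ω ∂P)
    (c : ℝ≥0∞) :
    c * P {ω | ∃ t, 1 ≤ t ∧ c ≤ ∏ i ∈ Finset.Icc 1 t, Y i ω} ≤ 1 := by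
  classical
  set G : ℕ → Ω → ℝ≥0∞ := fun t ω => ∏ i ∈ Finset.Icc 1 t, Y i ω with hG
  have hYM : ∀ t, 1 ≤ t → Measurable[mΩ] (Y t) :=
    fun t ht => (hY t ht).mono (ℱ.le t) le_rfl
  have hGmeas : ∀ t, Measurable[ℱ t] (G t) := by
    intro t
    refine Finset.measurable_prod _ fun i hi => ?_
    rw [Finset.mem_Icc] at hi
    exact (hY i hi.1).mono (ℱ.mono hi.2) le_rfl
  set B : ℕ → Set Ω := fun T => {ω | ∃ t, 1 ≤ t ∧ t ≤ T ∧ c ≤ G t ω} with hB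
  have hBmeas : ∀ T, MeasurableSet[ℱ T] (B T) := by
    intro T
    have h1 : B T = ⋃ t, ⋃ (_ : 1 ≤ t ∧ t ≤ T), {ω | c ≤ G t ω} := by
      ext ω; simp only [hB, Set.mem_setOf_eq, Set.mem_iUnion]; tauto
    rw [h1]
    refine MeasurableSet.iUnion fun t => MeasurableSet.iUnion fun ht => ?_
    exact villeSetMeas ((hGmeas t).mono (ℱ.mono ht.2) le_rfl) c
  have hBM : ∀ T, MeasurableSet[mΩ] (B T) := fun T => (ℱ.le T) _ (hBmeas T)
  set D : ℕ → Ω → ℝ≥0∞ := fun T ω => if ω ∈ B T then c else G T ω with hD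
  have hDbound : ∀ T, ∫⁻ ω, D T ω ∂P ≤ 1 := by
    intro T
    induction T with
    | zero =>
      have hB0 : ∀ ω, ω ∉ B 0 := by
        rintro ω ⟨t, h1, h2, -⟩; omega
      have hG0 : ∀ ω, G 0 ω = 1 := by intro ω; rw [hG]; simp
      have hd : ∀ ω, D 0 ω = 1 := by
        intro ω
        rw [hD]
        simp only
        rw [if_neg (hB0 ω), hG0]
      rw [lintegral_congr hd]
      simp
    | succ T ih =>
      set W : Ω → ℝ≥0∞ := (B T)ᶜ.indicator (G T) with hW
      have hWm : Measurable[ℱ T] W := (hGmeas T).indicator (hBmeas T).compl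
      have hWM : Measurable[mΩ] W := hWm.mono (ℱ.le T) le_rfl
      have hpt : ∀ ω, D (T + 1) ω ≤ W ω * Y (T + 1) ω +
          (B T).indicator (fun _ => c) ω := by
        intro ω
        by_cases hω : ω ∈ B T
        · have hω' : ω ∈ B (T + 1) := by
            obtain ⟨t, h1, h2, h3⟩ := hω
            exact ⟨t, h1, h2.trans (Nat.le_succ T), h3⟩
          have hd : D (T + 1) ω = c := by rw [hD]; simp only; rw [if_pos hω']
          have hw0 : W ω = 0 := Set.indicator_of_notMem (by simpa using hω) _
          have hi : (B T).indicator (fun _ => c) ω = c := Set.indicator_of_mem hω _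
          rw [hd, hw0, hi, zero_mul, zero_add]
        · have hWω : W ω = G T ω := Set.indicator_of_mem (by simpa using hω) _
          have hindω : (B T).indicator (fun _ => c) ω = 0 :=
            Set.indicator_of_notMem hω _
          have hprod : G (T + 1) ω = G T ω * Y (T + 1) ω := by
            rw [hG]
            exact Finset.prod_Icc_succ_top (Nat.le_add_left 1 T) _
          rw [hWω, hindω, add_zero, ← hprod]
          by_cases h2 : ω ∈ B (T + 1)
          · have hc : c ≤ G (T + 1) ω := by
              obtain ⟨t, h1', hle, hc'⟩ := h2
              have ht : t = T + 1 := by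
                by_contra hne
                exact hω ⟨t, h1', by omega, hc'⟩
              rwa [ht] at hc'
            have hd : D (T + 1) ω = c := by rw [hD]; simp only; rw [if_pos h2]
            rw [hd]; exact hc
          · have hd : D (T + 1) ω = G (T + 1) ω := by
              rw [hD]; simp only; rw [if_neg h2]
            rw [hd]
      have hdec : ∀ ω, W ω + (B T).indicator (fun _ => c) ω = D T ω := by
        intro ω
        by_cases hω : ω ∈ B T
        · have hw0 : W ω = 0 := Set.indicator_of_notMem (by simpa using hω) _
          have hi : (B T).indicator (fun _ => c) ω = c := Set.indicator_of_mem hω _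
          have hd : D T ω = c := by rw [hD]; simp only; rw [if_pos hω]
          rw [hw0, hi, hd, zero_add]
        · have hWω : W ω = G T ω := Set.indicator_of_mem (by simpa using hω) _
          have hi : (B T).indicator (fun _ => c) ω = 0 :=
            Set.indicator_of_notMem hω _
          have hd : D T ω = G T ω := by rw [hD]; simp only; rw [if_neg hω]
          rw [hWω, hi, hd, add_zero]
      calc ∫⁻ ω, D (T + 1) ω ∂P
          ≤ ∫⁻ ω, (W ω * Y (T + 1) ω + (B T).indicator (fun _ => c) ω) ∂P :=
            lintegral_mono hpt
        _ = (∫⁻ ω, W ω * Y (T + 1) ω ∂P) +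
            ∫⁻ ω, (B T).indicator (fun _ => c) ω ∂P :=
            lintegral_add_left (hWM.mul (hYM (T + 1) (by omega))) _
        _ ≤ (∫⁻ ω, W ω ∂P) + ∫⁻ ω, (B T).indicator (fun _ => c) ω ∂P := by
            refine add_le_add_left ?_ _
            refine hstep (T + 1) (by omega) W ?_
            simpa using hWm
        _ = ∫⁻ ω, (W ω + (B T).indicator (fun _ => c) ω) ∂P :=
            (lintegral_add_left hWM _).symm
        _ = ∫⁻ ω, D T ω ∂P := lintegral_congr hdec
        _ ≤ 1 := ih
  have hU : {ω | ∃ t, 1 ≤ t ∧ c ≤ G t ω} = ⋃ T, B T := by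
    ext ω
    simp only [Set.mem_setOf_eq, Set.mem_iUnion, hB]
    constructor
    · rintro ⟨t, h1, h2⟩; exact ⟨t, t, h1, le_rfl, h2⟩
    · rintro ⟨T, t, h1, -, h3⟩; exact ⟨t, h1, h3⟩
  have hmono : Monotone B := by
    intro i j hij ω
    rintro ⟨t, h1, h2, h3⟩
    exact ⟨t, h1, h2.trans hij, h3⟩
  have hfin : c * P {ω | ∃ t, 1 ≤ t ∧ c ≤ G t ω} ≤ 1 := by
    rw [hU, (hmono.directed_le).measure_iUnion, ENNReal.mul_iSup]
    refine iSup_le fun T => ?_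
    have h1 : c * P (B T) = ∫⁻ ω, (B T).indicator (fun _ => c) ω ∂P :=
      (lintegral_indicator_const (hBM T) c).symm
    rw [h1]
    refine le_trans (lintegral_mono fun ω => ?_) (hDbound T)
    by_cases hω : ω ∈ B T
    · have hi : (B T).indicator (fun _ => c) ω = c := Set.indicator_of_mem hω _
      have hd : D T ω = c := by rw [hD]; simp only; rw [if_pos hω]
      rw [hi, hd]
    · have hi : (B T).indicator (fun _ => c) ω = 0 :=
        Set.indicator_of_notMem hω _
      rw [hi]
      exact zero_le
  exact hfin

lemma ofReal_exp_prod {ι : Type*} (s : Finset ι) (g : ι → ℝ) :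
    ENNReal.ofReal (∏ i ∈ s, Real.exp (g i)) = ∏ i ∈ s, ENNReal.ofReal (Real.exp (g i)) := by
  induction s using Finset.cons_induction with
  | empty => simp
  | cons a s ha ih =>
    rw [Finset.prod_cons, ENNReal.ofReal_mul (Real.exp_nonneg _), ih, Finset.prod_cons]

lemma measExpAux {Ω' : Type*} {m : MeasurableSpace Ω'} {f v : Ω' → ℝ}
    (hf : Measurable[m] f) (hv : Measurable[m] v) :
    Measurable[m] fun ω => ENNReal.ofReal (Real.exp (f ω - v ω / 2)) :=
  (Real.measurable_exp.comp (hf.sub (hv.div_const 2))).ennreal_ofReal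

lemma measSqMulAux {Ω' : Type*} {m : MeasurableSpace Ω'} {l s : Ω' → ℝ}
    (hl : Measurable[m] l) (hs : Measurable[m] s) :
    Measurable[m] fun ω => l ω ^ 2 * s ω ^ 2 :=
  (hl.pow_const 2).mul (hs.pow_const 2)

lemma measPhiAux {Ω' : Type*} {m : MeasurableSpace Ω'} {φ : ℝ → ℝ} (hφ : Measurable φ)
    {l X : Ω' → ℝ} (μ : ℝ) (hl : Measurable[m] l) (hX : Measurable[m] X) :
    Measurable[m] fun ω => φ (l ω * (X ω - μ)) :=
  hφ.comp (hl.mul (hX.sub measurable_const))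

lemma half (ℱ : Filtration ℕ mΩ) (X l s b f : ℕ → Ω → ℝ) (μ α : ℝ)
    (hα0 : 0 < α)
    (hXme : ∀ t, Measurable[mΩ] (X t))
    (hX_sq : ∀ t, 1 ≤ t → MemLp (X t) 2 P)
    (hmean : ∀ t, 1 ≤ t → P[X t | ℱ (t - 1)] =ᵐ[P] fun _ => μ)
    (hs_pred : ∀ t, 1 ≤ t → StronglyMeasurable[ℱ (t - 1)] (s t))
    (hvar : ∀ t, 1 ≤ t →
      ∀ᵐ ω ∂P, (P[fun ω' => (X t ω' - μ) ^ 2 | ℱ (t - 1)]) ω ≤ (s t ω) ^ 2)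
    (hl_pred : ∀ t, 1 ≤ t → StronglyMeasurable[ℱ (t - 1)] (l t))
    (hb_pred : ∀ t, 1 ≤ t → StronglyMeasurable[ℱ (t - 1)] (b t))
    (hbsq : ∀ t ω, b t ω ^ 2 = l t ω ^ 2)
    (hfmeas : ∀ t, 1 ≤ t → Measurable[ℱ t] (f t))
    (hfle : ∀ t ω, 1 ≤ t → Real.exp (f t ω) ≤
      1 + b t ω * (X t ω - μ) + (b t ω * (X t ω - μ)) ^ 2 / 2) :
    P {ω | ∃ t, 1 ≤ t ∧ ENNReal.ofReal (2 / α) ≤ ENNReal.ofReal (Real.exp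
      ((∑ i ∈ Finset.Icc 1 t, f i ω) -
        (∑ i ∈ Finset.Icc 1 t, l i ω ^ 2 * s i ω ^ 2) / 2))} ≤ ENNReal.ofReal (α / 2) := by
  have h2α : (0 : ℝ) < 2 / α := by positivity
  set c : ℝ≥0∞ := ENNReal.ofReal (2 / α) with hc
  set v : ℕ → Ω → ℝ := fun t ω => l t ω ^ 2 * s t ω ^ 2 with hv
  set Y : ℕ → Ω → ℝ≥0∞ := fun t ω => ENNReal.ofReal (Real.exp (f t ω - v t ω / 2)) with hY
  have hvmeasP : ∀ t, 1 ≤ t → Measurable[ℱ (t - 1)] (v t) := fun t ht =>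
    measSqMulAux (hl_pred t ht).measurable (hs_pred t ht).measurable
  have hYmeasF : ∀ t, 1 ≤ t → Measurable[ℱ t] (Y t) := by
    intro t ht
    refine measExpAux (hfmeas t ht) ?_
    exact (hvmeasP t ht).mono (ℱ.mono (Nat.sub_le t 1)) le_rfl
  have hstep : ∀ t, 1 ≤ t → ∀ W : Ω → ℝ≥0∞, Measurable[ℱ (t - 1)] W →
      ∫⁻ ω, W ω * Y t ω ∂P ≤ ∫⁻ ω, W ω ∂P := by
    intro t ht W hW
    have hrmeas : Measurable[mΩ] fun ω => Real.exp (f t ω - v t ω / 2) := by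
      refine Real.measurable_exp.comp (Measurable.sub ?_ (Measurable.div_const ?_ 2))
      · exact (hfmeas t ht).mono (ℱ.le t) le_rfl
      · exact (hvmeasP t ht).mono (ℱ.le (t - 1)) le_rfl
    have hrle : ∀ ω, Real.exp (f t ω - v t ω / 2) ≤
        (1 + b t ω * (X t ω - μ) + (b t ω * (X t ω - μ)) ^ 2 / 2) *
          Real.exp (-(b t ω ^ 2 * s t ω ^ 2) / 2) := by
      intro ω
      have h1 : Real.exp (f t ω - v t ω / 2) =
          Real.exp (f t ω) * Real.exp (-(b t ω ^ 2 * s t ω ^ 2) / 2) := by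
        rw [sub_eq_add_neg, Real.exp_add]
        congr 1
        rw [hv, hbsq t ω]
        ring_nf
      rw [h1]
      exact mul_le_mul_of_nonneg_right (hfle t ω ht) (Real.exp_nonneg _)
    refine mulBound (ℱ.le (t - 1)) ((hYmeasF t ht).mono (ℱ.le t) le_rfl)
      (fun A hA => ?_) hW
    exact stepBound (ℱ.le (t - 1)) (hXme t) (hX_sq t ht) (hmean t ht)
      (hb_pred t ht) (hs_pred t ht) (hvar t ht) hrmeas
      (fun ω => Real.exp_nonneg _) hrle hA
  have hville := ville ℱ Y hYmeasF hstep c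
  have hprod : ∀ t ω, (∏ i ∈ Finset.Icc 1 t, Y i ω) = ENNReal.ofReal (Real.exp
      ((∑ i ∈ Finset.Icc 1 t, f i ω) - (∑ i ∈ Finset.Icc 1 t, v i ω) / 2)) := by
    intro t ω
    have h1 : (∑ i ∈ Finset.Icc 1 t, f i ω) - (∑ i ∈ Finset.Icc 1 t, v i ω) / 2 =
        ∑ i ∈ Finset.Icc 1 t, (f i ω - v i ω / 2) := by
      rw [Finset.sum_sub_distrib, Finset.sum_div]
    rw [h1, Real.exp_sum, ofReal_exp_prod]
  have hsetEq : {ω | ∃ t, 1 ≤ t ∧ c ≤ ∏ i ∈ Finset.Icc 1 t, Y i ω} =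
      {ω | ∃ t, 1 ≤ t ∧ c ≤ ENNReal.ofReal (Real.exp
        ((∑ i ∈ Finset.Icc 1 t, f i ω) - (∑ i ∈ Finset.Icc 1 t, v i ω) / 2))} := by
    ext ω
    simp only [Set.mem_setOf_eq]
    constructor
    · rintro ⟨t, h1, h2⟩; exact ⟨t, h1, by rwa [← hprod t ω]⟩
    · rintro ⟨t, h1, h2⟩; exact ⟨t, h1, by rwa [hprod t ω]⟩
  rw [hsetEq] at hville
  have hPle : P {ω | ∃ t, 1 ≤ t ∧ c ≤ ENNReal.ofReal (Real.exp
      ((∑ i ∈ Finset.Icc 1 t, f i ω) - (∑ i ∈ Finset.Icc 1 t, v i ω) / 2))} ≤ c⁻¹ :=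
    ENNReal.le_inv_iff_mul_le.mpr (by rwa [mul_comm] at hville)
  have hcinv : c⁻¹ = ENNReal.ofReal (α / 2) := by
    rw [hc, ← ENNReal.ofReal_inv_of_pos h2α, inv_div]
  rw [hcinv] at hPle
  exact hPle

end CatoniAux

/-- **Catoni-style confidence sequence for heteroscedastic data.** Under constant
conditional mean `μ` and predictable conditional variance bounds `σ_t²`, for any
predictable `l` and Catoni-type influence function `φ`, the sets `CI_t^{C'}` form a
`(1-α)`-confidence sequence for `μ`. -/
theorem catoni_confidence_sequence_heteroscedastic
    {Ω : Type*} {mΩ : MeasurableSpace Ω} {P : Measure Ω} [IsProbabilityMeasure P]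
    (ℱ : Filtration ℕ mΩ) (X l s : ℕ → Ω → ℝ) (μ α : ℝ) (φ : ℝ → ℝ)
    (hα : α ∈ Set.Ioo (0 : ℝ) 1)
    (hφ_mono : Monotone φ)
    (hφ_lb : ∀ x : ℝ, -Real.log (1 - x + x ^ 2 / 2) ≤ φ x)
    (hφ_ub : ∀ x : ℝ, φ x ≤ Real.log (1 + x + x ^ 2 / 2))
    (hX_adapted : Adapted ℱ X)
    (hX_sq : ∀ t, 1 ≤ t → MemLp (X t) 2 P)
    (hmean : ∀ t, 1 ≤ t → P[X t | ℱ (t - 1)] =ᵐ[P] fun _ => μ)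
    (hs_pred : ∀ t, 1 ≤ t → StronglyMeasurable[ℱ (t - 1)] (s t))
    (hs_nonneg : ∀ t ω, 1 ≤ t → 0 ≤ s t ω)
    (hvar : ∀ t, 1 ≤ t →
      ∀ᵐ ω ∂P, (P[fun ω' => (X t ω' - μ) ^ 2 | ℱ (t - 1)]) ω ≤ (s t ω) ^ 2)
    (hl_pred : ∀ t, 1 ≤ t → StronglyMeasurable[ℱ (t - 1)] (l t)) :
    ENNReal.ofReal (1 - α) ≤
      P {ω | ∀ t : ℕ, 1 ≤ t →
        -((∑ i ∈ Finset.Icc 1 t, (l i ω) ^ 2 * (s i ω) ^ 2) / 2) - Real.log (2 / α) ≤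
          (∑ i ∈ Finset.Icc 1 t, φ (l i ω * (X i ω - μ))) ∧
        (∑ i ∈ Finset.Icc 1 t, φ (l i ω * (X i ω - μ))) ≤
          (∑ i ∈ Finset.Icc 1 t, (l i ω) ^ 2 * (s i ω) ^ 2) / 2 + Real.log (2 / α)} := by
  obtain ⟨hα0, hα1⟩ := hα
  have h2α : (0 : ℝ) < 2 / α := by positivity
  have hφme : Measurable φ := hφ_mono.measurable
  have hXme : ∀ t, Measurable[mΩ] (X t) :=
    fun t => (hX_adapted t).mono (ℱ.le t) le_rfl
  have hlme : ∀ t, 1 ≤ t → Measurable[mΩ] (l t) :=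
    fun t ht => ((hl_pred t ht).measurable).mono (ℱ.le (t - 1)) le_rfl
  have hsme : ∀ t, 1 ≤ t → Measurable[mΩ] (s t) :=
    fun t ht => ((hs_pred t ht).measurable).mono (ℱ.le (t - 1)) le_rfl
  -- upper-tail application
  have hposP : ∀ x : ℝ, (0 : ℝ) < 1 + x + x ^ 2 / 2 := by
    intro x; nlinarith [sq_nonneg (x + 1)]
  have hposM : ∀ x : ℝ, (0 : ℝ) < 1 - x + x ^ 2 / 2 := by
    intro x; nlinarith [sq_nonneg (x - 1)]
  have hfmeasP : ∀ t, 1 ≤ t →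
      Measurable[ℱ t] fun ω => φ (l t ω * (X t ω - μ)) := by
    intro t ht
    exact CatoniAux.measPhiAux hφme μ
      ((hl_pred t ht).measurable.mono (ℱ.mono (Nat.sub_le t 1)) le_rfl)
      (hX_adapted t)
  have hupper := CatoniAux.half ℱ X l s l (fun t ω => φ (l t ω * (X t ω - μ))) μ α
    hα0 hXme hX_sq hmean hs_pred hvar hl_pred hl_pred (fun t ω => rfl) hfmeasP ?_
  swap
  · intro t ω ht
    set x := l t ω * (X t ω - μ) with hx
    calc Real.exp (φ x) ≤ Real.exp (Real.log (1 + x + x ^ 2 / 2)) :=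
          Real.exp_le_exp.mpr (hφ_ub x)
      _ = 1 + x + x ^ 2 / 2 := Real.exp_log (hposP x)
  -- lower-tail application
  have hlower := CatoniAux.half ℱ X l s (fun t ω => -l t ω)
    (fun t ω => -φ (l t ω * (X t ω - μ))) μ α
    hα0 hXme hX_sq hmean hs_pred hvar hl_pred
    (fun t ht => (hl_pred t ht).neg) (fun t ω => by ring) ?_ ?_
  rotate_left
  · intro t ht
    exact (hfmeasP t ht).neg
  · intro t ω ht
    set x := l t ω * (X t ω - μ) with hx
    have h1 : -φ x ≤ Real.log (1 - x + x ^ 2 / 2) := by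
      have := hφ_lb x; linarith
    calc Real.exp (-φ x) ≤ Real.exp (Real.log (1 - x + x ^ 2 / 2)) :=
          Real.exp_le_exp.mpr h1
      _ = 1 - x + x ^ 2 / 2 := Real.exp_log (hposM x)
      _ = 1 + (-l t ω) * (X t ω - μ) + ((-l t ω) * (X t ω - μ)) ^ 2 / 2 := by
        rw [hx]; ring
  -- the events
  set S : ℕ → Ω → ℝ := fun t ω => ∑ i ∈ Finset.Icc 1 t, φ (l i ω * (X i ω - μ)) with hS
  set V : ℕ → Ω → ℝ := fun t ω => ∑ i ∈ Finset.Icc 1 t, l i ω ^ 2 * s i ω ^ 2 with hV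
  set GG : Set Ω := {ω | ∀ t : ℕ, 1 ≤ t →
    -(V t ω / 2) - Real.log (2 / α) ≤ S t ω ∧
      S t ω ≤ V t ω / 2 + Real.log (2 / α)} with hGG
  have hSme : ∀ t, Measurable[mΩ] (S t) := by
    intro t
    refine Finset.measurable_sum _ fun i hi => ?_
    rw [Finset.mem_Icc] at hi
    exact CatoniAux.measPhiAux hφme μ (hlme i hi.1) (hXme i)
  have hVme : ∀ t, Measurable[mΩ] (V t) := by
    intro t
    refine Finset.measurable_sum _ fun i hi => ?_
    rw [Finset.mem_Icc] at hi
    exact CatoniAux.measSqMulAux (hlme i hi.1) (hsme i hi.1)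
  have hGGm : MeasurableSet[mΩ] GG := by
    have h1 : GG = ⋂ t, ⋂ (_ : 1 ≤ t),
        ({ω | -(V t ω / 2) - Real.log (2 / α) ≤ S t ω} ∩
          {ω | S t ω ≤ V t ω / 2 + Real.log (2 / α)}) := by
      ext ω
      simp only [hGG, Set.mem_setOf_eq, Set.mem_iInter, Set.mem_inter_iff]
    rw [h1]
    refine MeasurableSet.iInter fun t => MeasurableSet.iInter fun ht => ?_
    exact (measurableSet_le (((hVme t).div_const 2).neg.sub measurable_const) (hSme t)).inter
      (measurableSet_le (hSme t) (((hVme t).div_const 2).add measurable_const))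
  -- complement inclusion
  have hsub : GGᶜ ⊆
      {ω | ∃ t, 1 ≤ t ∧ ENNReal.ofReal (2 / α) ≤ ENNReal.ofReal (Real.exp
        ((∑ i ∈ Finset.Icc 1 t, φ (l i ω * (X i ω - μ))) -
          (∑ i ∈ Finset.Icc 1 t, l i ω ^ 2 * s i ω ^ 2) / 2))} ∪
      {ω | ∃ t, 1 ≤ t ∧ ENNReal.ofReal (2 / α) ≤ ENNReal.ofReal (Real.exp
        ((∑ i ∈ Finset.Icc 1 t, -φ (l i ω * (X i ω - μ))) -
          (∑ i ∈ Finset.Icc 1 t, l i ω ^ 2 * s i ω ^ 2) / 2))} := by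
    intro ω hω
    simp only [hGG, Set.mem_compl_iff, Set.mem_setOf_eq] at hω
    obtain ⟨t, htfail⟩ := not_forall.mp hω
    obtain ⟨ht, hfail⟩ := Classical.not_imp.mp htfail
    rcases not_and_or.mp hfail with hfail | hfail
    · rw [not_le] at hfail
      right
      refine ⟨t, ht, ?_⟩
      refine ENNReal.ofReal_le_ofReal ?_
      rw [← Real.exp_log h2α]
      refine (Real.exp_le_exp.mpr ?_)
      have hsum : (∑ i ∈ Finset.Icc 1 t, -φ (l i ω * (X i ω - μ))) = -S t ω := by
        rw [hS]; simp
      rw [hsum]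
      have hVval : (∑ i ∈ Finset.Icc 1 t, l i ω ^ 2 * s i ω ^ 2) = V t ω := rfl
      rw [hVval]
      linarith
    · rw [not_le] at hfail
      left
      refine ⟨t, ht, ?_⟩
      refine ENNReal.ofReal_le_ofReal ?_
      rw [← Real.exp_log h2α]
      refine (Real.exp_le_exp.mpr ?_)
      have hSval : (∑ i ∈ Finset.Icc 1 t, φ (l i ω * (X i ω - μ))) = S t ω := rfl
      have hVval : (∑ i ∈ Finset.Icc 1 t, l i ω ^ 2 * s i ω ^ 2) = V t ω := rfl
      rw [hSval, hVval]
      linarith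
  have hPcompl : P GGᶜ ≤ ENNReal.ofReal α := by
    calc P GGᶜ ≤ P (_ ∪ _) := measure_mono hsub
      _ ≤ _ + _ := measure_union_le _ _
      _ ≤ ENNReal.ofReal (α / 2) + ENNReal.ofReal (α / 2) := add_le_add hupper hlower
      _ = ENNReal.ofReal α := by
          rw [← ENNReal.ofReal_add (by positivity) (by positivity)]
          norm_num
  -- conclude
  have hPGG : P GG = 1 - P GGᶜ := by
    rw [measure_compl hGGm (measure_ne_top P GG), measure_univ]
    exact (ENNReal.sub_sub_cancel ENNReal.one_ne_top prob_le_one).symm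
  calc ENNReal.ofReal (1 - α) = 1 - ENNReal.ofReal α := by
        rw [ENNReal.ofReal_sub 1 hα0.le, ENNReal.ofReal_one]
    _ ≤ 1 - P GGᶜ := tsub_le_tsub_left hPcompl 1
    _ = P GG := hPGG.symm
end
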